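/- arXiv:1303.6268 — 7 statements merged into one kernel-verified Lean document; each statement's English description precedes it below -/
import Mathlib

section
/- Existence and uniqueness of least common multiples (Proposition 3.11): for every f, g ∈ Λ_{A,B} (i.e. f, g ∈ M with f, g ∉ {0, 1}) which intersect, there exists a unique m ∈ M with m ≠ 0, f ∣ m and g ∣ m, such that every h ∈ M with h ≠ 0, f ∣ h and g ∣ h satisfies m ∣ h (the least common multiple of f and g). -/
/-- The alphabet of generators for the semigroupoid `Λ_{A,B}`: a zero letter `z`,
letters `h i` for `i : ι`, and letters `g i j _ n` for pairs with `1 ≤ A i j` and `n : ℤ`. -/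
inductive Letter (ι : Type) (A : ι → ι → ℕ) : Type where
  | z : Letter ι A
  | h : ι → Letter ι A
  | g : (i j : ι) → 1 ≤ A i j → ℤ → Letter ι A

/-- The defining relations of `Λ_{A,B}` (as a monoid congruence generator) on the free
monoid over `Letter ι A`. -/
inductive KatRel (ι : Type) (A : ι → ι → ℕ) (B : ι → ι → ℤ) :
    FreeMonoid (Letter ι A) → FreeMonoid (Letter ι A) → Prop where
  | zl (w : Letter ι A) :
      KatRel ι A B (FreeMonoid.of Letter.z * FreeMonoid.of w) (FreeMonoid.of Letter.z)
  | zr (w : Letter ι A) :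
      KatRel ι A B (FreeMonoid.of w * FreeMonoid.of Letter.z) (FreeMonoid.of Letter.z)
  | gh (i j : ι) (hij : 1 ≤ A i j) (n : ℤ) :
      KatRel ι A B (FreeMonoid.of (Letter.g i j hij n) * FreeMonoid.of (Letter.h j))
        (FreeMonoid.of (Letter.g i j hij (n + A i j)))
  | hg (i j : ι) (hij : 1 ≤ A i j) (n : ℤ) :
      KatRel ι A B (FreeMonoid.of (Letter.h i) * FreeMonoid.of (Letter.g i j hij n))
        (FreeMonoid.of (Letter.g i j hij (n + B i j)))
  | hh (i j : ι) (hne : i ≠ j) :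
      KatRel ι A B (FreeMonoid.of (Letter.h i) * FreeMonoid.of (Letter.h j))
        (FreeMonoid.of Letter.z)
  | hg' (i i' j : ι) (hij : 1 ≤ A i' j) (n : ℤ) (hne : i ≠ i') :
      KatRel ι A B (FreeMonoid.of (Letter.h i) * FreeMonoid.of (Letter.g i' j hij n))
        (FreeMonoid.of Letter.z)
  | gh' (i j k : ι) (hij : 1 ≤ A i j) (n : ℤ) (hne : j ≠ k) :
      KatRel ι A B (FreeMonoid.of (Letter.g i j hij n) * FreeMonoid.of (Letter.h k))
        (FreeMonoid.of Letter.z)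
  | gg (i j j' l : ι) (hij : 1 ≤ A i j) (hjl : 1 ≤ A j' l) (n m : ℤ) (hne : j ≠ j') :
      KatRel ι A B (FreeMonoid.of (Letter.g i j hij n) * FreeMonoid.of (Letter.g j' l hjl m))
        (FreeMonoid.of Letter.z)

/-- The congruence generated by the defining relations. -/
def KatCon (ι : Type) (A : ι → ι → ℕ) (B : ι → ι → ℤ) : Con (FreeMonoid (Letter ι A)) :=
  conGen (KatRel ι A B)

/-- The quotient monoid `M`. -/
abbrev KatM (ι : Type) (A : ι → ι → ℕ) (B : ι → ι → ℤ) : Type :=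
  (KatCon ι A B).Quotient

/-- The quotient map `F → M`. -/
def KatQ (ι : Type) (A : ι → ι → ℕ) (B : ι → ι → ℤ) :
    FreeMonoid (Letter ι A) →* KatM ι A B :=
  (KatCon ι A B).mk'

/-- The zero element of `M`: the class of the letter `z`. -/
def zeroM (ι : Type) (A : ι → ι → ℕ) (B : ι → ι → ℤ) : KatM ι A B :=
  KatQ ι A B (FreeMonoid.of Letter.z)

/-- The word `g(i₁,i₂,n₁)·g(i₂,i₃,n₂)⋯g(i_k,i_{k+1},n_k)` in the free monoid. -/
def gwordF (ι : Type) (A : ι → ι → ℕ) (k : ℕ) (i : Fin (k + 1) → ι)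
    (hA : ∀ t : Fin k, 1 ≤ A (i t.castSucc) (i t.succ)) (n : Fin k → ℤ) :
    FreeMonoid (Letter ι A) :=
  (List.ofFn fun t : Fin k =>
    FreeMonoid.of (Letter.g (i t.castSucc) (i t.succ) (hA t) (n t))).prod


attribute [local instance] Classical.propDecidable


namespace K0

variable {ι : Type} (A : ι → ι → ℕ) (B : ι → ι → ℤ)

/-- head vertex of an edge list (or default). -/
def nv : List (ι × ℤ) → ι → ι
  | [], la => la
  | (j, _) :: _, _ => j

/-- chain condition: every edge has `1 ≤ A`. -/
def chain : List (ι × ℤ) → ι → Prop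
  | [], _ => True
  | [(i, _)], la => 1 ≤ A i la
  | (i, _) :: (j, m) :: t, la => 1 ≤ A i j ∧ chain ((j, m) :: t) la

/-- all offsets except the last lie in `[0, A)`. -/
def rng : List (ι × ℤ) → Prop
  | [] => True
  | [_] => True
  | (i, n) :: (j, m) :: t => 0 ≤ n ∧ n < A i j ∧ rng ((j, m) :: t)

def ok (es : List (ι × ℤ)) (la : ι) : Prop := es ≠ [] ∧ chain A es la ∧ rng A es

/-- greedy canonicalization. -/
def canon : List (ι × ℤ) → ι → List (ι × ℤ)
  | [], _ => []
  | [(i, n)], _ => [(i, n)]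
  | (i, n) :: (j, m) :: t, la =>
      (i, n % (A i j : ℤ)) :: canon ((j, m + n / (A i j : ℤ) * B j (nv t la)) :: t) la
  termination_by es _ => es.length

def bumpHead (c : ℤ) : List (ι × ℤ) → List (ι × ℤ)
  | [] => []
  | (i, n) :: t => (i, n + c) :: t

def bumpLast (c : ℤ) : List (ι × ℤ) → List (ι × ℤ)
  | [] => []
  | [(i, n)] => [(i, n + c)]
  | x :: y :: t => x :: bumpLast c (y :: t)
  termination_by es => es.length

def lfst : List (ι × ℤ) → ι → ι
  | [], la => la
  | [(i, _)], _ => i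
  | _ :: y :: t, la => lfst (y :: t) la
  termination_by es _ => es.length

@[simp] lemma nv_nil (la : ι) : nv ([] : List (ι × ℤ)) la = la := rfl
@[simp] lemma nv_cons (x : ι × ℤ) (t : List (ι × ℤ)) (la : ι) : nv (x :: t) la = x.1 := by
  cases x; rfl

@[simp] lemma chain_nil (la : ι) : chain A ([] : List (ι × ℤ)) la := trivial

lemma chain_cons (i : ι) (n : ℤ) (t : List (ι × ℤ)) (la : ι) :
    chain A ((i, n) :: t) la ↔ 1 ≤ A i (nv t la) ∧ chain A t la := by
  cases t with
  | nil => simp [chain]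
  | cons y t => cases y; simp [chain, nv]

lemma rng_cons (i : ι) (n : ℤ) (y : ι × ℤ) (t : List (ι × ℤ)) :
    rng A ((i, n) :: y :: t) ↔ 0 ≤ n ∧ n < A i y.1 ∧ rng A (y :: t) := by
  cases y; simp [rng]

@[simp] lemma rng_single (x : ι × ℤ) : rng A [x] := by cases x; trivial
@[simp] lemma rng_nil : rng A ([] : List (ι × ℤ)) := trivial

@[simp] lemma canon_nil (la : ι) : canon A B [] la = [] := by rw [canon]
@[simp] lemma canon_single (i : ι) (n : ℤ) (la : ι) : canon A B [(i, n)] la = [(i, n)] := by rw [canon]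

lemma canon_cons_cons (i : ι) (n : ℤ) (j : ι) (m : ℤ) (t : List (ι × ℤ)) (la : ι) :
    canon A B ((i, n) :: (j, m) :: t) la =
      (i, n % (A i j : ℤ)) :: canon A B ((j, m + n / (A i j : ℤ) * B j (nv t la)) :: t) la := by
  rw [canon]

lemma canon_fst : ∀ (es : List (ι × ℤ)) (la : ι),
    (canon A B es la).map Prod.fst = es.map Prod.fst
  | [], _ => by simp
  | [(i, n)], _ => by simp
  | (i, n) :: (j, m) :: t, la => by
      rw [canon_cons_cons]
      have := canon_fst ((j, m + n / (A i j : ℤ) * B j (nv t la)) :: t) la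
      simpa using this
  termination_by es _ => es.length

lemma canon_length : ∀ (es : List (ι × ℤ)) (la : ι), (canon A B es la).length = es.length := by
  intro es la
  have := congrArg List.length (canon_fst A B es la)
  simpa using this

lemma canon_ne_nil {es : List (ι × ℤ)} (h : es ≠ []) (la : ι) : canon A B es la ≠ [] := by
  intro hc
  apply h
  have := canon_length A B es la
  rw [hc] at this
  exact List.length_eq_zero_iff.mp this.symm

lemma canon_cons_shape (i : ι) (n : ℤ) (t : List (ι × ℤ)) (la : ι) :
    ∃ c t', canon A B ((i, n) :: t) la = (i, c) :: t' := by
  cases t with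
  | nil => exact ⟨n, [], by simp⟩
  | cons y t =>
    cases y with
    | mk j m => exact ⟨_, _, canon_cons_cons A B i n j m t la⟩

lemma nv_congr {es es' : List (ι × ℤ)} (h : es.map Prod.fst = es'.map Prod.fst) (la : ι) :
    nv es la = nv es' la := by
  cases es with
  | nil => cases es' with
    | nil => rfl
    | cons y t => simp at h
  | cons x t => cases es' with
    | nil => simp at h
    | cons y t' => cases x; cases y; simp at h ⊢; exact h.1

lemma chain_congr {es es' : List (ι × ℤ)} (h : es.map Prod.fst = es'.map Prod.fst) (la : ι) :
    chain A es la ↔ chain A es' la := by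
  induction es generalizing es' with
  | nil => cases es' with
    | nil => exact Iff.rfl
    | cons y t => simp at h
  | cons x t ih =>
    cases es' with
    | nil => simp at h
    | cons y t' =>
      cases x with | mk i n =>
      cases y with | mk i' n' =>
      simp at h
      obtain ⟨h1, h2⟩ := h
      subst h1
      rw [chain_cons, chain_cons, ih h2, nv_congr h2]

lemma nv_canon (es : List (ι × ℤ)) (la la' : ι) : nv (canon A B es la) la' = nv es la' :=
  nv_congr (canon_fst A B es la) la'

lemma chain_canon {es : List (ι × ℤ)} {la : ι} (h : chain A es la) :
    chain A (canon A B es la) la := (chain_congr A (canon_fst A B es la) la).mpr h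

lemma rng_canon : ∀ (es : List (ι × ℤ)) (la : ι), chain A es la → rng A (canon A B es la)
  | [], _, _ => by simp
  | [(i, n)], _, _ => by simp
  | (i, n) :: (j, m) :: t, la, hch => by
      rw [canon_cons_cons]
      obtain ⟨hA, hch'⟩ : 1 ≤ A i j ∧ chain A ((j, m) :: t) la := by
        simpa [chain] using hch
      have hch'' : chain A ((j, m + n / (A i j : ℤ) * B j (nv t la)) :: t) la := by
        rw [chain_cons] at hch' ⊢; exact hch'
      obtain ⟨c, t', hshape⟩ := canon_cons_shape A B j (m + n / (A i j : ℤ) * B j (nv t la)) t la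
      rw [hshape]
      have hA' : (0 : ℤ) < (A i j : ℤ) := by exact_mod_cast hA
      rw [rng_cons]
      refine ⟨Int.emod_nonneg n hA'.ne', ?_, ?_⟩
      · simpa using Int.emod_lt_of_pos n hA'
      · have := rng_canon ((j, m + n / (A i j : ℤ) * B j (nv t la)) :: t) la hch''
        rw [hshape] at this; exact this
  termination_by es _ _ => es.length

lemma ok_canon {es : List (ι × ℤ)} {la : ι} (hne : es ≠ []) (h : chain A es la) :
    ok A (canon A B es la) la :=
  ⟨canon_ne_nil A B hne la, chain_canon A B h, rng_canon A B es la h⟩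

lemma canon_eq_self : ∀ (es : List (ι × ℤ)) (la : ι), rng A es → canon A B es la = es
  | [], _, _ => by simp
  | [(i, n)], _, _ => by simp
  | (i, n) :: (j, m) :: t, la, hr => by
      rw [rng_cons] at hr
      obtain ⟨h0, h1, h2⟩ := hr
      rw [canon_cons_cons, Int.emod_eq_of_lt h0 h1, Int.ediv_eq_zero_of_lt h0 h1]
      simp only [zero_mul, add_zero]
      rw [canon_eq_self ((j, m) :: t) la h2]
  termination_by es _ _ => es.length


@[simp] lemma bumpHead_nil (c : ℤ) : bumpHead c ([] : List (ι × ℤ)) = [] := rfl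
@[simp] lemma bumpHead_cons (c : ℤ) (i : ι) (n : ℤ) (t : List (ι × ℤ)) :
    bumpHead c ((i, n) :: t) = (i, n + c) :: t := rfl

lemma bumpHead_bumpHead (c d : ℤ) (es : List (ι × ℤ)) :
    bumpHead c (bumpHead d es) = bumpHead (d + c) es := by
  cases es with
  | nil => rfl
  | cons x t => cases x; simp [bumpHead, add_assoc]

@[simp] lemma bumpHead_zero (es : List (ι × ℤ)) : bumpHead 0 es = es := by
  cases es with
  | nil => rfl
  | cons x t => cases x; simp [bumpHead]

lemma map_fst_bumpHead (c : ℤ) (es : List (ι × ℤ)) :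
    (bumpHead c es).map Prod.fst = es.map Prod.fst := by
  cases es with
  | nil => rfl
  | cons x t => cases x; simp [bumpHead]

@[simp] lemma bumpLast_nil (c : ℤ) : bumpLast c ([] : List (ι × ℤ)) = [] := by rw [bumpLast]
@[simp] lemma bumpLast_single (c : ℤ) (i : ι) (n : ℤ) : bumpLast c [(i, n)] = [(i, n + c)] := by
  rw [bumpLast]
lemma bumpLast_cons_cons (c : ℤ) (x y : ι × ℤ) (t : List (ι × ℤ)) :
    bumpLast c (x :: y :: t) = x :: bumpLast c (y :: t) := by rw [bumpLast]

lemma bumpLast_eq : ∀ (es : List (ι × ℤ)) (hne : es ≠ []) (c : ℤ),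
    bumpLast c es = es.dropLast ++ [((es.getLast hne).1, (es.getLast hne).2 + c)]
  | [(i, n)], _, c => by simp
  | x :: y :: t, _, c => by
      rw [bumpLast_cons_cons]
      have := bumpLast_eq (y :: t) (by simp) c
      rw [this]
      simp [List.getLast_cons]
  termination_by es _ _ => es.length

lemma bumpLast_zero : ∀ (es : List (ι × ℤ)), bumpLast 0 es = es
  | [] => by simp
  | [(i, n)] => by simp
  | x :: y :: t => by rw [bumpLast_cons_cons, bumpLast_zero (y :: t)]
  termination_by es => es.length

lemma bumpLast_bumpLast : ∀ (c d : ℤ) (es : List (ι × ℤ)),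
    bumpLast c (bumpLast d es) = bumpLast (d + c) es
  | c, d, [] => by simp
  | c, d, [(i, n)] => by simp [add_assoc]
  | c, d, x :: y :: t => by
      rw [bumpLast_cons_cons, bumpLast_cons_cons]
      cases hy : bumpLast d (y :: t) with
      | nil => exact absurd (congrArg List.length hy) (by
          rw [bumpLast_eq (y :: t) (by simp) d]; simp)
      | cons z t' =>
        rw [bumpLast_cons_cons, ← hy, bumpLast_bumpLast c d (y :: t)]
  termination_by _ _ es => es.length

lemma map_fst_bumpLast : ∀ (c : ℤ) (es : List (ι × ℤ)),
    (bumpLast c es).map Prod.fst = es.map Prod.fst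
  | c, [] => by simp
  | c, [(i, n)] => by simp
  | c, x :: y :: t => by
      rw [bumpLast_cons_cons]
      have := map_fst_bumpLast c (y :: t)
      simp at this ⊢
      exact this
  termination_by _ es => es.length

lemma rng_bumpLast : ∀ (c : ℤ) (es : List (ι × ℤ)), rng A (bumpLast c es) ↔ rng A es
  | c, [] => by simp
  | c, [(i, n)] => by simp
  | c, (i, n) :: (j, m) :: t => by
      rw [bumpLast_cons_cons]
      cases t with
      | nil => simp [rng_cons]
      | cons z t' =>
        rw [bumpLast_cons_cons, rng_cons, rng_cons, ← bumpLast_cons_cons]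
        rw [rng_bumpLast c ((j, m) :: z :: t')]
  termination_by _ es => es.length

lemma emod_shift (a b c : ℤ) : (a % b + c) % b = (a + c) % b := by
  conv_rhs => rw [← Int.mul_ediv_add_emod a b]
  rw [show b * (a / b) + a % b + c = a % b + c + b * (a / b) by ring, Int.add_mul_emod_self_left]

lemma ediv_shift (a b c : ℤ) (hb : b ≠ 0) : a / b + (a % b + c) / b = (a + c) / b := by
  conv_rhs => rw [← Int.mul_ediv_add_emod a b]
  rw [show b * (a / b) + a % b + c = a % b + c + b * (a / b) by ring,
    Int.add_mul_ediv_left _ _ hb]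
  ring

lemma tail_fst_canon (x : ι × ℤ) (t : List (ι × ℤ)) (la : ι) :
    (canon A B (x :: t) la).tail.map Prod.fst = t.map Prod.fst := by
  obtain ⟨c, t', h⟩ := canon_cons_shape A B x.1 x.2 t la
  have hf := canon_fst A B (x :: t) la
  cases x
  rw [h] at hf ⊢
  simpa using hf

lemma canon_move (i j : ι) (hA : 1 ≤ A i j) (n m : ℤ) (t : List (ι × ℤ)) (la : ι) (c : ℤ) :
    canon A B ((i, n + (A i j : ℤ) * c) :: (j, m) :: t) la
      = canon A B ((i, n) :: (j, m + c * B j (nv t la)) :: t) la := by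
  have hA0 : (A i j : ℤ) ≠ 0 := by omega
  rw [canon_cons_cons, canon_cons_cons, Int.add_mul_emod_self_left,
    Int.add_mul_ediv_left n c hA0,
    show m + (n / (A i j : ℤ) + c) * B j (nv t la)
      = m + c * B j (nv t la) + n / (A i j : ℤ) * B j (nv t la) by ring]

lemma canon_bumpHead : ∀ (es : List (ι × ℤ)) (la : ι), chain A es la → ∀ c : ℤ,
    canon A B (bumpHead c (canon A B es la)) la = canon A B (bumpHead c es) la
  | [], _, _, c => by simp
  | [(i, n)], _, _, c => by simp
  | (i, n) :: (j, m) :: t, la, hch, c => by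
      have hA : 1 ≤ A i j := ((chain_cons A i n ((j, m) :: t) la).mp hch).1
      have hA0 : (A i j : ℤ) ≠ 0 := by omega
      have hch' : chain A ((j, m) :: t) la := ((chain_cons A i n ((j, m) :: t) la).mp hch).2
      set m' := m + n / (A i j : ℤ) * B j (nv t la) with hm'
      have hch'' : chain A ((j, m') :: t) la := by
        rw [chain_cons] at hch' ⊢; exact hch'
      rw [canon_cons_cons]
      obtain ⟨c₂, t₂, hsh⟩ := canon_cons_shape A B j m' t la
      have hnvt : nv t₂ la = nv t la := by
        apply nv_congr
        have := tail_fst_canon A B (j, m') t la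
        rw [hsh] at this; simpa using this
      rw [hsh, bumpHead_cons, canon_cons_cons, hnvt]
      have hbh : (j, c₂ + (n % (A i j : ℤ) + c) / (A i j : ℤ) * B j (nv t la)) :: t₂
          = bumpHead ((n % (A i j : ℤ) + c) / (A i j : ℤ) * B j (nv t la))
              (canon A B ((j, m') :: t) la) := by
        rw [hsh]; rfl
      rw [hbh, canon_bumpHead ((j, m') :: t) la hch'', bumpHead_cons, bumpHead_cons,
        canon_cons_cons, emod_shift]
      congr 2
      rw [hm', show m + n / (A i j : ℤ) * B j (nv t la)
            + (n % (A i j : ℤ) + c) / (A i j : ℤ) * B j (nv t la)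
          = m + (n / (A i j : ℤ) + (n % (A i j : ℤ) + c) / (A i j : ℤ)) * B j (nv t la) by ring,
        ediv_shift n _ c hA0]
  termination_by es _ _ _ => es.length

lemma canon_append_canon : ∀ (es X : List (ι × ℤ)) (dl : ι), chain A X dl →
    canon A B (es ++ canon A B X dl) dl = canon A B (es ++ X) dl
  | [], X, dl, hch => by
      simp only [List.nil_append]
      exact canon_eq_self A B _ dl (rng_canon A B X dl hch)
  | [(i, n)], X, dl, hch => by
      cases X with
      | nil => simp
      | cons y t =>
        cases y with | mk j m =>
        obtain ⟨c₂, t₂, hsh⟩ := canon_cons_shape A B j m t dl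
        have hnvt : nv t₂ dl = nv t dl := by
          apply nv_congr
          have := tail_fst_canon A B (j, m) t dl
          rw [hsh] at this; simpa using this
        simp only [List.cons_append, List.nil_append]
        rw [hsh, canon_cons_cons, canon_cons_cons, hnvt]
        have hbh : (j, c₂ + n / (A i j : ℤ) * B j (nv t dl)) :: t₂
            = bumpHead (n / (A i j : ℤ) * B j (nv t dl)) (canon A B ((j, m) :: t) dl) := by
          rw [hsh]; rfl
        rw [hbh, canon_bumpHead A B ((j, m) :: t) dl hch, bumpHead_cons]
  | (i, n) :: (j, m) :: t, X, dl, hch => by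
      simp only [List.cons_append]
      rw [canon_cons_cons, canon_cons_cons]
      have hnv : nv (t ++ canon A B X dl) dl = nv (t ++ X) dl := by
        apply nv_congr
        simp [canon_fst]
      rw [hnv]
      have := canon_append_canon ((j, m + n / (A i j : ℤ) * B j (nv (t ++ X) dl)) :: t) X dl hch
      simpa using this
  termination_by es _ _ _ => es.length

lemma canon_append : ∀ (es : List (ι × ℤ)) (hne : es ≠ []) (ds : List (ι × ℤ)) (dl : ι),
    rng A es → ds ≠ [] →
    canon A B (es ++ ds) dl = es.dropLast ++ canon A B (es.getLast hne :: ds) dl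
  | [], hne, _, _, _, _ => absurd rfl hne
  | [(i, n)], _, ds, dl, _, _ => by simp
  | (i, n) :: (j, m) :: t, _, ds, dl, hr, hds => by
      rw [rng_cons] at hr
      obtain ⟨h0, h1, h2⟩ := hr
      simp only [List.cons_append]
      rw [canon_cons_cons, Int.emod_eq_of_lt h0 h1, Int.ediv_eq_zero_of_lt h0 h1]
      simp only [zero_mul, add_zero]
      have := canon_append ((j, m) :: t) (by simp) ds dl h2 hds
      simp only [List.cons_append] at this
      rw [this]
      simp [List.getLast_cons]
  termination_by es _ _ _ _ _ => es.length

lemma canon_junction (es ds : List (ι × ℤ)) (dl : ι) (hne : es ≠ []) (hds : ds ≠ [])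
    (hr : rng A es) (hA : 1 ≤ A (es.getLast hne).1 (nv ds dl)) (q : ℤ) :
    canon A B (bumpLast (q * (A (es.getLast hne).1 (nv ds dl) : ℤ)) es ++ ds) dl
      = canon A B (es ++ bumpHead (q * B (nv ds dl) (nv ds.tail dl)) ds) dl := by
  cases ds with
  | nil => exact absurd rfl hds
  | cons y t =>
    cases y with | mk jj mm =>
    simp only [nv_cons, List.tail_cons] at hA ⊢
    set p := es.getLast hne with hp
    set c := q * (A p.1 jj : ℤ) with hc
    have hble := bumpLast_eq es hne c
    have hbne : bumpLast c es ≠ [] := by rw [hble]; simp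
    have hdrop : (bumpLast c es).dropLast = es.dropLast := by rw [hble]; simp
    have hlast : (bumpLast c es).getLast hbne = (p.1, p.2 + c) := by
      simp only [hble, ← hp]
      exact List.getLast_append _
    rw [canon_append A B _ hbne ((jj, mm) :: t) dl ((rng_bumpLast A c es).mpr hr) (by simp),
        bumpHead_cons,
        canon_append A B es hne ((jj, mm + q * B jj (nv t dl)) :: t) dl hr (by simp),
        hdrop, hlast]
    congr 1
    rw [show p.2 + c = p.2 + (A p.1 jj : ℤ) * q by rw [hc]; ring,
      canon_move A B p.1 jj hA p.2 mm t dl q, ← hp, Prod.mk.eta]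

end K0

namespace K0
variable {ι : Type} {A : ι → ι → ℕ} {B : ι → ι → ℤ}

inductive S (ι : Type) where
  | bot : S ι
  | one : S ι
  | hp : ι → ℕ → S ι
  | gw : List (ι × ℤ) → ι → S ι

variable (A B) in
def Good : S ι → Prop
  | S.bot => True
  | S.one => True
  | S.hp _ a => 1 ≤ a
  | S.gw es la => ok A es la

variable (A B) in
noncomputable def actL : Letter ι A → S ι → S ι
  | Letter.z, _ => S.bot
  | Letter.h _, S.bot => S.bot
  | Letter.h i, S.one => S.hp i 1
  | Letter.h i, S.hp j b => if i = j then S.hp i (b + 1) else S.bot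
  | Letter.h _, S.gw [] _ => S.bot
  | Letter.h i, S.gw ((j, n) :: t) la =>
      if i = j ∧ ok A ((j, n) :: t) la then
        S.gw (canon A B ((j, n + B j (nv t la)) :: t) la) la
      else S.bot
  | Letter.g _ _ _ _, S.bot => S.bot
  | Letter.g i j _ m, S.one => S.gw [(i, m)] j
  | Letter.g i j _ m, S.hp k b => if j = k then S.gw [(i, m + (b : ℤ) * (A i j : ℤ))] j else S.bot
  | Letter.g _ _ _ _, S.gw [] _ => S.bot
  | Letter.g i j _ m, S.gw ((k, n) :: t) la =>
      if j = k ∧ ok A ((k, n) :: t) la then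
        S.gw (canon A B ((i, m) :: (k, n) :: t) la) la
      else S.bot

@[simp] lemma actL_bot (u : Letter ι A) : actL A B u S.bot = S.bot := by
  cases u <;> rfl

@[simp] lemma actL_z (s : S ι) : actL A B Letter.z s = S.bot := rfl

@[simp] lemma actL_h_one (i : ι) : actL A B (Letter.h i) S.one = S.hp i 1 := rfl
@[simp] lemma actL_h_gwnil (i : ι) (la : ι) : actL A B (Letter.h i) (S.gw [] la) = S.bot := rfl
lemma actL_h_hp (i j : ι) (b : ℕ) :
    actL A B (Letter.h i) (S.hp j b) = if i = j then S.hp i (b + 1) else S.bot := rfl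
lemma actL_h_gw (i j : ι) (n : ℤ) (t : List (ι × ℤ)) (la : ι) :
    actL A B (Letter.h i) (S.gw ((j, n) :: t) la)
      = if i = j ∧ ok A ((j, n) :: t) la then
          S.gw (canon A B ((j, n + B j (nv t la)) :: t) la) la
        else S.bot := rfl
@[simp] lemma actL_g_one (i j : ι) (hij : 1 ≤ A i j) (m : ℤ) :
    actL A B (Letter.g i j hij m) S.one = S.gw [(i, m)] j := rfl
@[simp] lemma actL_g_gwnil (i j : ι) (hij : 1 ≤ A i j) (m : ℤ) (la : ι) :
    actL A B (Letter.g i j hij m) (S.gw [] la) = S.bot := rfl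
lemma actL_g_hp (i j : ι) (hij : 1 ≤ A i j) (m : ℤ) (k : ι) (b : ℕ) :
    actL A B (Letter.g i j hij m) (S.hp k b)
      = if j = k then S.gw [(i, m + (b : ℤ) * (A i j : ℤ))] j else S.bot := rfl
lemma actL_g_gw (i j : ι) (hij : 1 ≤ A i j) (m : ℤ) (k : ι) (n : ℤ) (t : List (ι × ℤ)) (la : ι) :
    actL A B (Letter.g i j hij m) (S.gw ((k, n) :: t) la)
      = if j = k ∧ ok A ((k, n) :: t) la then
          S.gw (canon A B ((i, m) :: (k, n) :: t) la) la
        else S.bot := rfl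

lemma actL_h_hp_pos (i : ι) (b : ℕ) :
    actL A B (Letter.h i) (S.hp i b) = S.hp i (b + 1) := by rw [actL_h_hp, if_pos rfl]
lemma actL_h_hp_neg {i j : ι} (hne : i ≠ j) (b : ℕ) :
    actL A B (Letter.h i) (S.hp j b) = S.bot := by rw [actL_h_hp, if_neg hne]
lemma actL_h_gw_pos (i : ι) {n : ℤ} {t : List (ι × ℤ)} {la : ι}
    (hok : ok A ((i, n) :: t) la) :
    actL A B (Letter.h i) (S.gw ((i, n) :: t) la)
      = S.gw (canon A B ((i, n + B i (nv t la)) :: t) la) la := by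
  rw [actL_h_gw, if_pos ⟨rfl, hok⟩]
lemma actL_h_gw_neg {i j : ι} {n : ℤ} {t : List (ι × ℤ)} {la : ι}
    (hc : ¬ (i = j ∧ ok A ((j, n) :: t) la)) :
    actL A B (Letter.h i) (S.gw ((j, n) :: t) la) = S.bot := by
  rw [actL_h_gw, if_neg hc]
lemma actL_g_hp_pos (i j : ι) (hij : 1 ≤ A i j) (m : ℤ) (b : ℕ) :
    actL A B (Letter.g i j hij m) (S.hp j b)
      = S.gw [(i, m + (b : ℤ) * (A i j : ℤ))] j := by rw [actL_g_hp, if_pos rfl]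
lemma actL_g_hp_neg {i j : ι} {hij : 1 ≤ A i j} {m : ℤ} {k : ι} (hne : j ≠ k) (b : ℕ) :
    actL A B (Letter.g i j hij m) (S.hp k b) = S.bot := by rw [actL_g_hp, if_neg hne]
lemma actL_g_gw_pos (i j : ι) (hij : 1 ≤ A i j) (m : ℤ) {n : ℤ} {t : List (ι × ℤ)} {la : ι}
    (hok : ok A ((j, n) :: t) la) :
    actL A B (Letter.g i j hij m) (S.gw ((j, n) :: t) la)
      = S.gw (canon A B ((i, m) :: (j, n) :: t) la) la := by
  rw [actL_g_gw, if_pos ⟨rfl, hok⟩]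
lemma actL_g_gw_neg {i j : ι} {hij : 1 ≤ A i j} {m : ℤ} {k : ι} {n : ℤ} {t : List (ι × ℤ)}
    {la : ι} (hc : ¬ (j = k ∧ ok A ((k, n) :: t) la)) :
    actL A B (Letter.g i j hij m) (S.gw ((k, n) :: t) la) = S.bot := by
  rw [actL_g_gw, if_neg hc]


lemma chain_sethead {j : ι} {x y : ℤ} {t : List (ι × ℤ)} {la : ι}
    (h : chain A ((j, x) :: t) la) : chain A ((j, y) :: t) la := by
  rw [chain_cons] at h ⊢; exact h

noncomputable def phi0 (A : ι → ι → ℕ) (B : ι → ι → ℤ) :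
    FreeMonoid (Letter ι A) →* Function.End (S ι) := FreeMonoid.lift (actL A B)

lemma phi0_of_apply (u : Letter ι A) (s : S ι) : phi0 A B (FreeMonoid.of u) s = actL A B u s := by
  rfl

lemma phi0_mul_apply (x y : FreeMonoid (Letter ι A)) (s : S ι) :
    phi0 A B (x * y) s = phi0 A B x (phi0 A B y s) := by
  rw [map_mul]; rfl

lemma rel_act {x y : FreeMonoid (Letter ι A)} (h : KatRel ι A B x y) :
    phi0 A B x = phi0 A B y := by
  have happ : ∀ (u v : Letter ι A) (s : S ι),
      phi0 A B (FreeMonoid.of u * FreeMonoid.of v) s = actL A B u (actL A B v s) := by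
    intro u v s
    rw [phi0_mul_apply, phi0_of_apply, phi0_of_apply]
  cases h with
  | zl w =>
    funext s; rw [happ, phi0_of_apply]; simp
  | zr w =>
    funext s; rw [happ, phi0_of_apply]; simp
  | gh i j hij n =>
    funext s
    rw [happ, phi0_of_apply]
    cases s with
    | bot => simp
    | one =>
      rw [actL_h_one, actL_g_hp_pos, actL_g_one]
      norm_num
    | hp k b =>
      by_cases hk : j = k
      · subst hk
        rw [actL_h_hp_pos, actL_g_hp_pos, actL_g_hp_pos]
        congr 2
        push_cast; ring
      · rw [actL_h_hp_neg hk, actL_bot, actL_g_hp_neg hk]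
    | gw es la =>
      cases es with
      | nil => simp
      | cons yy t =>
        cases yy with | mk k m =>
        by_cases hc : j = k ∧ ok A ((k, m) :: t) la
        · obtain ⟨rfl, hok⟩ := hc
          have hch : chain A ((j, m + B j (nv t la)) :: t) la := chain_sethead hok.2.1
          rw [actL_h_gw_pos j hok]
          obtain ⟨c₂, t₂, hsh⟩ := canon_cons_shape A B j (m + B j (nv t la)) t la
          have hok2 : ok A ((j, c₂) :: t₂) la := hsh ▸ ok_canon A B (by simp) hch
          rw [hsh, actL_g_gw_pos i j hij n hok2, ← hsh, actL_g_gw_pos i j hij _ hok]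
          have h3 := canon_append_canon A B [(i, n)] ((j, m + B j (nv t la)) :: t) la hch
          simp only [List.cons_append, List.nil_append] at h3
          rw [h3]
          have hmv := canon_move A B i j hij n m t la 1
          rw [mul_one, one_mul] at hmv
          rw [← hmv]
        · rw [actL_h_gw_neg hc, actL_bot, actL_g_gw_neg hc]
  | hg i j hij n =>
    funext s
    rw [happ, phi0_of_apply]
    cases s with
    | bot => simp
    | one =>
      have hok : ok A [(i, n)] j := ⟨by simp, by simpa [chain] using hij, by simp⟩
      rw [actL_g_one, actL_h_gw_pos i hok, actL_g_one]
      simp [nv]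
    | hp k b =>
      by_cases hk : j = k
      · subst hk
        rw [actL_g_hp_pos, actL_g_hp_pos]
        have hok : ok A [(i, n + (b : ℤ) * (A i j : ℤ))] j :=
          ⟨by simp, by simpa [chain] using hij, by simp⟩
        rw [actL_h_gw_pos i hok]
        simp only [nv_nil, canon_single]
        congr 2
        ring
      · rw [actL_g_hp_neg hk, actL_bot, actL_g_hp_neg hk]
    | gw es la =>
      cases es with
      | nil => simp
      | cons yy t =>
        cases yy with | mk k m =>
        by_cases hc : j = k ∧ ok A ((k, m) :: t) la
        · obtain ⟨rfl, hok⟩ := hc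
          have hchin : chain A ((i, n) :: (j, m) :: t) la := by
            rw [chain_cons]
            exact ⟨by simpa using hij, hok.2.1⟩
          rw [actL_g_gw_pos i j hij n hok, canon_cons_cons]
          obtain ⟨c₂, t₂, hsh⟩ := canon_cons_shape A B j (m + n / (A i j : ℤ) * B j (nv t la)) t la
          have hch2 : chain A ((j, m + n / (A i j : ℤ) * B j (nv t la)) :: t) la :=
            chain_sethead hok.2.1
          have hok2 : ok A ((i, n % (A i j : ℤ)) :: (j, c₂) :: t₂) la := by
            refine ⟨by simp, ?_, ?_⟩
            · rw [chain_cons]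
              exact ⟨by simpa using hij, hsh ▸ chain_canon A B hch2⟩
            · have hrr := rng_canon A B ((i, n) :: (j, m) :: t) la hchin
              rw [canon_cons_cons, hsh] at hrr
              exact hrr
          rw [hsh, actL_h_gw_pos i hok2]
          have hnv2 : nv ((j, c₂) :: t₂) la = j := by simp
          rw [hnv2, ← hsh]
          have h3 := canon_append_canon A B [(i, n % (A i j : ℤ) + B i j)]
            ((j, m + n / (A i j : ℤ) * B j (nv t la)) :: t) la hch2
          simp only [List.cons_append, List.nil_append] at h3
          rw [h3]
          have hmv := canon_move A B i j hij (n % (A i j : ℤ) + B i j) m t la (n / (A i j : ℤ))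
          have harg : n % (A i j : ℤ) + B i j + (A i j : ℤ) * (n / (A i j : ℤ))
              = n + B i j := by
            have := Int.mul_ediv_add_emod n (A i j : ℤ)
            linarith
          rw [harg] at hmv
          rw [← hmv, actL_g_gw_pos i j hij _ hok]
        · rw [actL_g_gw_neg hc, actL_bot, actL_g_gw_neg hc]
  | hh i j hne =>
    funext s
    rw [happ, phi0_of_apply]
    cases s with
    | bot => simp
    | one => rw [actL_h_one, actL_h_hp_neg hne, actL_z]
    | hp k b =>
      by_cases hk : j = k
      · subst hk
        rw [actL_h_hp_pos, actL_h_hp_neg hne, actL_z]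
      · rw [actL_h_hp_neg hk, actL_bot, actL_z]
    | gw es la =>
      cases es with
      | nil => simp
      | cons yy t =>
        cases yy with | mk k m =>
        by_cases hc : j = k ∧ ok A ((k, m) :: t) la
        · obtain ⟨rfl, hok⟩ := hc
          rw [actL_h_gw_pos j hok]
          obtain ⟨c₂, t₂, hsh⟩ := canon_cons_shape A B j (m + B j (nv t la)) t la
          rw [hsh, actL_h_gw_neg (by rintro ⟨rfl, -⟩; exact hne rfl), actL_z]
        · rw [actL_h_gw_neg hc, actL_bot, actL_z]
  | hg' i i' j hij n hne =>
    funext s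
    rw [happ, phi0_of_apply]
    cases s with
    | bot => simp
    | one =>
      rw [actL_g_one, actL_h_gw_neg (by rintro ⟨rfl, -⟩; exact hne rfl), actL_z]
    | hp k b =>
      by_cases hk : j = k
      · subst hk
        rw [actL_g_hp_pos, actL_h_gw_neg (by rintro ⟨rfl, -⟩; exact hne rfl), actL_z]
      · rw [actL_g_hp_neg hk, actL_bot, actL_z]
    | gw es la =>
      cases es with
      | nil => simp
      | cons yy t =>
        cases yy with | mk k m =>
        by_cases hc : j = k ∧ ok A ((k, m) :: t) la
        · obtain ⟨rfl, hok⟩ := hc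
          rw [actL_g_gw_pos i' j hij n hok]
          obtain ⟨c₂, t₂, hsh⟩ := canon_cons_shape A B i' n ((j, m) :: t) la
          rw [hsh, actL_h_gw_neg (by rintro ⟨rfl, -⟩; exact hne rfl), actL_z]
        · rw [actL_g_gw_neg hc, actL_bot, actL_z]
  | gh' i j k hij n hne =>
    funext s
    rw [happ, phi0_of_apply]
    cases s with
    | bot => simp
    | one => rw [actL_h_one, actL_g_hp_neg hne, actL_z]
    | hp k' b =>
      by_cases hk : k = k'
      · subst hk
        rw [actL_h_hp_pos, actL_g_hp_neg hne, actL_z]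
      · rw [actL_h_hp_neg hk, actL_bot, actL_z]
    | gw es la =>
      cases es with
      | nil => simp
      | cons yy t =>
        cases yy with | mk k' m =>
        by_cases hc : k = k' ∧ ok A ((k', m) :: t) la
        · obtain ⟨rfl, hok⟩ := hc
          rw [actL_h_gw_pos k hok]
          obtain ⟨c₂, t₂, hsh⟩ := canon_cons_shape A B k (m + B k (nv t la)) t la
          rw [hsh, actL_g_gw_neg (by rintro ⟨rfl, -⟩; exact hne rfl), actL_z]
        · rw [actL_h_gw_neg hc, actL_bot, actL_z]
  | gg i j j' l hij hjl n m hne =>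
    funext s
    rw [happ, phi0_of_apply]
    cases s with
    | bot => simp
    | one =>
      rw [actL_g_one, actL_g_gw_neg (by rintro ⟨rfl, -⟩; exact hne rfl), actL_z]
    | hp k b =>
      by_cases hk : l = k
      · subst hk
        rw [actL_g_hp_pos, actL_g_gw_neg (by rintro ⟨rfl, -⟩; exact hne rfl), actL_z]
      · rw [actL_g_hp_neg hk, actL_bot, actL_z]
    | gw es la =>
      cases es with
      | nil => simp
      | cons yy t =>
        cases yy with | mk k' mm =>
        by_cases hc : l = k' ∧ ok A ((k', mm) :: t) la
        · obtain ⟨rfl, hok⟩ := hc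
          rw [actL_g_gw_pos j' l hjl m hok]
          obtain ⟨c₂, t₂, hsh⟩ := canon_cons_shape A B j' m ((l, mm) :: t) la
          rw [hsh, actL_g_gw_neg (by rintro ⟨rfl, -⟩; exact hne rfl), actL_z]
        · rw [actL_g_gw_neg hc, actL_bot, actL_z]



noncomputable def Phi (A : ι → ι → ℕ) (B : ι → ι → ℤ) :
    KatM ι A B →* Function.End (S ι) :=
  Con.lift _ (phi0 A B) (Con.conGen_le.mpr fun x y h => (Con.ker_rel _).mpr (rel_act h))

lemma Phi_mk (w : FreeMonoid (Letter ι A)) : Phi A B (KatQ ι A B w) = phi0 A B w :=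
  Con.lift_mk' _ w

noncomputable def NF (A : ι → ι → ℕ) (B : ι → ι → ℤ) (x : KatM ι A B) : S ι :=
  Phi A B x S.one

lemma NF_mk (w : FreeMonoid (Letter ι A)) : NF A B (KatQ ι A B w) = phi0 A B w S.one := by
  rw [NF, Phi_mk]

lemma NF_mul (x y : KatM ι A B) : NF A B (x * y) = Phi A B x (NF A B y) := by
  rw [NF, map_mul]; rfl

noncomputable def wordOf (A : ι → ι → ℕ) : List (ι × ℤ) → ι → FreeMonoid (Letter ι A)
  | [], _ => 1
  | (i, n) :: t, la =>
      (if h : 1 ≤ A i (nv t la) then FreeMonoid.of (Letter.g i (nv t la) h n)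
       else FreeMonoid.of Letter.z) * wordOf A t la

noncomputable def sF (A : ι → ι → ℕ) : S ι → FreeMonoid (Letter ι A)
  | S.bot => FreeMonoid.of Letter.z
  | S.one => 1
  | S.hp i a => (FreeMonoid.of (Letter.h i)) ^ a
  | S.gw es la => wordOf A es la

noncomputable def sM (A : ι → ι → ℕ) (B : ι → ι → ℤ) (s : S ι) : KatM ι A B :=
  KatQ ι A B (sF A s)

lemma katq_rel {x y : FreeMonoid (Letter ι A)} (h : KatRel ι A B x y) :
    KatQ ι A B x = KatQ ι A B y :=
  (Con.eq _).mpr (ConGen.Rel.of x y h)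

lemma zmul (w : FreeMonoid (Letter ι A)) :
    KatQ ι A B (FreeMonoid.of Letter.z) * KatQ ι A B w = KatQ ι A B (FreeMonoid.of Letter.z) := by
  refine FreeMonoid.recOn w ?_ fun u w ih => ?_
  · rw [map_one, mul_one]
  · rw [map_mul, ← mul_assoc, ← map_mul, katq_rel (KatRel.zl u), ih]

lemma mulz (w : FreeMonoid (Letter ι A)) :
    KatQ ι A B w * KatQ ι A B (FreeMonoid.of Letter.z) = KatQ ι A B (FreeMonoid.of Letter.z) := by
  have H : ∀ l : List (Letter ι A),
      KatQ ι A B (FreeMonoid.ofList l) * KatQ ι A B (FreeMonoid.of Letter.z)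
        = KatQ ι A B (FreeMonoid.of Letter.z) := by
    intro l
    induction l using List.reverseRecOn with
    | nil => rw [show FreeMonoid.ofList ([] : List (Letter ι A)) = 1 from rfl, map_one, one_mul]
    | append_singleton l a ih =>
      rw [FreeMonoid.ofList_append, FreeMonoid.ofList_singleton, map_mul, mul_assoc,
        ← map_mul, katq_rel (KatRel.zr a), ih]
  have := H w.toList
  rwa [FreeMonoid.ofList_toList] at this

lemma zeroM_mul (x : KatM ι A B) : zeroM ι A B * x = zeroM ι A B := by
  induction x using Con.induction_on with
  | H w => exact zmul w

lemma mul_zeroM (x : KatM ι A B) : x * zeroM ι A B = zeroM ι A B := by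
  induction x using Con.induction_on with
  | H w => exact mulz w

lemma gh_pow (i j : ι) (hij : 1 ≤ A i j) (n : ℤ) (b : ℕ) :
    KatQ ι A B (FreeMonoid.of (Letter.g i j hij n)) * KatQ ι A B (FreeMonoid.of (Letter.h j)) ^ b
      = KatQ ι A B (FreeMonoid.of (Letter.g i j hij (n + (b : ℤ) * (A i j : ℤ)))) := by
  induction b generalizing n with
  | zero => simp
  | succ b ih =>
    rw [pow_succ, ← mul_assoc, ih, ← map_mul (KatQ ι A B), katq_rel (KatRel.gh i j hij _)]
    congr 2
    push_cast; ring

lemma hg_pow (i j : ι) (hij : 1 ≤ A i j) (n : ℤ) (b : ℕ) :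
    KatQ ι A B (FreeMonoid.of (Letter.h i)) ^ b * KatQ ι A B (FreeMonoid.of (Letter.g i j hij n))
      = KatQ ι A B (FreeMonoid.of (Letter.g i j hij (n + (b : ℤ) * B i j))) := by
  induction b generalizing n with
  | zero => simp
  | succ b ih =>
    rw [pow_succ, mul_assoc, ← map_mul (KatQ ι A B), katq_rel (KatRel.hg i j hij n), ih]
    congr 2
    push_cast; ring



lemma move_single (i j l : ι) (hij : 1 ≤ A i j) (hjl : 1 ≤ A j l) (n m : ℤ) :
    KatQ ι A B (FreeMonoid.of (Letter.g i j hij (n + (A i j : ℤ))))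
        * KatQ ι A B (FreeMonoid.of (Letter.g j l hjl m))
      = KatQ ι A B (FreeMonoid.of (Letter.g i j hij n))
        * KatQ ι A B (FreeMonoid.of (Letter.g j l hjl (m + B j l))) := by
  rw [← katq_rel (KatRel.gh i j hij n), map_mul, mul_assoc, ← map_mul (KatQ ι A B),
    katq_rel (KatRel.hg j l hjl m)]

lemma move_M (i j l : ι) (hij : 1 ≤ A i j) (hjl : 1 ≤ A j l) (q : ℤ) :
    ∀ n m : ℤ,
    KatQ ι A B (FreeMonoid.of (Letter.g i j hij (n + (A i j : ℤ) * q)))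
        * KatQ ι A B (FreeMonoid.of (Letter.g j l hjl m))
      = KatQ ι A B (FreeMonoid.of (Letter.g i j hij n))
        * KatQ ι A B (FreeMonoid.of (Letter.g j l hjl (m + q * B j l))) := by
  induction q using Int.induction_on with
  | zero => intro n m; norm_num
  | succ k ih =>
    intro n m
    have h1 : n + (A i j : ℤ) * ((k : ℤ) + 1) = (n + (A i j : ℤ) * (k : ℤ)) + (A i j : ℤ) := by
      ring
    rw [h1, move_single, ih]
    congr 2
    ring
  | pred k ih =>
    intro n m
    have h1 : n + (A i j : ℤ) * (-(k : ℤ) - 1) + (A i j : ℤ)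
        = n + (A i j : ℤ) * (-(k : ℤ)) := by ring
    have h2 := move_single (A := A) (B := B) i j l hij hjl
      (n + (A i j : ℤ) * (-(k : ℤ) - 1)) (m - B j l)
    rw [h1] at h2
    have h3 := ih n (m - B j l)
    rw [h3] at h2
    have h4 : m - B j l + B j l = m := by ring
    rw [h4] at h2
    rw [← h2]
    congr 2
    ring

@[simp] lemma wordOf_nil (la : ι) : wordOf A ([] : List (ι × ℤ)) la = 1 := rfl

lemma wordOf_cons (i : ι) (n : ℤ) (t : List (ι × ℤ)) (la : ι) :
    wordOf A ((i, n) :: t) la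
      = (if h : 1 ≤ A i (nv t la) then FreeMonoid.of (Letter.g i (nv t la) h n)
         else FreeMonoid.of Letter.z) * wordOf A t la := rfl

lemma canon_sound : ∀ (es : List (ι × ℤ)) (la : ι), chain A es la →
    KatQ ι A B (wordOf A es la) = KatQ ι A B (wordOf A (canon A B es la) la)
  | [], _, _ => by rw [canon_nil]
  | [(i, n)], _, _ => by rw [canon_single]
  | (i, n) :: (j, m) :: t, la, hch => by
      obtain ⟨hij, hch'⟩ : 1 ≤ A i j ∧ chain A ((j, m) :: t) la := by
        simpa [chain] using hch
      have hjν : 1 ≤ A j (nv t la) := ((chain_cons A j m t la).mp hch').1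
      have hch'' : chain A ((j, m + n / (A i j : ℤ) * B j (nv t la)) :: t) la :=
        chain_sethead hch'
      rw [canon_cons_cons, wordOf_cons, wordOf_cons, wordOf_cons]
      simp only [nv_cons, nv_canon]
      rw [dif_pos hij, dif_pos hij, dif_pos hjν]
      rw [map_mul, map_mul, map_mul,
        ← canon_sound ((j, m + n / (A i j : ℤ) * B j (nv t la)) :: t) la hch'',
        wordOf_cons, dif_pos hjν, map_mul, ← mul_assoc, ← mul_assoc]
      congr 1
      have hdm : n = n % (A i j : ℤ) + (A i j : ℤ) * (n / (A i j : ℤ)) := by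
        have := Int.mul_ediv_add_emod n (A i j : ℤ)
        linarith
      conv_lhs => rw [hdm]
      exact move_M i j (nv t la) hij hjν (n / (A i j : ℤ)) (n % (A i j : ℤ)) m
  termination_by es _ _ => es.length


lemma ok_tail {i : ι} {n : ℤ} {y : ι × ℤ} {t : List (ι × ℤ)} {la : ι}
    (h : ok A ((i, n) :: y :: t) la) : ok A (y :: t) la := by
  obtain ⟨-, hch, hr⟩ := h
  rw [chain_cons] at hch
  cases y with | mk j m =>
  rw [rng_cons] at hr
  exact ⟨by simp, hch.2, hr.2.2⟩

lemma sM_bot : sM A B (S.bot : S ι) = KatQ ι A B (FreeMonoid.of Letter.z) := rfl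
lemma sM_one : sM A B (S.one : S ι) = 1 := map_one _

lemma act_sound (u : Letter ι A) (s : S ι) (hs : Good A s) :
    sM A B (actL A B u s) = KatQ ι A B (FreeMonoid.of u) * sM A B s := by
  cases u with
  | z => rw [actL_z, sM_bot, sM, zmul]
  | h i =>
    cases s with
    | bot => rw [actL_bot, sM_bot, mulz]
    | one => rw [actL_h_one, sM_one, mul_one]; rw [sM, sF, pow_one]
    | hp j b =>
      by_cases hij : i = j
      · subst hij
        rw [actL_h_hp_pos, sM, sM, sF, sF, pow_succ', map_mul]
      · rw [actL_h_hp_neg hij, sM_bot, sM, sF]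
        have hb : 1 ≤ b := hs
        obtain ⟨b', rfl⟩ : ∃ b', b = b' + 1 := ⟨b - 1, by omega⟩
        rw [pow_succ', map_mul, ← mul_assoc, ← map_mul (KatQ ι A B),
          katq_rel (KatRel.hh i j hij), zmul]
    | gw es la =>
      cases es with
      | nil => exact absurd rfl hs.1
      | cons y t =>
        cases y with | mk j n =>
        have hok : ok A ((j, n) :: t) la := hs
        have h1 : 1 ≤ A j (nv t la) := ((chain_cons A j n t la).mp hok.2.1).1
        by_cases hij : i = j
        · subst hij
          have hr : KatQ ι A B (FreeMonoid.of (Letter.h i))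
                * KatQ ι A B (FreeMonoid.of (Letter.g i (nv t la) h1 n))
              = KatQ ι A B (FreeMonoid.of (Letter.g i (nv t la) h1 (n + B i (nv t la)))) := by
            rw [← map_mul (KatQ ι A B), katq_rel (KatRel.hg i (nv t la) h1 n)]
          rw [actL_h_gw_pos i hok, sM, sF,
            ← canon_sound ((i, n + B i (nv t la)) :: t) la (chain_sethead hok.2.1),
            wordOf_cons, dif_pos h1, map_mul, sM, sF, wordOf_cons, dif_pos h1, map_mul,
            ← mul_assoc, hr]
        · rw [actL_h_gw_neg (fun hc => hij hc.1), sM_bot, sM, sF, wordOf_cons, dif_pos h1,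
            map_mul, ← mul_assoc, ← map_mul (KatQ ι A B),
            katq_rel (KatRel.hg' i j (nv t la) h1 n hij), zmul]
  | g i j hij m =>
    cases s with
    | bot => rw [actL_bot, sM_bot, mulz]
    | one =>
      rw [actL_g_one, sM_one, mul_one, sM, sF, wordOf_cons, nv_nil, dif_pos hij, wordOf_nil,
        mul_one]
    | hp k b =>
      by_cases hjk : j = k
      · subst hjk
        rw [actL_g_hp_pos, sM, sM, sF, sF, wordOf_cons, nv_nil, dif_pos hij, wordOf_nil,
          mul_one, map_pow, gh_pow i j hij m b]
      · rw [actL_g_hp_neg hjk, sM_bot, sM, sF]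
        have hb : 1 ≤ b := hs
        obtain ⟨b', rfl⟩ : ∃ b', b = b' + 1 := ⟨b - 1, by omega⟩
        rw [pow_succ', map_mul, ← mul_assoc, ← map_mul (KatQ ι A B),
          katq_rel (KatRel.gh' i j k hij m hjk), zmul]
    | gw es la =>
      cases es with
      | nil => exact absurd rfl hs.1
      | cons y t =>
        cases y with | mk k n =>
        have hok : ok A ((k, n) :: t) la := hs
        have h1 : 1 ≤ A k (nv t la) := ((chain_cons A k n t la).mp hok.2.1).1
        by_cases hjk : j = k
        · subst hjk
          have hch : chain A ((i, m) :: (j, n) :: t) la := by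
            rw [chain_cons]
            exact ⟨by simpa using hij, hok.2.1⟩
          rw [actL_g_gw_pos i j hij m hok, sM, sF, ← canon_sound ((i, m) :: (j, n) :: t) la hch,
            wordOf_cons, dif_pos (by simpa using hij), map_mul, sM, sF]
          simp only [nv_cons]
        · rw [actL_g_gw_neg (fun hc => hjk hc.1), sM_bot, sM, sF, wordOf_cons, dif_pos h1,
            map_mul, ← mul_assoc, ← map_mul (KatQ ι A B),
            katq_rel (KatRel.gg i j k (nv t la) hij h1 m n hjk), zmul]

lemma Good_actL (u : Letter ι A) (s : S ι) (hs : Good A s) : Good A (actL A B u s) := by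
  cases u with
  | z => trivial
  | h i =>
    cases s with
    | bot => trivial
    | one => exact le_refl 1
    | hp j b =>
      by_cases hij : i = j
      · subst hij; rw [actL_h_hp_pos]; exact Nat.le_add_left 1 b
      · rw [actL_h_hp_neg hij]; trivial
    | gw es la =>
      cases es with
      | nil => exact absurd rfl hs.1
      | cons y t =>
        cases y with | mk j n =>
        have hok : ok A ((j, n) :: t) la := hs
        by_cases hij : i = j
        · subst hij
          rw [actL_h_gw_pos i hok]
          exact ok_canon A B (by simp) (chain_sethead hok.2.1)
        · rw [actL_h_gw_neg (fun hc => hij hc.1)]; trivial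
  | g i j hij m =>
    cases s with
    | bot => trivial
    | one =>
      rw [actL_g_one]
      exact ⟨by simp, by simpa [chain] using hij, by simp⟩
    | hp k b =>
      by_cases hjk : j = k
      · subst hjk
        rw [actL_g_hp_pos]
        exact ⟨by simp, by simpa [chain] using hij, by simp⟩
      · rw [actL_g_hp_neg hjk]; trivial
    | gw es la =>
      cases es with
      | nil => exact absurd rfl hs.1
      | cons y t =>
        cases y with | mk k n =>
        have hok : ok A ((k, n) :: t) la := hs
        by_cases hjk : j = k
        · subst hjk
          rw [actL_g_gw_pos i j hij m hok]
          refine ok_canon A B (by simp) ?_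
          rw [chain_cons]
          exact ⟨by simpa using hij, hok.2.1⟩
        · rw [actL_g_gw_neg (fun hc => hjk hc.1)]; trivial

lemma NF_one : NF A B (1 : KatM ι A B) = S.one := by
  rw [NF, map_one]; rfl

lemma NF_zeroM : NF A B (zeroM ι A B) = S.bot := by
  rw [zeroM, NF_mk, phi0_of_apply, actL_z]

lemma Good_NF_w (w : FreeMonoid (Letter ι A)) : Good A (NF A B (KatQ ι A B w)) := by
  refine FreeMonoid.recOn w ?_ fun u w ih => ?_
  · rw [map_one, NF_one]; trivial
  · rw [NF_mk, phi0_mul_apply, phi0_of_apply, ← NF_mk]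
    exact Good_actL u _ ih

lemma Good_NF (x : KatM ι A B) : Good A (NF A B x) := by
  induction x using Con.induction_on with
  | H w => exact Good_NF_w w

lemma sM_NF_w (w : FreeMonoid (Letter ι A)) :
    sM A B (NF A B (KatQ ι A B w)) = KatQ ι A B w := by
  refine FreeMonoid.recOn w ?_ fun u w ih => ?_
  · rw [map_one, NF_one, sM_one]
  · rw [NF_mk, phi0_mul_apply, phi0_of_apply, ← NF_mk,
      act_sound u _ (Good_NF_w _), ih, map_mul]

lemma sM_NF (x : KatM ι A B) : sM A B (NF A B x) = x := by
  induction x using Con.induction_on with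
  | H w => exact sM_NF_w w

lemma hpow_one (i : ι) : ∀ a : ℕ, 1 ≤ a →
    phi0 A B ((FreeMonoid.of (Letter.h i)) ^ a) S.one = S.hp i a
  | 0, h => absurd h (by omega)
  | 1, _ => by rw [pow_one, phi0_of_apply, actL_h_one]
  | (a + 2), _ => by
      rw [pow_succ', phi0_mul_apply, phi0_of_apply, hpow_one i (a + 1) (by omega),
        actL_h_hp_pos]

lemma word_one : ∀ (es : List (ι × ℤ)) (la : ι), ok A es la →
    phi0 A B (wordOf A es la) S.one = S.gw es la
  | [], la, hok => absurd rfl hok.1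
  | [(i, n)], la, hok => by
      rw [wordOf_cons, nv_nil, dif_pos (by simpa [chain] using hok.2.1), wordOf_nil, mul_one,
        phi0_of_apply]
      exact actL_g_one _ _ _ _
  | (i, n) :: (j, m) :: t, la, hok => by
      have hok' : ok A ((j, m) :: t) la := ok_tail hok
      have hij : 1 ≤ A i j := by
        have := (chain_cons A i n ((j, m) :: t) la).mp hok.2.1
        simpa using this.1
      rw [wordOf_cons, dif_pos (by simpa using hij), phi0_mul_apply, phi0_of_apply,
        word_one ((j, m) :: t) la hok']
      simp only [nv_cons]
      rw [actL_g_gw_pos i j hij n hok', canon_eq_self A B _ la hok.2.2]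
  termination_by es _ _ => es.length

lemma NF_sM (s : S ι) (hs : Good A s) : NF A B (sM A B s) = s := by
  cases s with
  | bot => rw [sM_bot, NF_mk, phi0_of_apply, actL_z]
  | one => rw [sM_one, NF_one]
  | hp i a => rw [sM, NF_mk, sF]; exact hpow_one i a hs
  | gw es la => rw [sM, NF_mk, sF]; exact word_one es la hs

lemma NF_inj {x y : KatM ι A B} (h : NF A B x = NF A B y) : x = y := by
  rw [← sM_NF (A := A) (B := B) x, h, sM_NF]

lemma NF_eq_bot {x : KatM ι A B} : NF A B x = S.bot ↔ x = zeroM ι A B := by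
  constructor
  · intro h
    exact NF_inj (by rw [h, NF_zeroM])
  · rintro rfl
    exact NF_zeroM

lemma dvd_iff (x y : KatM ι A B) :
    x ∣ y ↔ ∃ s : S ι, Good A s ∧ Phi A B x s = NF A B y := by
  constructor
  · rintro ⟨c, rfl⟩
    exact ⟨NF A B c, Good_NF c, (NF_mul x c).symm⟩
  · rintro ⟨s, hgs, he⟩
    refine ⟨sM A B s, NF_inj ?_⟩
    rw [NF_mul, NF_sM s hgs, he]


lemma Phi_eq (x : KatM ι A B) : Phi A B x = phi0 A B (sF A (NF A B x)) := by
  conv_lhs => rw [← sM_NF x]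
  rw [sM, Phi_mk]

lemma phi0_bot (w : FreeMonoid (Letter ι A)) : phi0 A B w S.bot = S.bot := by
  refine FreeMonoid.recOn w ?_ fun u w ih => ?_
  · rw [map_one]; rfl
  · rw [phi0_mul_apply, ih, phi0_of_apply, actL_bot]

lemma hpow_hp (i : ι) : ∀ a : ℕ, 1 ≤ a → ∀ b : ℕ,
    phi0 A B ((FreeMonoid.of (Letter.h i)) ^ a) (S.hp i b) = S.hp i (a + b)
  | 0, h => absurd h (by omega)
  | 1, _ => by
      intro b
      rw [pow_one, phi0_of_apply, actL_h_hp_pos, add_comm]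
  | (a + 2), _ => by
      intro b
      rw [pow_succ', phi0_mul_apply, phi0_of_apply, hpow_hp i (a + 1) (by omega) b,
        actL_h_hp_pos]
      congr 1
      omega

lemma hpow_hp_ne {i j : ι} (hne : i ≠ j) : ∀ a : ℕ, 1 ≤ a → ∀ b : ℕ,
    phi0 A B ((FreeMonoid.of (Letter.h i)) ^ a) (S.hp j b) = S.bot
  | 0, h => absurd h (by omega)
  | 1, _ => by
      intro b
      rw [pow_one, phi0_of_apply, actL_h_hp_neg hne]
  | (a + 2), _ => by
      intro b
      rw [pow_succ', phi0_mul_apply, phi0_of_apply, hpow_hp_ne hne (a + 1) (by omega) b,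
        actL_bot]

lemma hpow_gw (i : ι) : ∀ (a : ℕ) (n : ℤ) (t : List (ι × ℤ)) (la : ι),
    ok A ((i, n) :: t) la →
    phi0 A B ((FreeMonoid.of (Letter.h i)) ^ a) (S.gw ((i, n) :: t) la)
      = S.gw (canon A B ((i, n + (a : ℤ) * B i (nv t la)) :: t) la) la := by
  intro a
  induction a with
  | zero =>
    intro n t la hok
    rw [pow_zero, map_one]
    show S.gw ((i, n) :: t) la = _
    have h0 : n + ((0 : ℕ) : ℤ) * B i (nv t la) = n := by push_cast; ring
    rw [h0, canon_eq_self A B _ la hok.2.2]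
  | succ a ih =>
    intro n t la hok
    rw [pow_succ', phi0_mul_apply, phi0_of_apply, ih n t la hok]
    obtain ⟨c₂, t₂, hsh⟩ := canon_cons_shape A B i (n + (a : ℤ) * B i (nv t la)) t la
    have hch : chain A ((i, n + (a : ℤ) * B i (nv t la)) :: t) la := chain_sethead hok.2.1
    have hok2 : ok A ((i, c₂) :: t₂) la := hsh ▸ ok_canon A B (by simp) hch
    have hnvt : nv t₂ la = nv t la := by
      apply nv_congr
      have := tail_fst_canon A B (i, n + (a : ℤ) * B i (nv t la)) t la
      rw [hsh] at this; simpa using this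
    rw [hsh, actL_h_gw_pos i hok2, hnvt]
    have hbh : (i, c₂ + B i (nv t la)) :: t₂
        = bumpHead (B i (nv t la)) (canon A B ((i, n + (a : ℤ) * B i (nv t la)) :: t) la) := by
      rw [hsh]; rfl
    rw [hbh, canon_bumpHead A B _ la hch, bumpHead_cons]
    congr 3
    push_cast; ring

lemma hpow_gw_ne {i j : ι} (hne : i ≠ j) : ∀ a : ℕ, 1 ≤ a →
    ∀ (n : ℤ) (t : List (ι × ℤ)) (la : ι),
    phi0 A B ((FreeMonoid.of (Letter.h i)) ^ a) (S.gw ((j, n) :: t) la) = S.bot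
  | 0, h => absurd h (by omega)
  | 1, _ => by
      intro n t la
      rw [pow_one, phi0_of_apply, actL_h_gw_neg (fun hc => hne hc.1)]
  | (a + 2), _ => by
      intro n t la
      rw [pow_succ', phi0_mul_apply, phi0_of_apply, hpow_gw_ne hne (a + 1) (by omega) n t la,
        actL_bot]

lemma lfst_cons_cons (x y : ι × ℤ) (t : List (ι × ℤ)) (la : ι) :
    lfst (x :: y :: t) la = lfst (y :: t) la := by rw [lfst]

@[simp] lemma lfst_single (i : ι) (n : ℤ) (la : ι) : lfst [(i, n)] la = i := by rw [lfst]

lemma bumpLast_cons_shape (c : ℤ) (j : ι) (m : ℤ) (t : List (ι × ℤ)) :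
    ∃ m' t', bumpLast c ((j, m) :: t) = (j, m') :: t' := by
  cases t with
  | nil => exact ⟨m + c, [], by simp⟩
  | cons y t' => exact ⟨m, bumpLast c (y :: t'), bumpLast_cons_cons c _ y t'⟩

lemma ok_bumpLast {es : List (ι × ℤ)} {la : ι} (c : ℤ) (h : ok A es la) :
    ok A (bumpLast c es) la := by
  refine ⟨?_, ?_, (rng_bumpLast A c es).mpr h.2.2⟩
  · cases es with
    | nil => exact absurd rfl h.1
    | cons x t =>
      rw [bumpLast_eq (x :: t) (by simp) c]
      simp
  · exact (chain_congr A (map_fst_bumpLast c es) la).mpr h.2.1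

lemma word_hp : ∀ (es : List (ι × ℤ)) (la : ι), ok A es la → ∀ b : ℕ,
    phi0 A B (wordOf A es la) (S.hp la b)
      = S.gw (bumpLast ((b : ℤ) * (A (lfst es la) la : ℤ)) es) la
  | [], la, hok, _ => absurd rfl hok.1
  | [(i, n)], la, hok, b => by
      have hij : 1 ≤ A i la := by simpa [chain] using hok.2.1
      rw [wordOf_cons, nv_nil, dif_pos hij, wordOf_nil, mul_one, phi0_of_apply,
        actL_g_hp_pos, lfst_single, bumpLast_single]
  | (i, n) :: (j, m) :: t, la, hok, b => by
      have hok' : ok A ((j, m) :: t) la := ok_tail hok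
      have hij : 1 ≤ A i j := by
        have := (chain_cons A i n ((j, m) :: t) la).mp hok.2.1
        simpa using this.1
      rw [wordOf_cons, phi0_mul_apply]
      simp only [nv_cons]
      rw [dif_pos hij, word_hp ((j, m) :: t) la hok' b, phi0_of_apply, lfst_cons_cons]
      obtain ⟨m', t'', hbl⟩ :=
        bumpLast_cons_shape ((b : ℤ) * (A (lfst ((j, m) :: t) la) la : ℤ)) j m t
      have hokb : ok A ((j, m') :: t'') la := hbl ▸ ok_bumpLast _ hok'
      rw [hbl, actL_g_gw_pos i j hij n hokb, ← hbl, ← bumpLast_cons_cons,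
        canon_eq_self A B _ la ((rng_bumpLast A _ _).mpr hok.2.2)]
  termination_by es _ _ _ => es.length

lemma word_hp_ne : ∀ (es : List (ι × ℤ)) (la : ι), ok A es la → ∀ (k : ι), k ≠ la → ∀ b : ℕ,
    phi0 A B (wordOf A es la) (S.hp k b) = S.bot
  | [], la, hok, _, _, _ => absurd rfl hok.1
  | [(i, n)], la, hok, k, hkla, b => by
      have hij : 1 ≤ A i la := by simpa [chain] using hok.2.1
      rw [wordOf_cons, nv_nil, dif_pos hij, wordOf_nil, mul_one, phi0_of_apply,
        actL_g_hp_neg (fun hc => hkla hc.symm)]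
  | (i, n) :: (j, m) :: t, la, hok, k, hkla, b => by
      have hok' : ok A ((j, m) :: t) la := ok_tail hok
      have hij : 1 ≤ A i j := by
        have := (chain_cons A i n ((j, m) :: t) la).mp hok.2.1
        simpa using this.1
      rw [wordOf_cons, phi0_mul_apply]
      simp only [nv_cons]
      rw [dif_pos hij, word_hp_ne ((j, m) :: t) la hok' k hkla b, phi0_of_apply, actL_bot]
  termination_by es _ _ _ _ _ => es.length

lemma chain_append : ∀ (es : List (ι × ℤ)) (la : ι) (ds : List (ι × ℤ)) (dl : ι),
    chain A es la → chain A ds dl → nv ds dl = la → chain A (es ++ ds) dl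
  | [], la, ds, dl, _, h2, _ => by simpa using h2
  | (i, n) :: t, la, ds, dl, h1, h2, h3 => by
      rw [chain_cons] at h1
      rw [List.cons_append, chain_cons]
      constructor
      · cases t with
        | nil => simpa [h3] using h1.1
        | cons y t' => simpa using h1.1
      · exact chain_append t la ds dl h1.2 h2 h3
  termination_by es _ _ _ _ _ _ => es.length

lemma word_gw : ∀ (es : List (ι × ℤ)) (la : ι), ok A es la →
    ∀ (ds : List (ι × ℤ)) (dl : ι), ok A ds dl → nv ds dl = la →
    phi0 A B (wordOf A es la) (S.gw ds dl) = S.gw (canon A B (es ++ ds) dl) dl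
  | [], la, hok, _, _, _, _ => absurd rfl hok.1
  | [(i, n)], la, hok, ds, dl, hokd, hnv => by
      have hij : 1 ≤ A i la := by simpa [chain] using hok.2.1
      rw [wordOf_cons, nv_nil, dif_pos hij, wordOf_nil, mul_one, phi0_of_apply]
      cases ds with
      | nil => exact absurd rfl hokd.1
      | cons y dt =>
        cases y with | mk k d =>
        have hkla : k = la := by simpa using hnv
        subst hkla
        rw [actL_g_gw_pos i k hij n hokd]
        rfl
  | (i, n) :: (j, m) :: t, la, hok, ds, dl, hokd, hnv => by
      have hok' : ok A ((j, m) :: t) la := ok_tail hok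
      have hij : 1 ≤ A i j := by
        have := (chain_cons A i n ((j, m) :: t) la).mp hok.2.1
        simpa using this.1
      rw [wordOf_cons, phi0_mul_apply]
      simp only [nv_cons]
      rw [dif_pos hij, word_gw ((j, m) :: t) la hok' ds dl hokd hnv, phi0_of_apply]
      have hchX : chain A (((j, m) :: t) ++ ds) dl :=
        chain_append ((j, m) :: t) la ds dl hok'.2.1 hokd.2.1 hnv
      obtain ⟨c₂, t₂, hsh⟩ : ∃ c t', canon A B (((j, m) :: t) ++ ds) dl = (j, c) :: t' := by
        simpa using canon_cons_shape A B j m (t ++ ds) dl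
      have hok2 : ok A ((j, c₂) :: t₂) dl := hsh ▸ ok_canon A B (by simp) hchX
      rw [hsh, actL_g_gw_pos i j hij n hok2, ← hsh]
      have h3 := canon_append_canon A B [(i, n)] (((j, m) :: t) ++ ds) dl hchX
      simp only [List.cons_append, List.nil_append] at h3 ⊢
      rw [h3]
  termination_by es _ _ _ _ _ _ => es.length

lemma word_gw_ne : ∀ (es : List (ι × ℤ)) (la : ι), ok A es la →
    ∀ (ds : List (ι × ℤ)) (dl : ι), ds ≠ [] → nv ds dl ≠ la →
    phi0 A B (wordOf A es la) (S.gw ds dl) = S.bot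
  | [], la, hok, _, _, _, _ => absurd rfl hok.1
  | [(i, n)], la, hok, ds, dl, hdne, hnv => by
      have hij : 1 ≤ A i la := by simpa [chain] using hok.2.1
      rw [wordOf_cons, nv_nil, dif_pos hij, wordOf_nil, mul_one, phi0_of_apply]
      cases ds with
      | nil => exact absurd rfl hdne
      | cons y dt =>
        cases y with | mk k d =>
        have : la ≠ k := fun h => hnv (by simpa using h.symm)
        rw [actL_g_gw_neg (fun hc => this hc.1)]
  | (i, n) :: (j, m) :: t, la, hok, ds, dl, hdne, hnv => by
      have hok' : ok A ((j, m) :: t) la := ok_tail hok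
      have hij : 1 ≤ A i j := by
        have := (chain_cons A i n ((j, m) :: t) la).mp hok.2.1
        simpa using this.1
      rw [wordOf_cons, phi0_mul_apply]
      simp only [nv_cons]
      rw [dif_pos hij, word_gw_ne ((j, m) :: t) la hok' ds dl hdne hnv, phi0_of_apply, actL_bot]
  termination_by es _ _ _ _ _ _ => es.length


lemma lfst_eq_getLast : ∀ (es : List (ι × ℤ)) (h : es ≠ []) (la : ι),
    lfst es la = (es.getLast h).1
  | [], h, _ => absurd rfl h
  | [(i, n)], _, _ => by simp
  | x :: y :: t, _, la => by
      rw [lfst_cons_cons, List.getLast_cons (by simp : y :: t ≠ [])]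
      exact lfst_eq_getLast (y :: t) (by simp) la
  termination_by es _ _ => es.length

lemma chain_last : ∀ (es : List (ι × ℤ)) (h : es ≠ []) (la : ι), chain A es la →
    1 ≤ A (es.getLast h).1 la
  | [], h, _, _ => absurd rfl h
  | [(i, n)], _, la, hch => by simpa [chain] using hch
  | x :: y :: t, _, la, hch => by
      rw [List.getLast_cons (by simp : y :: t ≠ [])]
      refine chain_last (y :: t) (by simp) la ?_
      cases x with | mk i n =>
      cases y with | mk j m =>
      exact ((chain_cons A i n ((j, m) :: t) la).mp hch).2
  termination_by es _ _ _ => es.length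

lemma chain_suffix : ∀ (u v : List (ι × ℤ)) (dl : ι), chain A (u ++ v) dl → chain A v dl
  | [], v, dl, h => h
  | (i, n) :: u, v, dl, h => by
      rw [List.cons_append, chain_cons] at h
      exact chain_suffix u v dl h.2
  termination_by u _ _ _ => u.length

lemma rng_tail {x : ι × ℤ} {t : List (ι × ℤ)} (h : rng A (x :: t)) : rng A t := by
  cases t with
  | nil => simp
  | cons y t' =>
    cases x with | mk i n =>
    rw [rng_cons] at h
    exact h.2.2

lemma rng_suffix : ∀ (u v : List (ι × ℤ)), rng A (u ++ v) → rng A v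
  | [], v, h => h
  | (i, n) :: u, v, h => rng_suffix u v (rng_tail h)
  termination_by u _ _ => u.length

lemma ok_suffix {u v : List (ι × ℤ)} {dl : ι} (h : ok A (u ++ v) dl) (hv : v ≠ []) :
    ok A v dl := ⟨hv, chain_suffix u v dl h.2.1, rng_suffix u v h.2.2⟩

lemma bumpLast_length (c : ℤ) (es : List (ι × ℤ)) : (bumpLast c es).length = es.length := by
  have := congrArg List.length (map_fst_bumpLast c es)
  simpa using this

lemma dropLast_bumpLast {es : List (ι × ℤ)} (h : es ≠ []) (c : ℤ) :
    (bumpLast c es).dropLast = es.dropLast := by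
  rw [bumpLast_eq es h c]
  simp

lemma bumpLast_ne_nil {es : List (ι × ℤ)} (h : es ≠ []) (c : ℤ) : bumpLast c es ≠ [] := by
  intro hc
  have := bumpLast_length c es
  rw [hc] at this
  exact h (List.length_eq_zero_iff.mp this.symm)

lemma getLast_bumpLast {es : List (ι × ℤ)} (h : es ≠ []) (c : ℤ) (h2 : bumpLast c es ≠ []) :
    (bumpLast c es).getLast h2 = ((es.getLast h).1, (es.getLast h).2 + c) := by
  have hb : bumpLast c es = es.dropLast ++ [((es.getLast h).1, (es.getLast h).2 + c)] :=
    bumpLast_eq es h c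
  rw [List.getLast_congr h2 (by simp) hb]
  exact List.getLast_append _

lemma bumpLast_eq_self {es : List (ι × ℤ)} (h : es ≠ []) {c : ℤ}
    (he : bumpLast c es = es) : c = 0 := by
  have h1 := getLast_bumpLast h c (bumpLast_ne_nil h c)
  rw [List.getLast_congr (bumpLast_ne_nil h c) h he] at h1
  have := congrArg Prod.snd h1
  simpa using this

lemma lfst_congr {es es' : List (ι × ℤ)} (h : es.map Prod.fst = es'.map Prod.fst) (la : ι) :
    lfst es la = lfst es' la := by
  cases hes : es with
  | nil =>
    cases es' with
    | nil => rfl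
    | cons y t => rw [hes] at h; simp at h
  | cons x t =>
    have hne : es ≠ [] := by rw [hes]; simp
    have hne' : es' ≠ [] := by
      intro hc
      rw [hes, hc] at h; simp at h
    rw [← hes, lfst_eq_getLast es hne la, lfst_eq_getLast es' hne' la]
    have h1 : (es.map Prod.fst).getLast (by simp [hne]) =
        (es'.map Prod.fst).getLast (by simp [hne']) := List.getLast_congr _ _ h
    rwa [List.getLast_map, List.getLast_map] at h1

lemma one_ne_zeroM : (1 : KatM ι A B) ≠ zeroM ι A B := by
  intro h
  have := congrArg (NF A B) h
  rw [NF_one, NF_zeroM] at this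
  exact nomatch this

lemma actL_ne_one (u : Letter ι A) (s : S ι) : actL A B u s ≠ S.one := by
  cases u with
  | z => rw [actL_z]; exact fun h => nomatch h
  | h i =>
    cases s with
    | bot => rw [actL_bot]; exact fun h => nomatch h
    | one => rw [actL_h_one]; exact fun h => nomatch h
    | hp j b =>
      rw [actL_h_hp]
      split_ifs <;> exact fun h => nomatch h
    | gw es la =>
      cases es with
      | nil => exact fun h => nomatch h
      | cons y t =>
        cases y with | mk j n =>
        rw [actL_h_gw]
        split_ifs <;> exact fun h => nomatch h
  | g i j hij m =>
    cases s with
    | bot => rw [actL_bot]; exact fun h => nomatch h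
    | one => rw [actL_g_one]; exact fun h => nomatch h
    | hp k b =>
      rw [actL_g_hp]
      split_ifs <;> exact fun h => nomatch h
    | gw es la =>
      cases es with
      | nil => exact fun h => nomatch h
      | cons y t =>
        cases y with | mk k n =>
        rw [actL_g_gw]
        split_ifs <;> exact fun h => nomatch h

lemma phi0_eq_one {w : FreeMonoid (Letter ι A)} {s : S ι} :
    phi0 A B w s = S.one → w = 1 := by
  refine FreeMonoid.casesOn w (fun _ => rfl) fun u w' h => ?_
  exfalso
  rw [phi0_mul_apply, phi0_of_apply] at h
  exact actL_ne_one u _ h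

lemma mul_eq_one_left {x y : KatM ι A B} (h : x * y = 1) : x = 1 := by
  have h1 : NF A B (x * y) = S.one := by rw [h, NF_one]
  rw [NF_mul, Phi_eq] at h1
  have h2 := phi0_eq_one h1
  have h3 := sM_NF (A := A) (B := B) x
  rw [sM, h2, map_one] at h3
  exact h3.symm

lemma mul_eq_self_right {a x : KatM ι A B} (ha : a ≠ zeroM ι A B) (h : a * x = a) : x = 1 := by
  have h1 : Phi A B a (NF A B x) = NF A B a := by rw [← NF_mul, h]
  rw [Phi_eq] at h1
  have hga := Good_NF (A := A) (B := B) a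
  have hgx := Good_NF (A := A) (B := B) x
  cases hNa : NF A B a with
  | bot => exact absurd (NF_eq_bot.mp hNa) ha
  | one =>
    have : a = 1 := NF_inj (by rw [hNa, NF_one])
    subst this
    rwa [one_mul] at h
  | hp i α =>
    rw [hNa] at h1 hga
    have hα : 1 ≤ α := hga
    cases hNx : NF A B x with
    | one => exact NF_inj (by rw [hNx, NF_one])
    | bot =>
      rw [hNx] at h1
      rw [show sF A (S.hp i α) = (FreeMonoid.of (Letter.h i)) ^ α from rfl, phi0_bot] at h1
      exact absurd h1 (fun hc => nomatch hc)
    | hp j b =>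
      exfalso
      rw [hNx] at h1 hgx
      by_cases hij : i = j
      · subst hij
        rw [show sF A (S.hp i α) = (FreeMonoid.of (Letter.h i)) ^ α from rfl,
          hpow_hp i α hα b] at h1
        have : α + b = α := by
          have := h1
          injection this
        have hb : 1 ≤ b := hgx
        omega
      · rw [show sF A (S.hp i α) = (FreeMonoid.of (Letter.h i)) ^ α from rfl,
          hpow_hp_ne hij α hα b] at h1
        exact nomatch h1
    | gw ds dl =>
      exfalso
      rw [hNx] at h1 hgx
      cases ds with
      | nil => exact hgx.1 rfl
      | cons y dt =>
        cases y with | mk j d =>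
        by_cases hij : i = j
        · subst hij
          rw [show sF A (S.hp i α) = (FreeMonoid.of (Letter.h i)) ^ α from rfl,
            hpow_gw i α d dt dl hgx] at h1
          exact nomatch h1
        · rw [show sF A (S.hp i α) = (FreeMonoid.of (Letter.h i)) ^ α from rfl,
            hpow_gw_ne hij α hα d dt dl] at h1
          exact nomatch h1
  | gw es la =>
    rw [hNa] at h1 hga
    have hok : ok A es la := hga
    cases hNx : NF A B x with
    | one => exact NF_inj (by rw [hNx, NF_one])
    | bot =>
      rw [hNx] at h1
      rw [show sF A (S.gw es la) = wordOf A es la from rfl, phi0_bot] at h1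
      exact absurd h1 (fun hc => nomatch hc)
    | hp j b =>
      exfalso
      rw [hNx] at h1 hgx
      by_cases hj : la = j
      · subst hj
        rw [show sF A (S.gw es la) = wordOf A es la from rfl, word_hp es la hok b] at h1
        have h2 : bumpLast ((b : ℤ) * (A (lfst es la) la : ℤ)) es = es := by
          injection h1
        have h3 := bumpLast_eq_self hok.1 h2
        have hK : 1 ≤ A (lfst es la) la := by
          rw [lfst_eq_getLast es hok.1 la]
          exact chain_last es hok.1 la hok.2.1
        have hb : 1 ≤ b := hgx
        have : (b : ℤ) * (A (lfst es la) la : ℤ) ≠ 0 := by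
          apply mul_ne_zero <;> [skip; skip] <;> omega
        exact this h3
      · rw [show sF A (S.gw es la) = wordOf A es la from rfl,
          word_hp_ne es la hok j (fun hc => hj hc.symm) b] at h1
        exact nomatch h1
    | gw ds dl =>
      exfalso
      rw [hNx] at h1 hgx
      by_cases hnv : nv ds dl = la
      · rw [show sF A (S.gw es la) = wordOf A es la from rfl,
          word_gw es la hok ds dl hgx hnv] at h1
        have h2 : canon A B (es ++ ds) dl = es := by injection h1
        have h3 := congrArg List.length h2
        rw [canon_length, List.length_append] at h3
        have : ds.length = 0 := by omega
        exact hgx.1 (List.length_eq_zero_iff.mp this)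
      · rw [show sF A (S.gw es la) = wordOf A es la from rfl,
          word_gw_ne es la hok ds dl hgx.1 hnv] at h1
        exact nomatch h1

lemma dvd_antisymm' {a b : KatM ι A B} (ha : a ≠ zeroM ι A B) (hab : a ∣ b) (hba : b ∣ a) :
    a = b := by
  obtain ⟨c, rfl⟩ := hab
  obtain ⟨d, hd⟩ := hba
  rw [mul_assoc] at hd
  have h1 : c * d = 1 := mul_eq_self_right ha hd.symm
  rw [mul_eq_one_left h1, mul_one]


lemma sF_hp (i : ι) (a : ℕ) : sF A (S.hp i a) = (FreeMonoid.of (Letter.h i)) ^ a := rfl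
lemma sF_gw (es : List (ι × ℤ)) (la : ι) : sF A (S.gw es la) = wordOf A es la := rfl

lemma dvd_hp {x y : KatM ι A B} {i : ι} {a : ℕ} (hx : NF A B x = S.hp i a) (ha : 1 ≤ a)
    (hxy : x ∣ y) (hy : y ≠ zeroM ι A B) :
    (∃ b : ℕ, NF A B y = S.hp i (a + b)) ∨
    (∃ (n : ℤ) (t : List (ι × ℤ)) (la : ι), ok A ((i, n) :: t) la ∧
      NF A B y = S.gw (canon A B ((i, n + (a : ℤ) * B i (nv t la)) :: t) la) la) := by
  obtain ⟨s, hgs, he⟩ := (dvd_iff x y).mp hxy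
  rw [Phi_eq, hx, sF_hp] at he
  cases s with
  | bot =>
    rw [phi0_bot] at he
    exact absurd (NF_eq_bot.mp he.symm) hy
  | one =>
    rw [hpow_one i a ha] at he
    exact Or.inl ⟨0, by rw [← he, add_zero]⟩
  | hp j b =>
    by_cases hij : i = j
    · subst hij
      rw [hpow_hp i a ha b] at he
      exact Or.inl ⟨b, he.symm⟩
    · rw [hpow_hp_ne hij a ha b] at he
      exact absurd (NF_eq_bot.mp he.symm) hy
  | gw ds dl =>
    cases ds with
    | nil => exact absurd rfl hgs.1
    | cons z t =>
      cases z with | mk j n =>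
      by_cases hij : i = j
      · subst hij
        rw [hpow_gw i a n t dl hgs] at he
        exact Or.inr ⟨n, t, dl, hgs, he.symm⟩
      · rw [hpow_gw_ne hij a ha n t dl] at he
        exact absurd (NF_eq_bot.mp he.symm) hy

lemma dvd_gw {x y : KatM ι A B} {es : List (ι × ℤ)} {la : ι}
    (hx : NF A B x = S.gw es la) (hok : ok A es la)
    (hxy : x ∣ y) (hy : y ≠ zeroM ι A B) :
    (∃ b : ℕ, NF A B y = S.gw (bumpLast ((b : ℤ) * (A (lfst es la) la : ℤ)) es) la) ∨
    (∃ ds dl, ok A ds dl ∧ nv ds dl = la ∧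
      NF A B y = S.gw (canon A B (es ++ ds) dl) dl) := by
  obtain ⟨s, hgs, he⟩ := (dvd_iff x y).mp hxy
  rw [Phi_eq, hx, sF_gw] at he
  cases s with
  | bot =>
    rw [phi0_bot] at he
    exact absurd (NF_eq_bot.mp he.symm) hy
  | one =>
    rw [word_one es la hok] at he
    refine Or.inl ⟨0, ?_⟩
    rw [← he]
    norm_num
    rw [bumpLast_zero]
  | hp j b =>
    by_cases hj : la = j
    · subst hj
      rw [word_hp es la hok b] at he
      exact Or.inl ⟨b, he.symm⟩
    · rw [word_hp_ne es la hok j (fun hc => hj hc.symm) b] at he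
      exact absurd (NF_eq_bot.mp he.symm) hy
  | gw ds dl =>
    by_cases hnv : nv ds dl = la
    · rw [word_gw es la hok ds dl hgs hnv] at he
      exact Or.inr ⟨ds, dl, hgs, hnv, he.symm⟩
    · rw [word_gw_ne es la hok ds dl hgs.1 hnv] at he
      exact absurd (NF_eq_bot.mp he.symm) hy

lemma dvd_of_NF_bumpLast {x y : KatM ι A B} {es : List (ι × ℤ)} {la : ι}
    (hx : NF A B x = S.gw es la) (hok : ok A es la) (b : ℕ)
    (hy : NF A B y = S.gw (bumpLast ((b : ℤ) * (A (lfst es la) la : ℤ)) es) la) : x ∣ y := by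
  rcases Nat.eq_zero_or_pos b with hb | hb
  · subst hb
    have : NF A B y = NF A B x := by
      rw [hy, hx]
      norm_num
      rw [bumpLast_zero]
    rw [NF_inj this]
  · refine (dvd_iff x y).mpr ⟨S.hp la b, hb, ?_⟩
    rw [Phi_eq, hx, sF_gw, word_hp es la hok b, hy]

lemma dvd_of_NF_append {x y : KatM ι A B} {es : List (ι × ℤ)} {la : ι}
    (hx : NF A B x = S.gw es la) (hok : ok A es la) {ds : List (ι × ℤ)} {dl : ι}
    (hokd : ok A ds dl) (hnv : nv ds dl = la)
    (hy : NF A B y = S.gw (canon A B (es ++ ds) dl) dl) : x ∣ y :=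
  (dvd_iff x y).mpr ⟨S.gw ds dl, hokd, by
    rw [Phi_eq, hx, sF_gw, word_gw es la hok ds dl hokd hnv, hy]⟩

lemma hp_dvd_gw {x y : KatM ι A B} {i : ι} {a : ℕ} (hx : NF A B x = S.hp i a)
    {n : ℤ} {t : List (ι × ℤ)} {la : ι} (hoky : ok A ((i, n) :: t) la)
    (hy : NF A B y = S.gw ((i, n) :: t) la) : x ∣ y := by
  have hch : chain A ((i, n - (a : ℤ) * B i (nv t la)) :: t) la := chain_sethead hoky.2.1
  refine (dvd_iff x y).mpr
    ⟨S.gw (canon A B ((i, n - (a : ℤ) * B i (nv t la)) :: t) la) la,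
      ok_canon A B (by simp) hch, ?_⟩
  rw [Phi_eq, hx, sF_hp]
  obtain ⟨c₂, t₂, hsh⟩ := canon_cons_shape A B i (n - (a : ℤ) * B i (nv t la)) t la
  have hok2 : ok A ((i, c₂) :: t₂) la := hsh ▸ ok_canon A B (by simp) hch
  have hnvt : nv t₂ la = nv t la := by
    apply nv_congr
    have := tail_fst_canon A B (i, n - (a : ℤ) * B i (nv t la)) t la
    rw [hsh] at this; simpa using this
  rw [hsh, hpow_gw i a c₂ t₂ la hok2, hnvt]
  have hbh : (i, c₂ + (a : ℤ) * B i (nv t la)) :: t₂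
      = bumpHead ((a : ℤ) * B i (nv t la))
          (canon A B ((i, n - (a : ℤ) * B i (nv t la)) :: t) la) := by
    rw [hsh]; rfl
  rw [hbh, canon_bumpHead A B _ la hch, bumpHead_cons,
    show n - (a : ℤ) * B i (nv t la) + (a : ℤ) * B i (nv t la) = n by ring,
    canon_eq_self A B _ la hoky.2.2, hy]

lemma gw_dvd_master {x y : KatM ι A B} {es : List (ι × ℤ)} {la : ι}
    (hx : NF A B x = S.gw es la) (hok : ok A es la)
    {dl : ι} {d : ℤ} {Dt : List (ι × ℤ)}
    (hchD : chain A ((la, d) :: Dt) dl) (hrngD : rng A ((la, d) :: Dt))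
    (hy : NF A B y = S.gw (es.dropLast ++
        ((es.getLast hok.1).1,
         (es.getLast hok.1).2 % (A (es.getLast hok.1).1 la : ℤ)) :: (la, d) :: Dt) dl) :
    x ∣ y := by
  have hchX : chain A
      ((la, d - (es.getLast hok.1).2 / (A (es.getLast hok.1).1 la : ℤ) * B la (nv Dt dl))
        :: Dt) dl := chain_sethead hchD
  refine (dvd_iff x y).mpr
    ⟨S.gw (canon A B
        ((la, d - (es.getLast hok.1).2 / (A (es.getLast hok.1).1 la : ℤ) * B la (nv Dt dl))
          :: Dt) dl) dl,
      ok_canon A B (by simp) hchX, ?_⟩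
  rw [Phi_eq, hx, sF_gw]
  have hokX := ok_canon A B (by simp : ((la, d - (es.getLast hok.1).2 / (A (es.getLast hok.1).1 la : ℤ) * B la (nv Dt dl)) :: Dt) ≠ []) hchX
  have hnvX : nv (canon A B
      ((la, d - (es.getLast hok.1).2 / (A (es.getLast hok.1).1 la : ℤ) * B la (nv Dt dl))
        :: Dt) dl) dl = la := by
    rw [nv_canon]; simp
  rw [word_gw es la hok _ dl hokX hnvX, canon_append_canon A B es _ dl hchX,
    canon_append A B es hok.1 _ dl hok.2.2 (by simp)]
  have hpp : es.getLast hok.1 = ((es.getLast hok.1).1, (es.getLast hok.1).2) := rfl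
  rw [hpp, canon_cons_cons,
    show d - (es.getLast hok.1).2 / (A (es.getLast hok.1).1 la : ℤ) * B la (nv Dt dl)
        + (es.getLast hok.1).2 / (A (es.getLast hok.1).1 la : ℤ) * B la (nv Dt dl) = d
      by ring,
    canon_eq_self A B _ dl hrngD, hy]

lemma F2_struct {es ds : List (ι × ℤ)} {la dl : ι}
    (hok : ok A es la) (hokd : ok A ds dl) (hnv : nv ds dl = la) :
    ∃ (d : ℤ) (Dt : List (ι × ℤ)),
      canon A B (es ++ ds) dl
        = es.dropLast ++
          ((es.getLast hok.1).1,
           (es.getLast hok.1).2 % (A (es.getLast hok.1).1 la : ℤ)) :: (la, d) :: Dt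
      ∧ chain A ((la, d) :: Dt) dl ∧ rng A ((la, d) :: Dt) := by
  cases ds with
  | nil => exact absurd rfl hokd.1
  | cons z dt =>
    cases z with | mk j0 d1 =>
    have hj0 : la = j0 := by
      have : j0 = la := by simpa using hnv
      exact this.symm
    subst hj0
    rw [canon_append A B es hok.1 _ dl hok.2.2 (by simp)]
    have hpp : es.getLast hok.1 = ((es.getLast hok.1).1, (es.getLast hok.1).2) := rfl
    rw [hpp, canon_cons_cons]
    have hch2 : chain A
        ((la, d1 + (es.getLast hok.1).2 / (A (es.getLast hok.1).1 la : ℤ) * B la (nv dt dl))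
          :: dt) dl := chain_sethead hokd.2.1
    obtain ⟨d, Dt, hsh⟩ := canon_cons_shape A B la
      (d1 + (es.getLast hok.1).2 / (A (es.getLast hok.1).1 la : ℤ) * B la (nv dt dl)) dt dl
    refine ⟨d, Dt, by rw [hsh], ?_, ?_⟩
    · exact hsh ▸ chain_canon A B hch2
    · exact hsh ▸ rng_canon A B _ dl hch2


lemma nv_bumpLast (c : ℤ) (es : List (ι × ℤ)) (la : ι) :
    nv (bumpLast c es) la = nv es la := nv_congr (map_fst_bumpLast c es) la

lemma nv_append (es ds : List (ι × ℤ)) (hne : es ≠ []) (dl la : ι) :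
    nv (es ++ ds) dl = nv es la := by
  cases es with
  | nil => exact absurd rfl hne
  | cons x t => cases x; simp

lemma dvd_sub_of_emod_eq {a b K : ℤ} (h : a % K = b % K) : K ∣ a - b := by
  have h1 : (a - b) % K = 0 := by
    rw [Int.sub_emod, h, sub_self, Int.zero_emod]
  exact Int.dvd_of_emod_eq_zero h1

lemma junc_extract {es es' ZS R : List (ι × ℤ)} {la la' : ι} {v : ι × ℤ}
    (hne : es ≠ []) (hne' : es' ≠ [])
    (hkl : es.length < es'.length)
    (hEQ : es.dropLast ++ v :: R = es'.dropLast ++ ZS)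
    (hZhead : nv ZS la' = (es'.getLast hne').1)
    (hRhead : nv R la' = la) (hRne : R ≠ []) :
    ∃ D, D ≠ [] ∧ nv D la' = la ∧ es' = es.dropLast ++ v :: D := by
  have hlnes : 1 ≤ es.length := List.length_pos_iff.mpr hne
  have hlnes' : 1 ≤ es'.length := List.length_pos_iff.mpr hne'
  rcases List.append_eq_append_iff.mp hEQ with ⟨w, hw1, hw2⟩ | ⟨w, hw1, hw2⟩
  · cases w with
    | nil =>
      exfalso
      have hl := congrArg List.length hw1
      rw [List.length_dropLast, List.append_nil, List.length_dropLast] at hl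
      omega
    | cons v' w' =>
      rw [List.cons_append] at hw2
      injection hw2 with h1 h2
      subst h1
      subst h2
      refine ⟨w' ++ [es'.getLast hne'], by simp, ?_, ?_⟩
      · cases w' with
        | nil =>
          have h1 : nv ([es'.getLast hne'] : List (ι × ℤ)) la' = (es'.getLast hne').1 := by
            cases hx : es'.getLast hne'
            simp
          rw [List.nil_append, h1, ← hZhead]
          rw [List.nil_append] at hRhead
          exact hRhead
        | cons z w'' =>
          have h1 : nv ((z :: w'') ++ [es'.getLast hne']) la' = z.1 := by
            cases z; simp
          have h2 : nv ((z :: w'') ++ ZS) la' = z.1 := by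
            cases z; simp
          rw [h1, ← h2, hRhead]
      · conv_lhs => rw [← List.dropLast_append_getLast hne']
        rw [hw1]
        simp
  · exfalso
    have hl := congrArg List.length hw1
    rw [List.length_dropLast, List.length_append, List.length_dropLast] at hl
    have hl2 := congrArg List.length hw2
    rw [List.length_append, List.length_cons] at hl2
    omega


lemma nv_default {es : List (ι × ℤ)} (h : es ≠ []) (la la' : ι) : nv es la = nv es la' := by
  cases es with
  | nil => exact absurd rfl h
  | cons x t => cases x; simp

lemma hp_gw_dvd {x y m₀ : KatM ι A B} {i : ι} {a : ℕ} {es : List (ι × ℤ)} {la : ι}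
    (hx : NF A B x = S.hp i a) (ha : 1 ≤ a)
    (hy : NF A B y = S.gw es la) (hok : ok A es la)
    (hm0 : m₀ ≠ zeroM ι A B) (hxm : x ∣ m₀) (hym : y ∣ m₀) : x ∣ y := by
  have hnv : nv es la = i := by
    rcases dvd_hp hx ha hxm hm0 with ⟨b, hE⟩ | ⟨n, t, lb, hokt, hE⟩
    · exfalso
      rcases dvd_gw hy hok hym hm0 with ⟨b', hE'⟩ | ⟨ds, dl, _, _, hE'⟩ <;>
        (rw [hE] at hE'; exact absurd hE' (by simp))
    · have hCLne : canon A B ((i, n + (a : ℤ) * B i (nv t lb)) :: t) lb ≠ [] :=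
        canon_ne_nil A B (by simp) lb
      have hnvE : ∀ dflt : ι,
          nv (canon A B ((i, n + (a : ℤ) * B i (nv t lb)) :: t) lb) dflt = i := by
        intro dflt
        rw [nv_default hCLne dflt lb, nv_canon]
        simp
      rcases dvd_gw hy hok hym hm0 with ⟨b', hE'⟩ | ⟨ds, dl, hokd, hnvd, hE'⟩
      · rw [hE] at hE'
        injection hE' with h1 h2
        rw [← nv_bumpLast ((b' : ℤ) * (A (lfst es la) la : ℤ)) es la, ← h1, hnvE]
      · rw [hE] at hE'
        injection hE' with h1 h2
        rw [← nv_append es ds hok.1 dl la, ← nv_canon A B (es ++ ds) dl dl, ← h1, hnvE]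
  cases es with
  | nil => exact absurd rfl hok.1
  | cons z T =>
    cases z with | mk i0 w =>
    have hi0 : i = i0 := by
      have := hnv
      simp at this
      exact this.symm
    subst hi0
    exact hp_dvd_gw hx hok hy


lemma f_dvd_g_of_lt {f g m₀ : KatM ι A B} {es es' : List (ι × ℤ)} {la la' : ι}
    (hf : NF A B f = S.gw es la) (hok : ok A es la)
    (hg : NF A B g = S.gw es' la') (hokg : ok A es' la')
    (hlt : es.length < es'.length)
    (hm0 : m₀ ≠ zeroM ι A B) (hfm : f ∣ m₀) (hgm : g ∣ m₀) : f ∣ g := by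
  rcases dvd_gw hf hok hfm hm0 with ⟨b, hE⟩ | ⟨ds, dl, hokd, hnvd, hE⟩
  · exfalso
    rcases dvd_gw hg hokg hgm hm0 with ⟨b', hE'⟩ | ⟨ds', dl', hokd', hnvd', hE'⟩ <;>
      (rw [hE] at hE'; injection hE' with h1 h2)
    · have hl := congrArg List.length h1
      rw [bumpLast_length, bumpLast_length] at hl
      omega
    · have hl := congrArg List.length h1
      rw [bumpLast_length, canon_length, List.length_append] at hl
      have := List.length_pos_iff.mpr hokd'.1
      omega
  · obtain ⟨d, Dt, hceq, hchD, hrngD⟩ := F2_struct (B := B) hok hokd hnvd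
    set pv : ι × ℤ := ((es.getLast hok.1).1,
        (es.getLast hok.1).2 % (A (es.getLast hok.1).1 la : ℤ)) with hpv
    rw [hceq] at hE
    have hfinish : ∀ (dl₀ : ι), NF A B g = S.gw es' dl₀ → ok A es' dl₀ →
        ∀ (D : List (ι × ℤ)), D ≠ [] → nv D dl₀ = la →
        es' = es.dropLast ++ pv :: D → f ∣ g := by
      intro dl₀ hg₀ hokg₀ D hDne hDnv hdec
      cases D with
      | nil => exact absurd rfl hDne
      | cons z DT =>
        cases z with | mk la0 dd =>
        have hla0 : la = la0 := by
          have := hDnv; simp at this; exact this.symm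
        subst hla0
        have h2 : es' = (es.dropLast ++ [pv]) ++ (la, dd) :: DT := by
          rw [hdec]; simp
        have hch2 : chain A ((la, dd) :: DT) dl₀ :=
          chain_suffix (es.dropLast ++ [pv]) ((la, dd) :: DT) dl₀ (by rw [← h2]; exact hokg₀.2.1)
        have hrng2 : rng A ((la, dd) :: DT) :=
          rng_suffix (es.dropLast ++ [pv]) ((la, dd) :: DT) (by rw [← h2]; exact hokg₀.2.2)
        exact gw_dvd_master hf hok hch2 hrng2 (by rw [hg₀, hdec, hpv])
    rcases dvd_gw hg hokg hgm hm0 with ⟨b', hE'⟩ | ⟨ds', dl', hokd', hnvd', hE'⟩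
    · rw [bumpLast_eq es' hokg.1 _] at hE'
      rw [hE] at hE'
      injection hE' with h1 h2
      subst h2
      obtain ⟨D, hDne, hDnv, hdec⟩ := junc_extract (la := la) (la' := dl)
        hok.1 hokg.1 hlt h1 (by simp) (by simp) (by simp)
      exact hfinish dl hg hokg D hDne hDnv hdec
    · obtain ⟨d', Dt', hceq', hchD', hrngD'⟩ := F2_struct (B := B) hokg hokd' hnvd'
      rw [hceq'] at hE'
      rw [hE] at hE'
      injection hE' with h1 h2
      subst h2
      obtain ⟨D, hDne, hDnv, hdec⟩ := junc_extract (la := la) (la' := la')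
        hok.1 hokg.1 hlt h1 (by simp) (by simp) (by simp)
      exact hfinish la' hg hokg D hDne hDnv hdec


lemma hpq (i : ι) (a : ℕ) : sM A B (S.hp i a) = KatQ ι A B ((FreeMonoid.of (Letter.h i)) ^ a) :=
  rfl

lemma case_hp_hp {f g m₀ : KatM ι A B} {i j : ι} {a b : ℕ}
    (hf : NF A B f = S.hp i a) (ha : 1 ≤ a) (hg : NF A B g = S.hp j b) (hb : 1 ≤ b)
    (hm0 : m₀ ≠ zeroM ι A B) (hfm : f ∣ m₀) (hgm : g ∣ m₀) :
    ∃ m : KatM ι A B, m ≠ zeroM ι A B ∧ f ∣ m ∧ g ∣ m ∧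
      ∀ h : KatM ι A B, h ≠ zeroM ι A B → f ∣ h → g ∣ h → m ∣ h := by
  have hij : i = j := by
    rcases dvd_hp hf ha hfm hm0 with ⟨b₁, hE⟩ | ⟨n, t, lb, hokt, hE⟩ <;>
      rcases dvd_hp hg hb hgm hm0 with ⟨b₂, hE'⟩ | ⟨n', t', lb', hokt', hE'⟩ <;>
      rw [hE] at hE'
    · injection hE' with h1 h2
    · exact absurd hE' (by simp)
    · exact absurd hE' (by simp)
    · injection hE' with h1 h2
      have hne1 : canon A B ((i, n + (a : ℤ) * B i (nv t lb)) :: t) lb ≠ [] :=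
        canon_ne_nil A B (by simp) lb
      have e1 : nv (canon A B ((i, n + (a : ℤ) * B i (nv t lb)) :: t) lb) lb = i := by
        rw [nv_canon]; simp
      have e2 : nv (canon A B ((j, n' + (b : ℤ) * B j (nv t' lb')) :: t') lb') lb' = j := by
        rw [nv_canon]; simp
      have hne2 : canon A B ((j, n' + (b : ℤ) * B j (nv t' lb')) :: t') lb' ≠ [] :=
        canon_ne_nil A B (by simp) lb'
      rw [← e1, ← e2, h1, nv_default hne2 lb lb']
  subst hij
  have hmax : 1 ≤ max a b := le_trans ha (le_max_left a b)
  have hNm : NF A B (KatQ ι A B ((FreeMonoid.of (Letter.h i)) ^ (max a b)))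
      = S.hp i (max a b) := by rw [NF_mk]; exact hpow_one i _ hmax
  refine ⟨KatQ ι A B ((FreeMonoid.of (Letter.h i)) ^ (max a b)), ?_, ?_, ?_, ?_⟩
  · intro hc
    rw [hc, NF_zeroM] at hNm
    exact nomatch hNm
  · have hfq : f = KatQ ι A B ((FreeMonoid.of (Letter.h i)) ^ a) := by
      rw [← sM_NF (A := A) (B := B) f, hf, hpq]
    exact ⟨KatQ ι A B ((FreeMonoid.of (Letter.h i)) ^ (max a b - a)), by
      rw [hfq, ← map_mul, ← pow_add, Nat.add_sub_cancel' (le_max_left a b)]⟩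
  · have hgq : g = KatQ ι A B ((FreeMonoid.of (Letter.h i)) ^ b) := by
      rw [← sM_NF (A := A) (B := B) g, hg, hpq]
    exact ⟨KatQ ι A B ((FreeMonoid.of (Letter.h i)) ^ (max a b - b)), by
      rw [hgq, ← map_mul, ← pow_add, Nat.add_sub_cancel' (le_max_right a b)]⟩
  · intro h₁ hz hfd hgd
    rcases dvd_hp hf ha hfd hz with ⟨b₁, hH⟩ | ⟨n, t, lb, hokt, hH⟩
    · rcases dvd_hp hg hb hgd hz with ⟨b₂, hH'⟩ | ⟨n', t', lb', hokt', hH'⟩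
      · rw [hH] at hH'
        injection hH' with h1
        have hle : max a b ≤ a + b₁ := by omega
        have hh1q : h₁ = KatQ ι A B ((FreeMonoid.of (Letter.h i)) ^ (a + b₁)) := by
          rw [← sM_NF (A := A) (B := B) h₁, hH, hpq]
        exact ⟨KatQ ι A B ((FreeMonoid.of (Letter.h i)) ^ (a + b₁ - max a b)), by
          rw [hh1q, ← map_mul, ← pow_add, Nat.add_sub_cancel' hle]⟩
      · rw [hH] at hH'
        exact absurd hH' (by simp)
    · have hch : chain A ((i, n + (a : ℤ) * B i (nv t lb)) :: t) lb :=
        chain_sethead hokt.2.1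
      obtain ⟨c₂, t₂, hsh⟩ := canon_cons_shape A B i (n + (a : ℤ) * B i (nv t lb)) t lb
      have hok2 : ok A ((i, c₂) :: t₂) lb := hsh ▸ ok_canon A B (by simp) hch
      rw [hsh] at hH
      exact hp_dvd_gw hNm hok2 hH

lemma case_gw_eq {f g m₀ : KatM ι A B} {es es' : List (ι × ℤ)} {la la' : ι}
    (hf : NF A B f = S.gw es la) (hok : ok A es la)
    (hg : NF A B g = S.gw es' la') (hokg : ok A es' la')
    (hlen : es.length = es'.length)
    (hm0 : m₀ ≠ zeroM ι A B) (hfm : f ∣ m₀) (hgm : g ∣ m₀) :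
    ∃ m : KatM ι A B, m ≠ zeroM ι A B ∧ f ∣ m ∧ g ∣ m ∧
      ∀ h : KatM ι A B, h ≠ zeroM ι A B → f ∣ h → g ∣ h → m ∣ h := by
  have hp1 := lfst_eq_getLast es hok.1 la
  have hq1 := lfst_eq_getLast es' hokg.1 la'
  -- extraction
  obtain ⟨hDL, hla, hFST, hdvdK⟩ :
      es.dropLast = es'.dropLast ∧ la = la' ∧ (es.getLast hok.1).1 = (es'.getLast hokg.1).1 ∧
        (A (es.getLast hok.1).1 la : ℤ) ∣ ((es'.getLast hokg.1).2 - (es.getLast hok.1).2) := by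
    rcases dvd_gw hf hok hfm hm0 with ⟨b, hE⟩ | ⟨ds, dl, hokd, hnvd, hE⟩ <;>
      rcases dvd_gw hg hokg hgm hm0 with ⟨b', hE'⟩ | ⟨ds', dl', hokd', hnvd', hE'⟩
    · rw [hE] at hE'
      injection hE' with h1 h2
      rw [bumpLast_eq es hok.1, bumpLast_eq es' hokg.1] at h1
      obtain ⟨hd, hsg⟩ := List.append_inj h1 (by
        rw [List.length_dropLast, List.length_dropLast]; omega)
      injection hsg with hpair
      have hp2 := congrArg Prod.fst hpair
      have hp3 := congrArg Prod.snd hpair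
      simp only at hp2 hp3
      subst h2
      refine ⟨hd, rfl, hp2, ⟨(b : ℤ) - (b' : ℤ), ?_⟩⟩
      rw [hp1] at hp3
      rw [lfst_eq_getLast es' hokg.1 la, ← hp2] at hp3
      linear_combination (-1 : ℤ) * hp3
    · exfalso
      obtain ⟨d', Dt', hceq', _, _⟩ := F2_struct (B := B) hokg hokd' hnvd'
      rw [hceq'] at hE'
      rw [hE] at hE'
      injection hE' with h1 h2
      have hl := congrArg List.length h1
      rw [bumpLast_length, List.length_append, List.length_dropLast] at hl
      simp at hl
      omega
    · exfalso
      obtain ⟨d, Dt, hceq, _, _⟩ := F2_struct (B := B) hok hokd hnvd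
      rw [hceq] at hE
      rw [hE] at hE'
      injection hE' with h1 h2
      have hl := congrArg List.length h1
      rw [bumpLast_length, List.length_append, List.length_dropLast] at hl
      simp at hl
      omega
    · obtain ⟨d, Dt, hceq, _, _⟩ := F2_struct (B := B) hok hokd hnvd
      obtain ⟨d', Dt', hceq', _, _⟩ := F2_struct (B := B) hokg hokd' hnvd'
      rw [hceq] at hE
      rw [hceq'] at hE'
      rw [hE] at hE'
      injection hE' with h1 h2
      obtain ⟨hd, hsg⟩ := List.append_inj h1 (by
        rw [List.length_dropLast, List.length_dropLast]; omega)
      injection hsg with hpair htail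
      have hp2 := congrArg Prod.fst hpair
      have hp3 := congrArg Prod.snd hpair
      simp only at hp2 hp3
      injection htail with hpair2 _
      have hla : la = la' := congrArg Prod.fst hpair2
      subst hla
      refine ⟨hd, rfl, hp2, ?_⟩
      rw [← hp2] at hp3
      exact dvd_sub_of_emod_eq hp3.symm
  subst hla
  have hKnat : 1 ≤ A (es.getLast hok.1).1 la := chain_last es hok.1 la hok.2.1
  have hK1 : (1 : ℤ) ≤ (A (es.getLast hok.1).1 la : ℤ) := by exact_mod_cast hKnat
  have hes' : es' = bumpLast ((es'.getLast hokg.1).2 - (es.getLast hok.1).2) es := by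
    rw [bumpLast_eq es hok.1]
    conv_lhs => rw [← List.dropLast_append_getLast hokg.1]
    rw [← hDL]
    congr 1
    have : es'.getLast hokg.1 = ((es'.getLast hokg.1).1, (es'.getLast hokg.1).2) := rfl
    rw [this, ← hFST]
    congr 1
    ring
  have hwp : (A (es.getLast hok.1).1 la : ℤ) ∣
      (max (es.getLast hok.1).2 (es'.getLast hokg.1).2 - (es.getLast hok.1).2)
      ∧ 0 ≤ max (es.getLast hok.1).2 (es'.getLast hokg.1).2 - (es.getLast hok.1).2 := by
    rcases le_total (es.getLast hok.1).2 (es'.getLast hokg.1).2 with hle | hle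
    · rw [max_eq_right hle]
      exact ⟨hdvdK, by omega⟩
    · rw [max_eq_left hle]
      exact ⟨by simp, by omega⟩
  have hwq : (A (es.getLast hok.1).1 la : ℤ) ∣
      (max (es.getLast hok.1).2 (es'.getLast hokg.1).2 - (es'.getLast hokg.1).2)
      ∧ 0 ≤ max (es.getLast hok.1).2 (es'.getLast hokg.1).2 - (es'.getLast hokg.1).2 := by
    rcases le_total (es.getLast hok.1).2 (es'.getLast hokg.1).2 with hle | hle
    · rw [max_eq_right hle]
      exact ⟨by simp, by omega⟩
    · rw [max_eq_left hle]
      exact ⟨(dvd_sub_comm).mp hdvdK, by omega⟩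
  have hgetnat : ∀ (z : ℤ), (A (es.getLast hok.1).1 la : ℤ) ∣ z → 0 ≤ z →
      ∃ b : ℕ, (b : ℤ) * (A (es.getLast hok.1).1 la : ℤ) = z := by
    intro z hdz hz0
    obtain ⟨c, hc⟩ := hdz
    refine ⟨c.toNat, ?_⟩
    have hc0 : 0 ≤ c := by
      by_contra hcn
      push_neg at hcn
      nlinarith
    rw [Int.toNat_of_nonneg hc0, hc]
    ring
  obtain ⟨b₀, hb₀⟩ := hgetnat _ hwp.1 hwp.2
  obtain ⟨b₁, hb₁⟩ := hgetnat _ hwq.1 hwq.2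
  have hokM : ok A (bumpLast (max (es.getLast hok.1).2 (es'.getLast hokg.1).2
      - (es.getLast hok.1).2) es) la := ok_bumpLast _ hok
  have hNM : NF A B (sM A B (S.gw (bumpLast (max (es.getLast hok.1).2 (es'.getLast hokg.1).2
        - (es.getLast hok.1).2) es) la))
      = S.gw (bumpLast (max (es.getLast hok.1).2 (es'.getLast hokg.1).2
        - (es.getLast hok.1).2) es) la := NF_sM _ hokM
  refine ⟨sM A B (S.gw (bumpLast (max (es.getLast hok.1).2 (es'.getLast hokg.1).2
      - (es.getLast hok.1).2) es) la), ?_, ?_, ?_, ?_⟩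
  · intro hc
    rw [hc, NF_zeroM] at hNM
    exact nomatch hNM
  · refine dvd_of_NF_bumpLast hf hok b₀ ?_
    rw [hNM, hp1, hb₀]
  · refine dvd_of_NF_bumpLast hg hokg b₁ ?_
    have hlist : bumpLast (max (es.getLast hok.1).2 (es'.getLast hokg.1).2
          - (es'.getLast hokg.1).2) es'
        = bumpLast (max (es.getLast hok.1).2 (es'.getLast hokg.1).2
          - (es.getLast hok.1).2) es := by
      rw [bumpLast_eq es' hokg.1, bumpLast_eq es hok.1, ← hDL, ← hFST]
      congr 2
      ring
    rw [hNM, hq1, ← hFST, hb₁, hlist]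
  · intro h₁ hz hfd hgd
    rcases dvd_gw hf hok hfd hz with ⟨c, hH⟩ | ⟨ds, dl, hokd, hnvd, hH⟩
    · rcases dvd_gw hg hokg hgd hz with ⟨c', hH'⟩ | ⟨ds', dl', hokd', hnvd', hH'⟩
      · rw [hH] at hH'
        injection hH' with h1 _
        rw [bumpLast_eq es hok.1, bumpLast_eq es' hokg.1] at h1
        obtain ⟨-, hsg⟩ := List.append_inj h1 (by
          rw [List.length_dropLast, List.length_dropLast]; omega)
        injection hsg with hpair _
        have hsnd := congrArg Prod.snd hpair
        simp only at hsnd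
        rw [hp1, hq1, ← hFST] at hsnd
        have hcK : (0 : ℤ) ≤ (c : ℤ) * (A (es.getLast hok.1).1 la : ℤ) := by positivity
        have hcK' : (0 : ℤ) ≤ (c' : ℤ) * (A (es.getLast hok.1).1 la : ℤ) := by positivity
        have hd2 : (A (es.getLast hok.1).1 la : ℤ) ∣
            ((es.getLast hok.1).2 + (c : ℤ) * (A (es.getLast hok.1).1 la : ℤ)
              - max (es.getLast hok.1).2 (es'.getLast hokg.1).2) := by
          have h5 : (es.getLast hok.1).2 + (c : ℤ) * (A (es.getLast hok.1).1 la : ℤ)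
              - max (es.getLast hok.1).2 (es'.getLast hokg.1).2
              = (c : ℤ) * (A (es.getLast hok.1).1 la : ℤ)
                - (max (es.getLast hok.1).2 (es'.getLast hokg.1).2
                  - (es.getLast hok.1).2) := by ring
          rw [h5]
          exact dvd_sub (Dvd.intro_left _ rfl) hwp.1
        have h02 : 0 ≤ (es.getLast hok.1).2 + (c : ℤ) * (A (es.getLast hok.1).1 la : ℤ)
            - max (es.getLast hok.1).2 (es'.getLast hokg.1).2 := by
          have hmle : max (es.getLast hok.1).2 (es'.getLast hokg.1).2
              ≤ (es.getLast hok.1).2 + (c : ℤ) * (A (es.getLast hok.1).1 la : ℤ) :=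
            max_le (by linarith) (by linarith)
          linarith
        obtain ⟨b₂, hb₂⟩ := hgetnat _ hd2 h02
        refine dvd_of_NF_bumpLast hNM hokM b₂ ?_
        rw [hH, hp1]
        have hlfM : lfst (bumpLast (max (es.getLast hok.1).2 (es'.getLast hokg.1).2
            - (es.getLast hok.1).2) es) la = lfst es la :=
          lfst_congr (map_fst_bumpLast _ _) la
        rw [hlfM, hp1, hb₂, bumpLast_bumpLast,
          show max (es.getLast hok.1).2 (es'.getLast hokg.1).2 - (es.getLast hok.1).2
              + ((es.getLast hok.1).2 + (c : ℤ) * (A (es.getLast hok.1).1 la : ℤ)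
                - max (es.getLast hok.1).2 (es'.getLast hokg.1).2)
            = (c : ℤ) * (A (es.getLast hok.1).1 la : ℤ) by ring]
      · exfalso
        obtain ⟨d', Dt', hceq', _, _⟩ := F2_struct (B := B) hokg hokd' hnvd'
        rw [hceq'] at hH'
        rw [hH] at hH'
        injection hH' with h1 _
        have hl := congrArg List.length h1
        rw [bumpLast_length, List.length_append, List.length_dropLast] at hl
        simp at hl
        omega
    · obtain ⟨d, Dt, hceq, hchD, hrngD⟩ := F2_struct (B := B) hok hokd hnvd
      rw [hceq] at hH
      refine gw_dvd_master hNM hokM hchD hrngD ?_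
      rw [hH]
      have hMd : (bumpLast (max (es.getLast hok.1).2 (es'.getLast hokg.1).2
          - (es.getLast hok.1).2) es).dropLast = es.dropLast := dropLast_bumpLast hok.1 _
      have hMg := getLast_bumpLast hok.1 (max (es.getLast hok.1).2 (es'.getLast hokg.1).2
          - (es.getLast hok.1).2) (bumpLast_ne_nil hok.1 _)
      rw [hMd, hMg]
      have hmod : ((es.getLast hok.1).2 + (max (es.getLast hok.1).2 (es'.getLast hokg.1).2
            - (es.getLast hok.1).2)) % (A (es.getLast hok.1).1 la : ℤ)
          = (es.getLast hok.1).2 % (A (es.getLast hok.1).1 la : ℤ) := by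
        rw [← hb₀, show (es.getLast hok.1).2 + (b₀ : ℤ) * (A (es.getLast hok.1).1 la : ℤ)
            = (es.getLast hok.1).2
              + (A (es.getLast hok.1).1 la : ℤ) * (b₀ : ℤ) by ring,
          Int.add_mul_emod_self_left]
      rw [hmod]


end K0

/-- Existence and uniqueness of least common multiples in `Λ_{A,B}`: any two intersecting
elements `f, g ∉ {0, 1}` of `M` admit a unique least common multiple. -/
theorem lcm_exists_unique (ι : Type) [Countable ι] [Nonempty ι]
    (A : ι → ι → ℕ) (B : ι → ι → ℤ)
    (hfin : ∀ i, {j | 1 ≤ A i j}.Finite) (hrow : ∀ i, ∃ j, 1 ≤ A i j)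
    (hB0 : ∀ i j, A i j = 0 → B i j = 0)
    (f g : KatM ι A B)
    (hf0 : f ≠ zeroM ι A B) (hf1 : f ≠ 1)
    (hg0 : g ≠ zeroM ι A B) (hg1 : g ≠ 1)
    (hcap : ∃ m : KatM ι A B, m ≠ zeroM ι A B ∧ f ∣ m ∧ g ∣ m) :
    ∃! m : KatM ι A B, m ≠ zeroM ι A B ∧ f ∣ m ∧ g ∣ m ∧
      ∀ h : KatM ι A B, h ≠ zeroM ι A B → f ∣ h → g ∣ h → m ∣ h := by
  classical
  obtain ⟨m₀, hm0, hfm, hgm⟩ := hcap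
  have hex : ∃ m : KatM ι A B, m ≠ zeroM ι A B ∧ f ∣ m ∧ g ∣ m ∧
      ∀ h : KatM ι A B, h ≠ zeroM ι A B → f ∣ h → g ∣ h → m ∣ h := by
    have hGf := K0.Good_NF (A := A) (B := B) f
    have hGg := K0.Good_NF (A := A) (B := B) g
    cases hNf : K0.NF A B f with
    | bot => exact absurd (K0.NF_eq_bot.mp hNf) hf0
    | one => exact absurd (K0.NF_inj (by rw [hNf, K0.NF_one])) hf1
    | hp i a =>
      have ha : 1 ≤ a := by rw [hNf] at hGf; exact hGf
      cases hNg : K0.NF A B g with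
      | bot => exact absurd (K0.NF_eq_bot.mp hNg) hg0
      | one => exact absurd (K0.NF_inj (by rw [hNg, K0.NF_one])) hg1
      | hp j b =>
        have hb : 1 ≤ b := by rw [hNg] at hGg; exact hGg
        exact K0.case_hp_hp hNf ha hNg hb hm0 hfm hgm
      | gw es' la' =>
        have hokg : K0.ok A es' la' := by rw [hNg] at hGg; exact hGg
        exact ⟨g, hg0, K0.hp_gw_dvd hNf ha hNg hokg hm0 hfm hgm, dvd_refl g,
          fun h hz hfh hgh => hgh⟩
    | gw es la =>
      have hok : K0.ok A es la := by rw [hNf] at hGf; exact hGf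
      cases hNg : K0.NF A B g with
      | bot => exact absurd (K0.NF_eq_bot.mp hNg) hg0
      | one => exact absurd (K0.NF_inj (by rw [hNg, K0.NF_one])) hg1
      | hp j b =>
        have hb : 1 ≤ b := by rw [hNg] at hGg; exact hGg
        exact ⟨f, hf0, dvd_refl f, K0.hp_gw_dvd hNg hb hNf hok hm0 hgm hfm,
          fun h hz hfh hgh => hfh⟩
      | gw es' la' =>
        have hokg : K0.ok A es' la' := by rw [hNg] at hGg; exact hGg
        rcases lt_trichotomy es.length es'.length with hlt | heq | hgt
        · exact ⟨g, hg0, K0.f_dvd_g_of_lt hNf hok hNg hokg hlt hm0 hfm hgm, dvd_refl g,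
            fun h hz hfh hgh => hgh⟩
        · exact K0.case_gw_eq hNf hok hNg hokg heq hm0 hfm hgm
        · exact ⟨f, hf0, dvd_refl f, K0.f_dvd_g_of_lt hNg hokg hNf hok hgt hm0 hgm hfm,
            fun h hz hfh hgh => hfh⟩
  obtain ⟨m, hmz, hfm', hgm', hmin⟩ := hex
  refine ⟨m, ⟨hmz, hfm', hgm', hmin⟩, ?_⟩
  rintro y ⟨hyz, hfy, hgy, hymin⟩
  exact K0.dvd_antisymm' hyz (hymin m hmz hfm' hgm') (hmin y hyz hfy hgy)
end

section
/- The semigroupoid Λ_{A,B} has no springs and is categorical (Lemma 3.13): (i) for every f ∈ Λ_{A,B}, the set Λ^f = {x ∈ Λ_{A,B} : f·x ≠ 0} is nonempty; (ii) for all f, g ∈ Λ_{A,B}, either Λ^f = Λ^g or Λ^f ∩ Λ^g = ∅. -/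
/-- Model monoid: 0, 1, and "matrix units" pairs. -/
inductive Rm (ι : Type) : Type where
  | zero : Rm ι
  | one : Rm ι
  | pair (i j : ι) : Rm ι

attribute [local instance] Classical.propDecidable

namespace Rm

noncomputable def mul' {ι : Type} : Rm ι → Rm ι → Rm ι
  | .zero, _ => .zero
  | _, .zero => .zero
  | .one, x => x
  | x, .one => x
  | .pair i j, .pair k l => if j = k then .pair i l else .zero

noncomputable instance (ι : Type) : Monoid (Rm ι) where
  mul := mul'
  one := .one
  one_mul a := by cases a <;> rfl
  mul_one a := by cases a <;> rfl
  mul_assoc a b c := by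
    show mul' (mul' a b) c = mul' a (mul' b c)
    cases a <;> cases b <;> cases c <;> simp only [mul'] <;>
      split_ifs <;> simp_all [mul']

@[simp] theorem pair_mul_pair {ι : Type} (i j k l : ι) :
    (pair i j : Rm ι) * pair k l = if j = k then pair i l else zero := rfl

@[simp] theorem zero_mul' {ι : Type} (x : Rm ι) : (zero : Rm ι) * x = zero := by
  cases x <;> rfl
@[simp] theorem mul_zero' {ι : Type} (x : Rm ι) : x * (zero : Rm ι) = zero := by
  cases x <;> rfl
@[simp] theorem one_def {ι : Type} : (1 : Rm ι) = one := rfl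
@[simp] theorem pair_mul_one {ι : Type} (i j : ι) : (pair i j : Rm ι) * one = pair i j := rfl
@[simp] theorem one_mul' {ι : Type} (x : Rm ι) : (one : Rm ι) * x = x := by
  cases x <;> rfl

theorem pair_mul_ne_one {ι : Type} (i j : ι) (x : Rm ι) : (pair i j) * x ≠ 1 := by
  cases x with
  | zero => simp
  | one => simp
  | pair k l =>
    rw [pair_mul_pair]
    split_ifs <;> simp

end Rm

section Model
variable (ι : Type) (A : ι → ι → ℕ) (B : ι → ι → ℤ)

/-- Image of a letter in the model. -/
def img : Letter ι A → Rm ι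
  | .z => .zero
  | .h i => .pair i i
  | .g i j _ _ => .pair i j

noncomputable def homF : FreeMonoid (Letter ι A) →* Rm ι := FreeMonoid.lift (img ι A)

theorem katcon_le : KatCon ι A B ≤ Con.ker (homF ι A) := by
  apply Con.conGen_le.mpr
  intro x y hxy
  rw [Con.ker_rel]
  cases hxy <;> simp_all [homF, img]

noncomputable def phi : KatM ι A B →* Rm ι := (KatCon ι A B).lift (homF ι A) (katcon_le ι A B)

@[simp] theorem phi_katq (w : FreeMonoid (Letter ι A)) :
    phi ι A B (KatQ ι A B w) = homF ι A w := Con.lift_mk' _ w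

theorem katq_rel {x y : FreeMonoid (Letter ι A)} (h : KatRel ι A B x y) :
    KatQ ι A B x = KatQ ι A B y := by
  show ((x : FreeMonoid (Letter ι A)) : (KatCon ι A B).Quotient) = (y : (KatCon ι A B).Quotient)
  exact (Con.eq _).mpr (ConGen.Rel.of _ _ h)

/-- zeroM is left absorbing. -/
theorem zero_mul_katq (w : FreeMonoid (Letter ι A)) :
    zeroM ι A B * KatQ ι A B w = zeroM ι A B := by
  induction w using FreeMonoid.recOn with
  | one => simp [mul_one]
  | of_mul a t ih =>
    rw [map_mul, ← mul_assoc, show zeroM ι A B * KatQ ι A B (FreeMonoid.of a) = zeroM ι A B from by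
      rw [zeroM, ← map_mul]; exact katq_rel ι A B (KatRel.zl a)]
    exact ih

theorem katq_mul_zero (w : FreeMonoid (Letter ι A)) :
    KatQ ι A B w * zeroM ι A B = zeroM ι A B := by
  induction w using FreeMonoid.recOn with
  | one => simp [one_mul]
  | of_mul a t ih =>
    rw [map_mul, mul_assoc, ih, zeroM, ← map_mul]
    exact katq_rel ι A B (KatRel.zr a)

/-- mismatched letters multiply to zero. -/
theorem mismatch {a b : Letter ι A} {i j k l : ι}
    (ha : img ι A a = .pair i j) (hb : img ι A b = .pair k l) (hne : j ≠ k) :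
    KatQ ι A B (FreeMonoid.of a * FreeMonoid.of b) = zeroM ι A B := by
  cases a with
  | z => cases ha
  | h i' =>
    cases b with
    | z => cases hb
    | h k' =>
      cases ha; cases hb
      exact katq_rel ι A B (KatRel.hh _ _ hne)
    | g k' l' hkl m =>
      cases ha; cases hb
      exact katq_rel ι A B (KatRel.hg' _ _ _ hkl m hne)
  | g i' j' hij n =>
    cases b with
    | z => cases hb
    | h k' =>
      cases ha; cases hb
      exact katq_rel ι A B (KatRel.gh' _ _ _ hij n hne)
    | g k' l' hkl m =>
      cases ha; cases hb
      exact katq_rel ι A B (KatRel.gg _ _ _ _ hij hkl n m hne)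

/-- if homF w has first-component structure: homF (of b * t) ≠ 0 means it's pair with source = source of b. -/
theorem homF_cons_src {b : Letter ι A} {k l : ι} (hb : img ι A b = .pair k l)
    (t : FreeMonoid (Letter ι A)) (hne : homF ι A (FreeMonoid.of b * t) ≠ .zero) :
    ∃ m, homF ι A (FreeMonoid.of b * t) = .pair k m := by
  rw [map_mul, homF, FreeMonoid.lift_eval_of, hb] at hne ⊢
  rcases hX : (FreeMonoid.lift (img ι A)) t with _ | _ | ⟨p, q⟩ <;> rw [hX] at hne
  · simp at hne
  · exact ⟨l, by simp⟩
  · rw [Rm.pair_mul_pair] at hne ⊢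
    split_ifs at hne ⊢ with h
    · exact ⟨q, rfl⟩
    · exact absurd rfl hne

/-- Key: zero detection. -/
theorem homF_zero (w : FreeMonoid (Letter ι A)) (h : homF ι A w = .zero) :
    KatQ ι A B w = zeroM ι A B := by
  induction w using FreeMonoid.recOn with
  | one => simp at h
  | of_mul a t ih =>
    rcases ha : img ι A a with _ | _ | ⟨i, j⟩
    · -- a = z
      have haz : a = Letter.z := by cases a <;> simp [img] at ha ⊢
      subst haz
      rw [map_mul]
      show zeroM ι A B * _ = _
      exact zero_mul_katq ι A B t
    · exact absurd ha (by cases a <;> simp [img])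
    · by_cases ht : homF ι A t = .zero
      · rw [map_mul, ih ht]; exact katq_mul_zero ι A B _
      · -- t nonzero; must be nonempty with source mismatching j
        induction t using FreeMonoid.recOn with
        | one =>
          rw [map_mul, map_one, mul_one, homF, FreeMonoid.lift_eval_of, ha] at h
          cases h
        | of_mul b t' _ =>
          rcases hb : img ι A b with _ | _ | ⟨k, l⟩
          · have hbz : b = Letter.z := by cases b <;> simp [img] at hb ⊢
            subst hbz
            rw [map_mul, map_mul, ← mul_assoc]
            have : KatQ ι A B (FreeMonoid.of a) * zeroM ι A B = zeroM ι A B :=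
              katq_mul_zero ι A B _
            rw [show KatQ ι A B (FreeMonoid.of a) * KatQ ι A B (FreeMonoid.of Letter.z)
                = zeroM ι A B from by rw [← map_mul]; exact katq_rel ι A B (KatRel.zr a)]
            exact zero_mul_katq ι A B t'
          · exact absurd hb (by cases b <;> simp [img])
          · obtain ⟨m, hm⟩ := homF_cons_src ι A hb t' ht
            have hjk : j ≠ k := by
              intro hjk
              rw [map_mul, homF, FreeMonoid.lift_eval_of, ha, ← homF, hm,
                Rm.pair_mul_pair, if_pos hjk] at h
              cases h
            rw [map_mul, map_mul, ← mul_assoc, ← map_mul,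
              mismatch ι A B ha hb hjk]
            exact zero_mul_katq ι A B t'

theorem phi_zero : phi ι A B (zeroM ι A B) = .zero := by
  rw [zeroM, phi_katq]; rfl

theorem katq_surj (f : KatM ι A B) : ∃ w, KatQ ι A B w = f := Con.mk'_surjective f

theorem phi_zero_iff (f : KatM ι A B) : phi ι A B f = .zero ↔ f = zeroM ι A B := by
  constructor
  · intro h
    obtain ⟨w, rfl⟩ := katq_surj ι A B f
    exact homF_zero ι A B w (by rwa [phi_katq] at h)
  · rintro rfl; exact phi_zero ι A B

theorem phi_one_iff (f : KatM ι A B) : phi ι A B f = 1 ↔ f = 1 := by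
  constructor
  · intro h
    obtain ⟨w, rfl⟩ := katq_surj ι A B f
    rw [phi_katq] at h
    induction w using FreeMonoid.recOn with
    | one => rfl
    | of_mul a t _ =>
      exfalso
      rcases ha : img ι A a with _ | _ | ⟨i, j⟩
      · rw [map_mul, homF, FreeMonoid.lift_eval_of, ha] at h
        simp at h
      · exact absurd ha (by cases a <;> simp [img])
      · rw [map_mul, homF, FreeMonoid.lift_eval_of, ha, ← homF] at h
        exact Rm.pair_mul_ne_one i j _ h
  · rintro rfl; exact map_one _

theorem phi_pair (f : KatM ι A B) (h0 : f ≠ zeroM ι A B) (h1 : f ≠ 1) :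
    ∃ i j, phi ι A B f = .pair i j := by
  rcases hf : phi ι A B f with _ | _ | ⟨i, j⟩
  · exact absurd ((phi_zero_iff ι A B f).1 hf) h0
  · exact absurd ((phi_one_iff ι A B f).1 hf) h1
  · exact ⟨i, j, rfl⟩

end Model

/-- The semigroupoid `Λ_{A,B}` has no springs and is categorical: for every
`f ∈ Λ_{A,B}` the set `Λ^f = {x ∈ Λ_{A,B} : f·x ≠ 0}` is nonempty, and for all
`f, g ∈ Λ_{A,B}` the sets `Λ^f` and `Λ^g` are either equal or disjoint. -/
theorem no_springs_and_categorical (ι : Type) [Countable ι] [Nonempty ι]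
    (A : ι → ι → ℕ) (B : ι → ι → ℤ)
    (hfin : ∀ i, {j | 1 ≤ A i j}.Finite) (hrow : ∀ i, ∃ j, 1 ≤ A i j)
    (hB0 : ∀ i j, A i j = 0 → B i j = 0) :
    (∀ f : KatM ι A B, f ≠ zeroM ι A B → f ≠ 1 →
      ∃ x : KatM ι A B, x ≠ zeroM ι A B ∧ x ≠ 1 ∧ f * x ≠ zeroM ι A B) ∧
    (∀ f g : KatM ι A B, f ≠ zeroM ι A B → f ≠ 1 → g ≠ zeroM ι A B → g ≠ 1 →
      {x : KatM ι A B | x ≠ zeroM ι A B ∧ x ≠ 1 ∧ f * x ≠ zeroM ι A B} =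
        {x : KatM ι A B | x ≠ zeroM ι A B ∧ x ≠ 1 ∧ g * x ≠ zeroM ι A B} ∨
      {x : KatM ι A B | x ≠ zeroM ι A B ∧ x ≠ 1 ∧ f * x ≠ zeroM ι A B} ∩
        {x : KatM ι A B | x ≠ zeroM ι A B ∧ x ≠ 1 ∧ g * x ≠ zeroM ι A B} = ∅) := by
  have hz := phi_zero_iff ι A B
  have ho := phi_one_iff ι A B
  constructor
  · intro f hf0 hf1
    obtain ⟨i, j, hf⟩ := phi_pair ι A B f hf0 hf1
    refine ⟨KatQ ι A B (FreeMonoid.of (Letter.h j)), ?_, ?_, ?_⟩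
    · rw [Ne, ← hz, phi_katq]
      show Rm.pair j j ≠ Rm.zero
      simp
    · rw [Ne, ← ho, phi_katq]
      show Rm.pair j j ≠ 1
      simp [Rm.one_def]
    · rw [Ne, ← hz, map_mul, hf, phi_katq]
      show Rm.pair i j * Rm.pair j j ≠ Rm.zero
      simp
  · intro f g hf0 hf1 hg0 hg1
    obtain ⟨i, j, hf⟩ := phi_pair ι A B f hf0 hf1
    obtain ⟨i', j', hg⟩ := phi_pair ι A B g hg0 hg1
    have key : ∀ (p q : ι) (h : KatM ι A B), phi ι A B h = .pair p q →
        ∀ x : KatM ι A B, x ≠ zeroM ι A B → x ≠ 1 →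
        (h * x ≠ zeroM ι A B ↔ ∃ l, phi ι A B x = .pair q l) := by
      intro p q h hh x hx0 hx1
      obtain ⟨k, l, hx⟩ := phi_pair ι A B x hx0 hx1
      rw [Ne, ← hz, map_mul, hh, hx, Rm.pair_mul_pair]
      constructor
      · intro hne
        have hqk : q = k := by
          by_contra hqk
          rw [if_neg hqk] at hne
          exact hne rfl
        exact ⟨l, by rw [hqk]⟩
      · rintro ⟨l', hl'⟩
        injection hl' with h1 h2
        rw [if_pos h1.symm]
        simp
    by_cases hjj : j = j'
    · left
      ext x
      simp only [Set.mem_setOf_eq]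
      constructor
      · rintro ⟨hx0, hx1, hfx⟩
        exact ⟨hx0, hx1, (key i' j' g hg x hx0 hx1).2
          (hjj ▸ (key i j f hf x hx0 hx1).1 hfx)⟩
      · rintro ⟨hx0, hx1, hgx⟩
        exact ⟨hx0, hx1, (key i j f hf x hx0 hx1).2
          (hjj ▸ (key i' j' g hg x hx0 hx1).1 hgx)⟩
    · right
      ext x
      simp only [Set.mem_inter_iff, Set.mem_setOf_eq, Set.mem_empty_iff_false, iff_false]
      rintro ⟨⟨hx0, hx1, hfx⟩, ⟨_, _, hgx⟩⟩
      obtain ⟨l, hl⟩ := (key i j f hf x hx0 hx1).1 hfx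
      obtain ⟨l', hl'⟩ := (key i' j' g hg x hx0 hx1).1 hgx
      rw [hl] at hl'
      cases hl'
      exact hjj rfl
end

section
/- Small invariant sets (Lemma 6.4): if U ⊆ X_A is a nonempty open invariant subset, then there exists an edge e of E_A such that Sat({x ∈ X_A : source(x_0) = target(e)}) ⊆ U. -/
/-- An edge of the graph `E_A`: a triple `(i, j, n)` with `1 ≤ A i j` and `1 ≤ n ≤ A i j`,
with source `i` and target `j`. -/
structure Edge (ι : Type) (A : ι → ι → ℕ) : Type where
  src : ι
  tgt : ι
  lab : ℕ
  pos : 1 ≤ A src tgt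
  lab_pos : 1 ≤ lab
  lab_le : lab ≤ A src tgt

/-- The edge set carries the discrete topology. -/
instance (ι : Type) (A : ι → ι → ℕ) : TopologicalSpace (Edge ι A) := ⊥

/-- The infinite path space `X_A`, a subspace of the product `(Edge)^ℕ`. -/
abbrev PathSpace (ι : Type) (A : ι → ι → ℕ) : Type :=
  {x : ℕ → Edge ι A // ∀ k, (x k).tgt = (x (k + 1)).src}

/-- A list of edges is a finite path when consecutive edges are composable. -/
def IsPathList {ι : Type} {A : ι → ι → ℕ} (p : List (Edge ι A)) : Prop :=
  p.Chain' fun e f => e.tgt = f.src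

/-- Source of a nonempty finite path. -/
def pSrc {ι : Type} {A : ι → ι → ℕ} (p : List (Edge ι A)) (h : p ≠ []) : ι :=
  (p.head h).src

/-- Target of a nonempty finite path. -/
def pTgt {ι : Type} {A : ι → ι → ℕ} (p : List (Edge ι A)) (h : p ≠ []) : ι :=
  (p.getLast h).tgt

/-- Tail equivalence: `x ~ y` iff some shift of `x` equals some shift of `y`. -/
def TailEq {ι : Type} {A : ι → ι → ℕ} (x y : PathSpace ι A) : Prop :=
  ∃ p q : ℕ, ∀ k, x.1 (k + p) = y.1 (k + q)

/-- The saturation of a set under tail equivalence. -/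
def Sat {ι : Type} {A : ι → ι → ℕ} (C : Set (PathSpace ι A)) : Set (PathSpace ι A) :=
  {y | ∃ x ∈ C, TailEq y x}

/-- A set is invariant when it is closed under tail equivalence. -/
def Invariant {ι : Type} {A : ι → ι → ℕ} (U : Set (PathSpace ι A)) : Prop :=
  ∀ x ∈ U, ∀ y, TailEq y x → y ∈ U

/-- The cylinder set over a finite path `μ`: infinite paths beginning with `μ`. -/
def Cyl {ι : Type} {A : ι → ι → ℕ} (μ : List (Edge ι A)) : Set (PathSpace ι A) :=
  {x | ∀ t (ht : t < μ.length), x.1 t = μ.get ⟨t, ht⟩}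

/-- Prepending a finite path to an infinite sequence of edges. -/
def prepend {ι : Type} {A : ι → ι → ℕ} (μ : List (Edge ι A)) (x : ℕ → Edge ι A) :
    ℕ → Edge ι A := fun k =>
  if h : k < μ.length then μ.get ⟨k, h⟩ else x (k - μ.length)

/-- The shift `σ^p` on sequences of edges. -/
def shiftSeq {ι : Type} {A : ι → ι → ℕ} (p : ℕ) (x : ℕ → Edge ι A) : ℕ → Edge ι A :=
  fun k => x (k + p)

/-- The periodic sequence `K^∞` obtained by repeating a nonempty list `K`. -/
def repSeq {ι : Type} {A : ι → ι → ℕ} (K : List (Edge ι A)) (h : K ≠ []) :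
    ℕ → Edge ι A := fun k =>
  K.get ⟨k % K.length, Nat.mod_lt k (List.length_pos_iff.mpr h)⟩

/-- A cycle: a nonempty finite path whose target equals its source. -/
def IsCycle {ι : Type} {A : ι → ι → ℕ} (c : List (Edge ι A)) : Prop :=
  ∃ hc : c ≠ [], IsPathList c ∧ pTgt c hc = pSrc c hc

/-- A cycle (or any list of edges) has an exit when some edge `e` shares its source with an
edge of `c` but differs from it. -/
def HasExit {ι : Type} {A : ι → ι → ℕ} (c : List (Edge ι A)) : Prop :=
  ∃ (e : Edge ι A) (t : ℕ) (ht : t < c.length),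
    e.src = (c.get ⟨t, ht⟩).src ∧ e ≠ c.get ⟨t, ht⟩

/-- `Reaches ι A u v`: there is a (possibly trivial) finite path from `u` to `v` in `E_A`. -/
def Reaches (ι : Type) (A : ι → ι → ℕ) (u v : ι) : Prop :=
  u = v ∨ ∃ (p : List (Edge ι A)) (hp : p ≠ []), IsPathList p ∧ pSrc p hp = u ∧ pTgt p hp = v

/-- Small invariant sets: a nonempty open invariant subset of `X_A` contains the saturation
of the set of infinite paths starting at the target vertex of some edge. -/
theorem small_invariant_sets (ι : Type) [Countable ι] [Nonempty ι] (A : ι → ι → ℕ)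
    (hfin : ∀ i, {j | 1 ≤ A i j}.Finite) (hrow : ∀ i, ∃ j, 1 ≤ A i j)
    (U : Set (PathSpace ι A)) (hopen : IsOpen U) (hinv : Invariant U) (hne : U.Nonempty) :
    ∃ e : Edge ι A, Sat {x : PathSpace ι A | (x.1 0).src = e.tgt} ⊆ U := by
  obtain ⟨x, hx⟩ := hne
  have hnb : U ∈ nhds x := hopen.mem_nhds hx
  rw [nhds_induced] at hnb
  obtain ⟨s, hs, hsub⟩ := hnb
  rw [nhds_pi, Filter.mem_pi] at hs
  obtain ⟨I, hIfin, t, ht, hts⟩ := hs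
  obtain ⟨n, hn⟩ := hIfin.bddAbove
  set m := n + 1 with hm
  have hml : ∀ i ∈ I, i < m := fun i hi => Nat.lt_succ_of_le (hn hi)
  refine ⟨x.1 n, ?_⟩
  rintro y ⟨z, hz, p, q, hpq⟩
  set w : ℕ → Edge ι A := fun k => if k < m then x.1 k else z.1 (k - m) with hwdef
  have hw : ∀ k, (w k).tgt = (w (k + 1)).src := by
    intro k
    by_cases h1 : k + 1 < m
    · have h0 : k < m := Nat.lt_of_succ_lt h1
      simp only [w, if_pos h0, if_pos h1]
      exact x.2 k
    · by_cases h0 : k < m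
      · have hk : k = n := by omega
        subst hk
        have h2 : k + 1 - m = 0 := by omega
        simp only [w, if_pos h0, if_neg h1, h2]
        exact hz.symm
      · have h2 : k + 1 - m = (k - m) + 1 := by omega
        simp only [w, if_neg h0, if_neg h1, h2]
        exact z.2 (k - m)
  have hwU : (⟨w, hw⟩ : PathSpace ι A) ∈ U := by
    apply hsub
    apply hts
    intro i hi
    have h3 : w i = x.1 i := if_pos (hml i hi)
    show w i ∈ t i
    rw [h3]
    exact mem_of_mem_nhds (ht i)
  refine hinv _ hwU y ⟨p, q + m, fun k => ?_⟩
  have h1 : ¬ (k + (q + m) < m) := by omega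
  have h2 : k + (q + m) - m = k + q := by omega
  show y.1 (k + p) = w (k + (q + m))
  simp only [w, if_neg h1, h2]
  exact hpq k
end

section
/- Fixed points of the prefix-exchange maps (Lemma 7.6): let I and J be finite paths in E_A with I ≠ J, not both empty, and with target(I) = target(J) in case both are nonempty. If x ∈ X_A satisfies both that J is a prefix of x and that I·σ^{|J|}(x) = x, then one of I, J is a proper prefix of the other; writing the longer of the two as μ·K, where μ is the shorter one and K is a nonempty finite path, K is a cycle and x = μ·K^∞. In particular, at most one x ∈ X_A satisfies these two conditions. -/
/-- The fixed-point condition for the prefix-exchange partial map `x ↦ I·σ^{|J|}(x)` on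
`X_A`: `J` is a prefix of `x` and `I·σ^{|J|}(x) = x`. -/
def FixedBy {ι : Type} {A : ι → ι → ℕ} (I J : List (Edge ι A)) (x : PathSpace ι A) : Prop :=
  (∀ k (hk : k < J.length), x.1 k = J.get ⟨k, hk⟩) ∧
  prepend I (shiftSeq J.length x.1) = x.1

private lemma per_mod {α : Type} (x : ℕ → α) (L d : ℕ) (hd : 0 < d)
    (hper : ∀ j, L ≤ j → x (j + d) = x j) : ∀ t, x (L + t) = x (L + t % d) := by
  intro t
  induction t using Nat.strong_induction_on with
  | _ t ih =>
    rcases lt_or_ge t d with h | h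
    · rw [Nat.mod_eq_of_lt h]
    · have h1 : t - d < t := Nat.sub_lt (lt_of_lt_of_le hd h) hd
      have e : L + t = (L + (t - d)) + d := by omega
      rw [e, hper _ (by omega), ih (t - d) h1, Nat.mod_eq_sub_mod h]

private lemma key {ι : Type} {A : ι → ι → ℕ} (x : PathSpace ι A) (μ L : List (Edge ι A))
    (hlen : μ.length < L.length)
    (hμ : ∀ k (hk : k < μ.length), x.1 k = μ.get ⟨k, hk⟩)
    (hL : ∀ k (hk : k < L.length), x.1 k = L.get ⟨k, hk⟩)
    (hLpath : IsPathList L)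
    (hper : ∀ j, μ.length ≤ j → x.1 (j + (L.length - μ.length)) = x.1 j) :
    ∃ (K : List (Edge ι A)) (hK : K ≠ []),
      IsPathList K ∧ pTgt K hK = pSrc K hK ∧ L = μ ++ K ∧ x.1 = prepend μ (repSeq K hK) := by
  have hL' : ∀ k (hk : k < L.length), x.1 k = L[k] :=
    fun k hk => (hL k hk).trans (List.get_eq_getElem (l := L) (i := ⟨k, hk⟩))
  have hKlen : (L.drop μ.length).length = L.length - μ.length := by simp
  have hK : L.drop μ.length ≠ [] := by
    intro h
    rw [List.drop_eq_nil_iff] at h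
    omega
  have hKpos : 0 < (L.drop μ.length).length := by omega
  have hper' : ∀ j, μ.length ≤ j → x.1 (j + (L.drop μ.length).length) = x.1 j := by
    intro j hj; rw [hKlen]; exact hper j hj
  have exl : x.1 L.length = x.1 μ.length := by
    have := hper μ.length le_rfl
    rwa [show μ.length + (L.length - μ.length) = L.length by omega] at this
  refine ⟨L.drop μ.length, hK, List.IsChain.drop hLpath μ.length, ?_, ?_, ?_⟩
  · simp only [pTgt, pSrc]
    rw [List.getLast_eq_getElem, List.head_eq_getElem,
      List.getElem_drop, List.getElem_drop,
      ← hL' _ (by omega : μ.length + ((L.drop μ.length).length - 1) < L.length),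
      ← hL' _ (by omega : μ.length + 0 < L.length),
      show μ.length + ((L.drop μ.length).length - 1) = L.length - 1 by
        rw [List.length_drop]; omega,
      show μ.length + 0 = μ.length by omega, ← exl]
    have := x.2 (L.length - 1)
    rwa [show L.length - 1 + 1 = L.length by omega] at this
  · have hμeq : μ = L.take μ.length := by
      apply List.ext_get (by rw [List.length_take]; omega)
      intro k h1 h2
      rw [← hμ k h1, List.get_eq_getElem, List.getElem_take]
      exact hL' k (by omega)
    calc L = L.take μ.length ++ L.drop μ.length := (List.take_append_drop _ L).symm
    _ = μ ++ L.drop μ.length := by rw [← hμeq]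
  · funext k
    simp only [prepend]
    by_cases hks : k < μ.length
    · rw [dif_pos hks]; exact hμ k hks
    · rw [dif_neg hks]
      simp only [repSeq, List.get_eq_getElem, List.getElem_drop]
      have hmlt : (k - μ.length) % (L.drop μ.length).length < L.length - μ.length := by
        have := Nat.mod_lt (k - μ.length) hKpos
        omega
      conv_lhs => rw [show k = μ.length + (k - μ.length) by omega]
      rw [per_mod x.1 μ.length (L.drop μ.length).length hKpos hper' (k - μ.length)]
      exact hL' _ (by omega)

/-- Fixed points of the prefix-exchange maps: if `I ≠ J` are finite paths, not both empty,
with equal targets when both nonempty, and `x` satisfies the fixed-point condition, then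
one of `I, J` is a proper prefix of the other, the leftover `K` is a cycle, and
`x = μ·K^∞` where `μ` is the shorter of the two; moreover at most one such `x` exists. -/
theorem prefix_exchange_fixed_points (ι : Type) [Countable ι] [Nonempty ι]
    (A : ι → ι → ℕ)
    (hfin : ∀ i, {j | 1 ≤ A i j}.Finite) (hrow : ∀ i, ∃ j, 1 ≤ A i j)
    (I J : List (Edge ι A)) (hI : IsPathList I) (hJ : IsPathList J)
    (hne : I ≠ J) (hnboth : ¬(I = [] ∧ J = []))
    (htgt : ∀ (hI' : I ≠ []) (hJ' : J ≠ []), pTgt I hI' = pTgt J hJ') :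
    (∀ x : PathSpace ι A, FixedBy I J x →
      ∃ (K : List (Edge ι A)) (hK : K ≠ []),
        IsPathList K ∧ pTgt K hK = pSrc K hK ∧
        ((J = I ++ K ∧ x.1 = prepend I (repSeq K hK)) ∨
         (I = J ++ K ∧ x.1 = prepend J (repSeq K hK)))) ∧
    (∀ x y : PathSpace ι A, FixedBy I J x → FixedBy I J y → x = y) :=  by
  have main : ∀ x : PathSpace ι A, FixedBy I J x →
      ∃ (K : List (Edge ι A)) (hK : K ≠ []),
        IsPathList K ∧ pTgt K hK = pSrc K hK ∧
        ((J = I ++ K ∧ x.1 = prepend I (repSeq K hK)) ∨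
         (I = J ++ K ∧ x.1 = prepend J (repSeq K hK))) := by
    rintro x ⟨hxJ, hfix⟩
    have hA : ∀ k (hk : k < I.length), x.1 k = I.get ⟨k, hk⟩ := by
      intro k hk
      have h := congrFun hfix k
      simp only [prepend] at h
      rw [dif_pos hk] at h
      exact h.symm
    have hB : ∀ k, I.length ≤ k → x.1 k = x.1 (k - I.length + J.length) := by
      intro k hk
      have h := congrFun hfix k
      simp only [prepend, shiftSeq] at h
      rw [dif_neg (by omega)] at h
      exact h.symm
    rcases Nat.lt_trichotomy I.length J.length with hlt | heq | hgt
    · have hper : ∀ j, I.length ≤ j → x.1 (j + (J.length - I.length)) = x.1 j := by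
        intro j hj
        have h := hB j hj
        rw [show j - I.length + J.length = j + (J.length - I.length) by omega] at h
        exact h.symm
      obtain ⟨K, hK, h1, h2, h3, h4⟩ := key x I J hlt hA hxJ hJ hper
      exact ⟨K, hK, h1, h2, Or.inl ⟨h3, h4⟩⟩
    · exfalso
      apply hne
      apply List.ext_get heq
      intro k h1 h2
      rw [← hA k h1, hxJ k h2]
    · have hper : ∀ j, J.length ≤ j → x.1 (j + (I.length - J.length)) = x.1 j := by
        intro j hj
        have h := hB (j + (I.length - J.length)) (by omega)
        rwa [show j + (I.length - J.length) - I.length + J.length = j by omega] at h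
      obtain ⟨K, hK, h1, h2, h3, h4⟩ := key x J I hgt hxJ hA hI hper
      exact ⟨K, hK, h1, h2, Or.inr ⟨h3, h4⟩⟩
  refine ⟨main, ?_⟩
  intro x y hx hy
  obtain ⟨K, hK, _, _, hcx⟩ := main x hx
  obtain ⟨K', hK', _, _, hcy⟩ := main y hy
  apply Subtype.ext
  have hKp := List.length_pos_iff.mpr hK
  have hK'p := List.length_pos_iff.mpr hK'
  rcases hcx with ⟨h3, h4⟩ | ⟨h3, h4⟩ <;> rcases hcy with ⟨h3', h4'⟩ | ⟨h3', h4'⟩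
  · have hKK : K = K' := List.append_cancel_left (h3.symm.trans h3')
    subst hKK
    rw [h4, h4']
  · exfalso
    have l1 : J.length = I.length + K.length := by rw [h3]; simp
    have l2 : I.length = J.length + K'.length := by rw [h3']; simp
    omega
  · exfalso
    have l1 : I.length = J.length + K.length := by rw [h3]; simp
    have l2 : J.length = I.length + K'.length := by rw [h3']; simp
    omega
  · have hKK : K = K' := List.append_cancel_left (h3.symm.trans h3')
    subst hKK
    rw [h4, h4']
end

section
/- Topological freeness of the restricted action (Proposition 7.7): the following are equivalent: (1) E_A satisfies Condition (L) (every cycle has an exit); (2) for every pair of finite paths I ≠ J, not both empty, with target(I) = target(J) in case both are nonempty, the fixed-point set S_{I,J} = {x ∈ X_A : J is a prefix of x and I·σ^{|J|}(x) = x} has empty interior in X_A. -/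
/-- The fixed-point set `S_{I,J}` of the prefix-exchange partial map. -/
def FixedSet {ι : Type} {A : ι → ι → ℕ} (I J : List (Edge ι A)) : Set (PathSpace ι A) :=
  {x | (∀ k (hk : k < J.length), x.1 k = J.get ⟨k, hk⟩) ∧
        prepend I (shiftSeq J.length x.1) = x.1}

section Helpers

variable {ι : Type} {A : ι → ι → ℕ}

noncomputable def extEdge (A : ι → ι → ℕ) (hrow : ∀ i, ∃ j, 1 ≤ A i j) (i : ι) :
    Edge ι A :=
  ⟨i, (hrow i).choose, 1, (hrow i).choose_spec, le_refl 1, (hrow i).choose_spec⟩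

@[simp] lemma extEdge_src (hrow : ∀ i, ∃ j, 1 ≤ A i j) (i : ι) :
    (extEdge A hrow i).src = i := rfl

noncomputable def extSeq (A : ι → ι → ℕ) (hrow : ∀ i, ∃ j, 1 ≤ A i j) (i : ι) :
    ℕ → Edge ι A
  | 0 => extEdge A hrow i
  | k + 1 => extEdge A hrow (extSeq A hrow i k).tgt

lemma extSeq_chain (hrow : ∀ i, ∃ j, 1 ≤ A i j) (i : ι) (k : ℕ) :
    (extSeq A hrow i k).tgt = (extSeq A hrow i (k + 1)).src := rfl

@[simp] lemma extSeq_zero_src (hrow : ∀ i, ∃ j, 1 ≤ A i j) (i : ι) :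
    (extSeq A hrow i 0).src = i := rfl

lemma get_congr (c : List (Edge ι A)) {i i' : ℕ} (h : i < c.length) (h' : i' < c.length)
    (he : i = i') : c.get ⟨i, h⟩ = c.get ⟨i', h'⟩ := by subst he; rfl

lemma pathList_get {p : List (Edge ι A)} (hp : IsPathList p) {i : ℕ}
    (h : i + 1 < p.length) :
    (p.get ⟨i, by omega⟩).tgt = (p.get ⟨i + 1, h⟩).src :=
  List.isChain_iff_getElem.mp hp i (by omega)

lemma pTgt_eq_get {p : List (Edge ι A)} (hp : p ≠ []) :
    pTgt p hp = (p.get ⟨p.length - 1, by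
      have := List.length_pos_iff.mpr hp; omega⟩).tgt := by
  rw [pTgt, List.getLast_eq_getElem]; rfl

lemma pSrc_eq_get {p : List (Edge ι A)} (hp : p ≠ []) :
    pSrc p hp = (p.get ⟨0, List.length_pos_iff.mpr hp⟩).src := by
  rw [pSrc, List.head_eq_getElem, List.get_eq_getElem]

/-- The step lemma for a cycle: the target of the `j`-th edge is the source of the
`(j+1 mod n)`-th edge. -/
lemma cycle_step {c : List (Edge ι A)} (hpath : IsPathList c) (hc : c ≠ [])
    (hcyc : pTgt c hc = pSrc c hc) {j : ℕ} (hj : j < c.length) :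
    (c.get ⟨j, hj⟩).tgt
      = (c.get ⟨(j + 1) % c.length, Nat.mod_lt _ (List.length_pos_iff.mpr hc)⟩).src := by
  have hn : 0 < c.length := List.length_pos_iff.mpr hc
  by_cases h : j + 1 < c.length
  · rw [pathList_get hpath h]
    exact congrArg Edge.src (get_congr c h _ (Nat.mod_eq_of_lt h).symm)
  · have hj1 : j = c.length - 1 := by omega
    have h0 : (j + 1) % c.length = 0 := by
      have : j + 1 = c.length := by omega
      rw [this, Nat.mod_self]
    calc (c.get ⟨j, hj⟩).tgt = pTgt c hc := by
          rw [pTgt_eq_get hc]; exact congrArg Edge.tgt (get_congr c hj _ hj1)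
      _ = pSrc c hc := hcyc
      _ = _ := by
          rw [pSrc_eq_get hc]; exact congrArg Edge.src (get_congr c _ _ h0.symm)

end Helpers

/-- Topological freeness of the restricted action: `E_A` satisfies Condition (L) (every
cycle has an exit) iff for every pair of finite paths `I ≠ J`, not both empty, with equal
targets when both nonempty, the fixed-point set `S_{I,J}` has empty interior in `X_A`. -/
theorem conditionL_iff_topologically_free (ι : Type) [Countable ι] [Nonempty ι]
    (A : ι → ι → ℕ)
    (hfin : ∀ i, {j | 1 ≤ A i j}.Finite) (hrow : ∀ i, ∃ j, 1 ≤ A i j) :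
    (∀ c : List (Edge ι A), IsCycle c → HasExit c) ↔
      (∀ I J : List (Edge ι A), IsPathList I → IsPathList J → I ≠ J →
        ¬(I = [] ∧ J = []) →
        (∀ (hI' : I ≠ []) (hJ' : J ≠ []), pTgt I hI' = pTgt J hJ') →
        interior (FixedSet I J) = ∅) := by
  constructor
  · -- Condition (L) implies empty interiors
    intro hL I J hIp hJp hIJ hnb _htgt
    by_cases hab : I.length = J.length
    · -- equal lengths: the fixed set is empty
      have hFS : FixedSet I J = ∅ := by
        ext z
        simp only [FixedSet, Set.mem_setOf_eq, Set.mem_empty_iff_false, iff_false, not_and]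
        intro h1 h2
        apply hIJ
        apply List.ext_get hab
        intro k hk1 hk2
        have e1 : I.get ⟨k, hk1⟩ = z.1 k := by
          have := congrFun h2 k
          rwa [prepend, dif_pos hk1] at this
        exact e1.trans (h1 k hk2)
      rw [hFS, interior_empty]
    · -- distinct lengths
      by_contra hne
      obtain ⟨x, hx⟩ := Set.nonempty_iff_ne_empty.mpr hne
      have hxF : x ∈ FixedSet I J := interior_subset hx
      set a := I.length with ha
      set b := J.length with hb
      set m := min a b with hm
      set d := max a b - min a b with hd
      have hdpos : 0 < d := by
        rcases Nat.lt_or_ge a b with h | h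
        · rw [hd, max_eq_right h.le, min_eq_left h.le]; omega
        · have h' : b < a := by omega
          rw [hd, max_eq_left h'.le, min_eq_right h'.le]; omega
      -- periodicity of every element of the fixed set
      have per : ∀ z : PathSpace ι A, z ∈ FixedSet I J →
          ∀ k, m ≤ k → z.1 (k + d) = z.1 k := by
        intro z hz k hk
        have h2 := hz.2
        rcases Nat.lt_or_ge a b with h | h
        · have hma : m = a := by rw [hm, min_eq_left h.le]
          have hdb : d = b - a := by rw [hd, max_eq_right h.le, min_eq_left h.le]
          have := congrFun h2 k
          rw [prepend, dif_neg (by omega)] at this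
          have heq : k - a + b = k + d := by omega
          rw [shiftSeq] at this
          rw [heq] at this
          exact this
        · have h' : b < a := by omega
          have hma : m = b := by rw [hm, min_eq_right h'.le]
          have hdb : d = a - b := by rw [hd, max_eq_left h'.le, min_eq_right h'.le]
          have := congrFun h2 (k + d)
          rw [prepend, dif_neg (by omega)] at this
          have heq : k + d - a + b = k := by omega
          rw [shiftSeq] at this
          rw [heq] at this
          exact this.symm
      have hxper : ∀ k, m ≤ k → x.1 (k + d) = x.1 k := per x hxF
      have hxper' : ∀ s k, m ≤ k → x.1 (k + s * d) = x.1 k := by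
        intro s
        induction s with
        | zero => intro k _; simp
        | succ s ih =>
          intro k hk
          have h1 : k + (s + 1) * d = (k + s * d) + d := by ring
          rw [h1, hxper (k + s * d) (by omega), ih k hk]
      -- the cycle forced by periodicity
      set c : List (Edge ι A) := List.ofFn (fun i : Fin d => x.1 (m + i)) with hc
      have hclen : c.length = d := by rw [hc, List.length_ofFn]
      have hcget : ∀ t (ht : t < c.length), c.get ⟨t, ht⟩ = x.1 (m + t) := by
        intro t ht
        exact List.get_ofFn _ _
      have hc0 : c ≠ [] := by
        intro h; rw [h] at hclen; simp at hclen; omega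
      have hcyc : IsCycle c := by
        refine ⟨hc0, ?_, ?_⟩
        · refine List.isChain_iff_getElem.mpr ?_
          intro i hi
          show (c.get ⟨i, by omega⟩).tgt = (c.get ⟨i + 1, hi⟩).src
          rw [hcget i (by omega), hcget (i + 1) (by omega)]
          have := x.2 (m + i)
          rw [this]
          exact congrArg Edge.src (congrArg x.1 (by omega))
        · rw [pTgt_eq_get, pSrc_eq_get, hcget, hcget]
          have h1 : m + (c.length - 1) + 1 = m + c.length := by
            have := List.length_pos_iff.mpr hc0; omega
          have := x.2 (m + (c.length - 1))
          rw [this, h1]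
          have h2 : m + c.length = m + 1 * d := by rw [hclen]; ring
          rw [h2, hxper' 1 m (le_refl m)]
          exact congrArg Edge.src (congrArg x.1 (by omega))
      obtain ⟨e, t, ht, hsrc, hnee⟩ := hL c hcyc
      have htd : t < d := by rwa [hclen] at ht
      have hsrc' : e.src = (x.1 (m + t)).src := by rw [hsrc, hcget t ht]
      -- build the perturbed paths
      set n' : ℕ → ℕ := fun s => m + (s + 1) * d + t with hn'
      have hNe : ∀ s, n' s = m + (s + 1) * d + t := fun s => rfl
      have hdq : ∀ s : ℕ, d ≤ (s + 1) * d := fun s => Nat.le_mul_of_pos_left d s.succ_pos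
      set y1 : ℕ → ℕ → Edge ι A := fun s k =>
        if k < n' s then x.1 k
        else if k = n' s then e
        else extSeq A hrow e.tgt (k - (n' s + 1)) with hy1
      have hy1path : ∀ s k, (y1 s k).tgt = (y1 s (k + 1)).src := by
        intro s k
        have hne1 := hNe s
        have hdq1 := hdq s
        simp only [hy1]
        rcases lt_trichotomy (k + 1) (n' s) with h | h | h
        · rw [if_pos (by omega), if_pos h]; exact x.2 k
        · rw [if_pos (by omega), if_neg (by omega), if_pos h]
          rw [x.2 k, hsrc']
          have hk1 : k + 1 = m + t + (s + 1) * d := by omega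
          rw [hk1, hxper' (s + 1) (m + t) (by omega)]
        · rcases Nat.eq_or_lt_of_le (Nat.lt_succ_iff.mp h) with h2 | h2
          · rw [if_neg (by omega), if_pos h2.symm, if_neg (by omega), if_neg (by omega)]
            have h3 : k + 1 - (n' s + 1) = 0 := by omega
            rw [h3]
            rfl
          · rw [if_neg (by omega), if_neg (by omega), if_neg (by omega), if_neg (by omega)]
            have h3 : k + 1 - (n' s + 1) = (k - (n' s + 1)) + 1 := by omega
            rw [h3]
            exact extSeq_chain hrow e.tgt _
      set f : ℕ → PathSpace ι A := fun s => ⟨y1 s, hy1path s⟩ with hf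
      have hfx : ∀ s k, k < n' s → (f s).1 k = x.1 k := by
        intro s k hk
        simp only [hf, hy1, if_pos hk]
      have hfe : ∀ s, (f s).1 (n' s) = e := by
        intro s
        simp [hf, hy1]
      -- f s → x
      have htend : Filter.Tendsto f Filter.atTop (nhds x) := by
        rw [tendsto_subtype_rng, tendsto_pi_nhds]
        intro k
        apply Filter.Tendsto.congr' _ (tendsto_const_nhds (x := x.1 k))
        filter_upwards [Filter.eventually_ge_atTop k] with s hs
        refine (hfx s k ?_).symm
        have h1 : s + 1 ≤ (s + 1) * d := Nat.le_mul_of_pos_right (s + 1) hdpos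
        have h2 := hNe s
        omega
      have hev : ∀ᶠ s in Filter.atTop, f s ∈ interior (FixedSet I J) :=
        htend (isOpen_interior.mem_nhds hx)
      obtain ⟨s, hs⟩ := hev.exists
      have hsF : f s ∈ FixedSet I J := interior_subset hs
      have hper := per (f s) hsF (m + t + s * d) (by omega)
      have h1 : m + t + s * d + d = n' s := by rw [hNe s]; ring
      have h2 : m + t + s * d < n' s := by
        have := hdq s
        have h3 : (s + 1) * d = s * d + d := by ring
        have h4 := hNe s
        omega
      rw [h1, hfe s, hfx s (m + t + s * d) h2] at hper
      rw [hxper' s (m + t) (by omega)] at hper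
      exact hnee (by rw [hcget t ht]; exact hper)
  · -- empty interiors imply Condition (L)
    intro hR c hcyc
    by_contra hnoexit
    obtain ⟨hc0, hcpath, hccyc⟩ := hcyc
    rw [HasExit] at hnoexit
    push_neg at hnoexit
    have hn : 0 < c.length := List.length_pos_iff.mpr hc0
    have step := fun {j} (hj : j < c.length) => cycle_step hcpath hc0 hccyc hj
    have hmod : ∀ k : ℕ, (k % c.length + 1) % c.length = (k + 1) % c.length := by
      intro k
      exact Nat.ModEq.add_right 1 (Nat.mod_modEq k c.length)
    have hrep : ∀ k, (repSeq c hc0 k).tgt = (repSeq c hc0 (k + 1)).src := by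
      intro k
      simp only [repSeq]
      rw [step (Nat.mod_lt k hn)]
      exact congrArg Edge.src (get_congr c _ _ (hmod k))
    set xc : PathSpace ι A := ⟨repSeq c hc0, hrep⟩ with hxc
    have uniq : ∀ z : PathSpace ι A,
        (∀ k (hk : k < c.length), z.1 k = c.get ⟨k, hk⟩) →
        ∀ k, z.1 k = c.get ⟨k % c.length, Nat.mod_lt k hn⟩ := by
      intro z hz k
      induction k using Nat.strong_induction_on with
      | _ k ih =>
        rcases Nat.lt_or_ge k c.length with hk | hk
        · rw [hz k hk]
          exact (get_congr c _ _ (Nat.mod_eq_of_lt hk)).symm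
        · have hk1 : 1 ≤ k := by omega
          have ihk := ih (k - 1) (by omega)
          have hz2 := z.2 (k - 1)
          rw [Nat.sub_add_cancel hk1] at hz2
          have hsrc : (z.1 k).src = (c.get ⟨k % c.length, Nat.mod_lt k hn⟩).src := by
            calc (z.1 k).src = (z.1 (k - 1)).tgt := hz2.symm
              _ = (c.get ⟨(k - 1) % c.length, Nat.mod_lt _ hn⟩).tgt := by rw [ihk]
              _ = (c.get ⟨((k - 1) % c.length + 1) % c.length, Nat.mod_lt _ hn⟩).src :=
                  step (Nat.mod_lt _ hn)
              _ = (c.get ⟨k % c.length, Nat.mod_lt k hn⟩).src :=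
                  congrArg Edge.src (get_congr c _ _
                    (by rw [hmod (k - 1), Nat.sub_add_cancel hk1]))
          exact hnoexit (z.1 k) _ _ hsrc
    set V : Set (PathSpace ι A) := ⋂ (j : Fin c.length), {z | z.1 j.1 = c.get j} with hV
    have hVopen : IsOpen V := by
      apply isOpen_iInter_of_finite
      intro j
      have : DiscreteTopology (Edge ι A) := ⟨rfl⟩
      have hcont : Continuous fun z : PathSpace ι A => z.1 j.1 :=
        (continuous_apply (A := fun _ : ℕ => Edge ι A) j.1).comp continuous_subtype_val
      exact (isOpen_discrete {c.get j}).preimage hcont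
    have hVmem : ∀ z : PathSpace ι A,
        z ∈ V ↔ ∀ k (hk : k < c.length), z.1 k = c.get ⟨k, hk⟩ := by
      intro z
      simp only [hV, Set.mem_iInter, Set.mem_setOf_eq]
      constructor
      · intro h k hk; exact h ⟨k, hk⟩
      · intro h j; exact h j.1 j.2
    have hVsub : V ⊆ FixedSet c [] := by
      intro z hz
      have hzc := (hVmem z).mp hz
      have hu := uniq z hzc
      constructor
      · intro k hk; simp at hk
      · funext k
        show prepend c (shiftSeq (List.length ([] : List (Edge ι A))) z.1) k = z.1 k
        rw [prepend]
        by_cases hk : k < c.length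
        · rw [dif_pos hk]
          exact (hzc k hk).symm
        · rw [dif_neg hk]
          show z.1 (k - c.length + 0) = z.1 k
          rw [Nat.add_zero, hu (k - c.length), hu k]
          exact get_congr c _ _ ((Nat.mod_eq_sub_mod (by omega)).symm)
    have hxcV : xc ∈ V := by
      rw [hVmem xc]
      intro k hk
      show repSeq c hc0 k = c.get ⟨k, hk⟩
      simp only [repSeq]
      exact get_congr c _ _ (Nat.mod_eq_of_lt hk)
    have hmem : xc ∈ interior (FixedSet c []) :=
      mem_interior.mpr ⟨V, hVsub, hVopen, hxcV⟩
    have hemp := hR c [] hcpath List.isChain_nil hc0 (fun h => hc0 h.1)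
      (fun _ hJ' => absurd rfl hJ')
    rw [hemp] at hmem
    exact hmem
end

section
/- Isolated points in orbits and transitory cycles (Proposition 7.8): let K be a finite path (possibly empty) and L a cycle, composable in the sense that target(K) = source(L) when K is nonempty, and let ω = K·L^∞ ∈ X_A. Then ω is an isolated point of its tail-equivalence class Sat({ω}), equipped with the subspace topology from X_A, if and only if the cycle L is transitory in E_A, i.e. no exit of L admits a return path: there is no edge e which is an exit of L together with a finite path from target(e) to the source of some edge of L. -/
section Helpers
variable {ι : Type} {A : ι → ι → ℕ}

instance (ι : Type) (A : ι → ι → ℕ) : DiscreteTopology (Edge ι A) := ⟨rfl⟩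

lemma getElem_congr' {α : Type*} (l : List α) {i j : ℕ} (h : i = j) (hi : i < l.length) :
    l[i]'hi = l[j]'(h ▸ hi) := by subst h; rfl

lemma pathList_step {p : List (Edge ι A)} (hp : IsPathList p) {i : ℕ} (h : i + 1 < p.length) :
    (p[i]'(by omega)).tgt = (p[i+1]'h).src := by
  simpa [List.get_eq_getElem] using List.isChain_iff_getElem.mp hp i (by omega)

lemma pathList_of_get {p : List (Edge ι A)}
    (h : ∀ i (hi : i + 1 < p.length), (p[i]'(by omega)).tgt = (p[i+1]'hi).src) :
    IsPathList p := by
  rw [IsPathList, List.Chain', List.isChain_iff_getElem]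
  intro i hi
  simpa [List.get_eq_getElem] using h i (by omega)

lemma pSrc_eq {p : List (Edge ι A)} (hp : p ≠ []) :
    pSrc p hp = (p[0]'(List.length_pos_iff.mpr hp)).src := by
  rw [pSrc, List.head_eq_getElem]

lemma pTgt_eq {p : List (Edge ι A)} (hp : p ≠ []) :
    pTgt p hp = (p[p.length - 1]'(by have := List.length_pos_iff.mpr hp; omega)).tgt := by
  rw [pTgt, List.getLast_eq_getElem]

lemma pSrc_append {p q : List (Edge ι A)} (hp : p ≠ []) (h : p ++ q ≠ []) :
    pSrc (p ++ q) h = pSrc p hp := by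
  rw [pSrc_eq, pSrc_eq hp]
  congr 1
  exact List.getElem_append_left (List.length_pos_iff.mpr hp)

lemma pTgt_append {p q : List (Edge ι A)} (hq : q ≠ []) (h : p ++ q ≠ []) :
    pTgt (p ++ q) h = pTgt q hq := by
  rw [pTgt, pTgt, List.getLast_append]
  simp [List.isEmpty_iff, hq]

lemma pathList_append {p q : List (Edge ι A)} (hp : IsPathList p) (hq : IsPathList q)
    (hlink : ∀ (hp' : p ≠ []) (hq' : q ≠ []), pTgt p hp' = pSrc q hq') :
    IsPathList (p ++ q) := by
  rcases eq_or_ne p [] with rfl | hp'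
  · simpa using hq
  rcases eq_or_ne q [] with rfl | hq'
  · simpa using hp
  refine hp.append hq ?_
  intro x hx y hy
  rw [List.getLast?_eq_getLast hp', Option.mem_def, Option.some_inj] at hx
  rw [List.head?_eq_head hq', Option.mem_def, Option.some_inj] at hy
  subst hx; subst hy
  have := hlink hp' hq'
  rwa [pTgt, pSrc] at this

lemma reaches_trans {u v w : ι} (h1 : Reaches ι A u v) (h2 : Reaches ι A v w) :
    Reaches ι A u w := by
  rcases h1 with rfl | ⟨p, hp, hpc, hps, hpt⟩
  · exact h2
  rcases h2 with rfl | ⟨q, hq, hqc, hqs, hqt⟩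
  · exact Or.inr ⟨p, hp, hpc, hps, hpt⟩
  refine Or.inr ⟨p ++ q, by simp [hp], ?_, ?_, ?_⟩
  · exact pathList_append hpc hqc (fun hp' hq' => by rw [hpt, ← hqs])
  · rw [pSrc_append hp]; exact hps
  · rw [pTgt_append hq]; exact hqt

lemma reaches_edge (e : Edge ι A) : Reaches ι A e.src e.tgt := by
  refine Or.inr ⟨[e], by simp, List.isChain_singleton e, ?_, ?_⟩ <;> simp [pSrc_eq, pTgt_eq]

lemma reaches_of_pathspace (x : PathSpace ι A) (a d : ℕ) :
    Reaches ι A (x.1 a).src (x.1 (a + d)).src := by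
  induction d with
  | zero => exact Or.inl rfl
  | succ d ih =>
    refine reaches_trans ih (reaches_trans (reaches_edge (x.1 (a + d))) ?_)
    rw [x.2 (a + d)]
    exact Or.inl rfl

lemma prepend_lt {μ : List (Edge ι A)} (f : ℕ → Edge ι A) {k : ℕ} (h : k < μ.length) :
    prepend μ f k = μ[k] := by
  rw [prepend, dif_pos h, List.get_eq_getElem]

lemma prepend_ge {μ : List (Edge ι A)} (f : ℕ → Edge ι A) {k : ℕ} (h : μ.length ≤ k) :
    prepend μ f k = f (k - μ.length) := by
  rw [prepend, dif_neg (by omega)]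

lemma prepend_chain {μ : List (Edge ι A)} (hμ : IsPathList μ) (f : ℕ → Edge ι A)
    (hf : ∀ k, (f k).tgt = (f (k + 1)).src)
    (hlink : ∀ h : μ ≠ [], pTgt μ h = (f 0).src) (k : ℕ) :
    (prepend μ f k).tgt = (prepend μ f (k + 1)).src := by
  by_cases h1 : k + 1 < μ.length
  · rw [prepend_lt f (by omega), prepend_lt f h1]
    exact pathList_step hμ h1
  · by_cases h0 : k < μ.length
    · have hk : k + 1 = μ.length := by omega
      have hμne : μ ≠ [] := by intro h; rw [h] at h0; simp at h0
      rw [prepend_lt f h0, prepend_ge f (by omega)]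
      have := hlink hμne
      rw [pTgt_eq hμne] at this
      rw [show k + 1 - μ.length = 0 from by omega, ← this]
      congr 1
      exact getElem_congr' μ (by omega) h0
    · rw [prepend_ge f (by omega), prepend_ge f (by omega)]
      have : k + 1 - μ.length = (k - μ.length) + 1 := by omega
      rw [this]
      exact hf _

lemma rot_chain {L : List (Edge ι A)} (hL : L ≠ []) (hLp : IsPathList L)
    (hLc : pTgt L hL = pSrc L hL) (a : ℕ) :
    (L[a % L.length]'(Nat.mod_lt a (List.length_pos_iff.mpr hL))).tgt =
    (L[(a + 1) % L.length]'(Nat.mod_lt (a + 1) (List.length_pos_iff.mpr hL))).src := by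
  have hn : 0 < L.length := List.length_pos_iff.mpr hL
  have hmlt : a % L.length < L.length := Nat.mod_lt a hn
  have hsucc : (a + 1) % L.length = (a % L.length + 1) % L.length :=
    (Nat.mod_add_mod a L.length 1).symm
  by_cases h : a % L.length + 1 < L.length
  · have h2 : (a + 1) % L.length = a % L.length + 1 := by
      rw [hsucc, Nat.mod_eq_of_lt h]
    simp only [h2]
    exact pathList_step hLp h
  · have hm : a % L.length = L.length - 1 := by omega
    have h2 : (a + 1) % L.length = 0 := by
      rw [hsucc, hm]
      have : L.length - 1 + 1 = L.length := by omega
      rw [this, Nat.mod_self]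
    simp only [h2, hm]
    rw [pTgt_eq hL, pSrc_eq hL] at hLc
    exact hLc

lemma isOpen_cylSet (c : List (Edge ι A)) :
    IsOpen {y : PathSpace ι A | ∀ i : Fin c.length, y.1 i = c.get i} := by
  have hset : {y : PathSpace ι A | ∀ i : Fin c.length, y.1 i = c.get i}
      = ⋂ i : Fin c.length, {y : PathSpace ι A | y.1 i = c.get i} := by
    ext y; simp [Set.mem_iInter]
  rw [hset]
  refine isOpen_iInter_of_finite fun i => ?_
  have hc : Continuous fun y : PathSpace ι A => y.1 i.1 :=
    (continuous_apply (i : ℕ)).comp continuous_subtype_val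
  exact hc.isOpen_preimage {c.get i} (isOpen_discrete _)

lemma exists_agree_radius {U : Set (PathSpace ι A)} (hU : IsOpen U) {ω : PathSpace ι A}
    (hω : ω ∈ U) : ∃ m : ℕ, ∀ z : PathSpace ι A, (∀ k < m, z.1 k = ω.1 k) → z ∈ U := by
  rw [isOpen_induced_iff] at hU
  obtain ⟨V, hV, rfl⟩ := hU
  rw [isOpen_pi_iff] at hV
  obtain ⟨I, u, h1, h2⟩ := hV ω.1 hω
  refine ⟨I.sup id + 1, fun z hz => ?_⟩
  apply h2
  rw [Set.mem_pi]
  intro a ha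
  rw [hz a (by have := Finset.le_sup (f := id) ha; simp at this; omega)]
  exact (h1 a ha).2

end Helpers

/-- Isolated points in orbits and transitory cycles: for a finite path `K` (possibly empty)
and a cycle `L` composable with it, the point `ω = K·L^∞` is isolated in its
tail-equivalence class `Sat({ω})` (with the subspace topology) iff the cycle `L` is
transitory, i.e. no exit of `L` admits a return path to the source of some edge of `L`. -/


theorem isolated_iff_transitory (ι : Type) [Countable ι] [Nonempty ι] (A : ι → ι → ℕ)
    (hfin : ∀ i, {j | 1 ≤ A i j}.Finite) (hrow : ∀ i, ∃ j, 1 ≤ A i j)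
    (K L : List (Edge ι A)) (hK : IsPathList K)
    (hL : L ≠ []) (hLp : IsPathList L) (hLc : pTgt L hL = pSrc L hL)
    (hcomp : ∀ hK' : K ≠ [], pTgt K hK' = pSrc L hL)
    (ω : PathSpace ι A) (hω : ω.1 = prepend K (repSeq L hL)) :
    (∃ U : Set (PathSpace ι A), IsOpen U ∧ ω ∈ U ∧ ∀ y ∈ Sat {ω}, y ∈ U → y = ω) ↔
      ¬ ∃ (e : Edge ι A) (t : ℕ) (ht : t < L.length),
          e.src = (L.get ⟨t, ht⟩).src ∧ e ≠ L.get ⟨t, ht⟩ ∧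
          ∃ (s : ℕ) (hs : s < L.length), Reaches ι A e.tgt (L.get ⟨s, hs⟩).src := by
  
  have hn : 0 < L.length := List.length_pos_iff.mpr hL
  have homega : ∀ j, ω.1 (K.length + j) = L[j % L.length]'(Nat.mod_lt j hn) := by
    intro j
    rw [hω, prepend_ge _ (by omega), show K.length + j - K.length = j from by omega]
    simp [repSeq, List.get_eq_getElem]
  have homegaK : ∀ k (hk : k < K.length), ω.1 k = K[k]'hk := by
    intro k hk
    rw [hω, prepend_lt _ hk]
  constructor
  · -- isolated → transitory
    rintro ⟨U, hUo, hUω, hUiso⟩ ⟨e, t, ht, hsrc, hne, s, hs, hreach⟩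
    rw [List.get_eq_getElem] at hsrc hne hreach
    obtain ⟨m, hm⟩ := exists_agree_radius hUo hUω
    obtain ⟨P, hPc, hP0, hPne⟩ :
        ∃ P : List (Edge ι A), IsPathList P ∧
          (P = [] → e.tgt = (L[s]'hs).src) ∧
          (∀ h : P ≠ [], pSrc P h = e.tgt ∧ pTgt P h = (L[s]'hs).src) := by
      rcases hreach with h | ⟨P, hP, hPc, hPs, hPt⟩
      · exact ⟨[], List.isChain_nil, fun _ => h, fun h => absurd rfl h⟩
      · exact ⟨P, hPc, fun h0 => absurd h0 hP, fun _ => ⟨hPs, hPt⟩⟩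
    set D := K.length + (m + 1) * L.length + t with hD
    have hmn : m + 1 ≤ (m + 1) * L.length := Nat.le_mul_of_pos_right _ hn
    have hωD : ω.1 D = L[t]'ht := by
      have h1 := homega ((m + 1) * L.length + t)
      rw [show K.length + ((m + 1) * L.length + t) = D from by omega] at h1
      rw [h1]
      exact getElem_congr' L
        (by rw [Nat.add_comm, Nat.add_mul_mod_self_right, Nat.mod_eq_of_lt ht]) _
    set μ := (List.ofFn fun i : Fin D => ω.1 i) ++ ([e] ++ P) with hμdef
    have hlen : μ.length = D + (1 + P.length) := by simp [hμdef]; omega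
    have hofn : ∀ (i : ℕ) (h : i < D),
        ((List.ofFn fun i : Fin D => ω.1 i) ++ ([e] ++ P))[i]'(by
          rw [List.length_append, List.length_ofFn]; omega) = ω.1 i := by
      intro i h
      rw [List.getElem_append_left (by simpa using h), List.getElem_ofFn]
    have hμD : ((List.ofFn fun i : Fin D => ω.1 i) ++ ([e] ++ P))[D]'(by
        rw [List.length_append, List.length_ofFn]; simp) = e := by
      rw [List.getElem_append_right (by simp)]
      simp
    have hch1 : IsPathList (List.ofFn fun i : Fin D => ω.1 i) := by
      apply pathList_of_get
      intro i hi
      rw [List.getElem_ofFn, List.getElem_ofFn]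
      exact ω.2 i
    have hch2 : IsPathList ([e] ++ P) := by
      refine pathList_append (List.isChain_singleton e) hPc ?_
      intro h1 hP'
      rw [pTgt_eq h1]
      simp only [List.length_singleton, List.getElem_singleton]
      exact ((hPne hP').1).symm
    have hchμ : IsPathList μ := by
      refine pathList_append hch1 hch2 ?_
      intro h1 h2
      rw [pTgt_eq h1, pSrc_append (p := [e]) (by simp), pSrc_eq (by simp)]
      simp only [List.getElem_singleton]
      have hD1 : 1 ≤ D := by omega
      have hlofn : (List.ofFn fun i : Fin D => ω.1 i).length = D := by simp
      rw [List.getElem_ofFn]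
      have := ω.2 (D - 1)
      rw [show D - 1 + 1 = D from by omega, hωD] at this
      simp only [hlofn]
      rw [this, hsrc]
    set f : ℕ → Edge ι A := fun k => L[(k + s) % L.length]'(Nat.mod_lt _ hn) with hf
    have hfchain : ∀ k, (f k).tgt = (f (k + 1)).src := by
      intro k
      have := rot_chain hL hLp hLc (k + s)
      rw [show k + s + 1 = k + 1 + s from by omega] at this
      exact this
    have hlink : ∀ h : μ ≠ [], pTgt μ h = (f 0).src := by
      intro h
      have hf0 : f 0 = L[s]'hs :=
        getElem_congr' L (by rw [Nat.zero_add, Nat.mod_eq_of_lt hs]) _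
      rw [hf0, pTgt_append (q := [e] ++ P) (by simp)]
      rcases eq_or_ne P [] with rfl | hP'
      · exact hP0 rfl
      · rw [pTgt_append hP']
        exact (hPne hP').2
    set y : PathSpace ι A := ⟨prepend μ f, prepend_chain hchμ f hfchain hlink⟩ with hy
    have hyU : y ∈ U := by
      apply hm
      intro k hk
      have hkD : k < D := by omega
      show prepend μ f k = ω.1 k
      rw [prepend_lt f (by rw [hlen]; omega)]
      exact hofn k hkD
    have hySat : y ∈ Sat {ω} := by
      refine ⟨ω, rfl, μ.length, K.length + s, fun k => ?_⟩
      show prepend μ f (k + μ.length) = ω.1 (k + (K.length + s))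
      rw [prepend_ge f (by omega), show k + μ.length - μ.length = k from by omega]
      have := homega (k + s)
      rw [show K.length + (k + s) = k + (K.length + s) from by omega] at this
      rw [this]
    have hyω := hUiso y hySat hyU
    apply hne
    have hD' : y.1 D = e := by
      show prepend μ f D = e
      rw [prepend_lt f (by rw [hlen]; omega)]
      exact hμD
    rw [← hD', hyω, hωD]
  · -- transitory → isolated
    intro htrans
    set c := K ++ L with hc
    have hclen : c.length = K.length + L.length := by simp [hc]
    refine ⟨{y : PathSpace ι A | ∀ i : Fin c.length, y.1 i = c.get i}, isOpen_cylSet c, ?_, ?_⟩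
    · intro i
      rw [List.get_eq_getElem]
      rcases lt_or_ge (i : ℕ) K.length with h | h
      · rw [homegaK i h]
        exact (List.getElem_append_left h).symm
      · have hi' : (i : ℕ) - K.length < L.length := by have := i.2; omega
        have he : (i : ℕ) = K.length + ((i : ℕ) - K.length) := by omega
        rw [List.getElem_append_right h]
        conv_lhs => rw [he]
        rw [homega]
        exact getElem_congr' L (Nat.mod_eq_of_lt hi') _
    · intro y hy hyU
      obtain ⟨x, hx, p0, q0, hpq0⟩ := hy
      rw [Set.mem_singleton_iff] at hx
      rw [hx] at hpq0
      set p := p0 + K.length with hp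
      set q := q0 + K.length with hq
      have hpq : ∀ k, y.1 (k + p) = ω.1 (k + q) := by
        intro k
        have h1 := hpq0 (k + K.length)
        rw [show k + K.length + p0 = k + p from by omega,
          show k + K.length + q0 = k + q from by omega] at h1
        exact h1
      have key : ∀ j, y.1 (K.length + j) = L[j % L.length]'(Nat.mod_lt j hn) := by
        intro j
        induction j with
        | zero =>
          have h1 := hyU ⟨K.length, by omega⟩
          rw [List.get_eq_getElem] at h1
          show y.1 K.length = L[0 % L.length]'(Nat.mod_lt 0 hn)
          rw [h1, List.getElem_append_right (le_refl K.length)]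
          exact getElem_congr' L (by simp) _
        | succ j ih =>
          by_contra hne'
          have hchain := y.2 (K.length + j)
          rw [ih] at hchain
          apply htrans
          refine ⟨y.1 (K.length + j + 1), (j + 1) % L.length, Nat.mod_lt _ hn, ?_, ?_, ?_⟩
          · rw [List.get_eq_getElem]
            exact hchain.symm.trans (rot_chain hL hLp hLc j)
          · rw [List.get_eq_getElem]
            intro h
            exact hne' h
          · set a := K.length + j + 2 with ha
            have h1 : (y.1 (K.length + j + 1)).tgt = (y.1 a).src := y.2 _
            have h2 := reaches_of_pathspace y a p
            have h3 := hpq a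
            have h4 : ω.1 (a + q) = L[(a + q - K.length) % L.length]'(Nat.mod_lt _ hn) := by
              have := homega (a + q - K.length)
              rw [show K.length + (a + q - K.length) = a + q from by omega] at this
              exact this
            refine ⟨(a + q - K.length) % L.length, Nat.mod_lt _ hn, ?_⟩
            rw [List.get_eq_getElem, h1, ← h4, ← h3]
            exact h2
      apply Subtype.ext
      funext k
      rcases lt_or_ge k K.length with h | h
      · have h1 := hyU ⟨k, by omega⟩
        rw [List.get_eq_getElem] at h1
        rw [h1, homegaK k h]
        exact List.getElem_append_left h
      · have he : k = K.length + (k - K.length) := by omega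
        rw [he, key, homega]
end

section
/- Arithmetic characterization of fixed points of the gauge maps (Lemma 7.11): let a, b : ℕ → ℤ with 1 ≤ a_t for all t, and let l ∈ ℤ. The following are equivalent: (1) there exists a sequence K : ℕ → ℤ with K_0 = l and K_t · b_t = K_{t+1} · a_t for all t ∈ ℕ; (2) for every j ≥ 1 the rational number l · ∏_{t=0}^{j−1} (b_t / a_t) is an integer. Moreover, when these hold, the sequence K is unique and K_j = l · ∏_{t=0}^{j−1} (b_t / a_t) for all j. -/
/-- Arithmetic characterization of fixed points of the gauge maps: for sequences
`a b : ℕ → ℤ` with `1 ≤ a t`, and `l : ℤ`, a sequence `K` with `K 0 = l` and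
`K t · b t = K (t+1) · a t` exists iff all the partial products `l · ∏ (b t / a t)` are
integers; moreover such a `K` is unique and is given by those partial products. -/
theorem gauge_fixed_point_arith (a b : ℕ → ℤ) (ha : ∀ t, 1 ≤ a t) (l : ℤ) :
    ((∃ K : ℕ → ℤ, K 0 = l ∧ ∀ t, K t * b t = K (t + 1) * a t) ↔
      ∀ j : ℕ, 1 ≤ j →
        ∃ z : ℤ, (l : ℚ) * ∏ t ∈ Finset.range j, (b t : ℚ) / (a t : ℚ) = (z : ℚ)) ∧
    (∀ K : ℕ → ℤ, K 0 = l → (∀ t, K t * b t = K (t + 1) * a t) →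
      ∀ j : ℕ, (K j : ℚ) = (l : ℚ) * ∏ t ∈ Finset.range j, (b t : ℚ) / (a t : ℚ)) ∧
    (∀ K K' : ℕ → ℤ, K 0 = l → (∀ t, K t * b t = K (t + 1) * a t) →
      K' 0 = l → (∀ t, K' t * b t = K' (t + 1) * a t) → K = K') := by
  have hane : ∀ t, (a t : ℚ) ≠ 0 := by
    intro t
    have := ha t
    exact_mod_cast (by omega : a t ≠ 0)
  have formula : ∀ K : ℕ → ℤ, K 0 = l → (∀ t, K t * b t = K (t + 1) * a t) →
      ∀ j : ℕ, (K j : ℚ) = (l : ℚ) * ∏ t ∈ Finset.range j, (b t : ℚ) / (a t : ℚ) := by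
    intro K hK0 hrec j
    induction j with
    | zero => simp [hK0]
    | succ n ih =>
      have h := hrec n
      have h' : (K n : ℚ) * b n = K (n + 1) * a n := by exact_mod_cast h
      rw [Finset.prod_range_succ, ← mul_assoc, ← ih, eq_comm,
        ← mul_div_assoc, div_eq_iff (hane n)]
      linear_combination h'
  refine ⟨⟨?_, ?_⟩, formula, ?_⟩
  · rintro ⟨K, hK0, hrec⟩ j _
    exact ⟨K j, (formula K hK0 hrec j).symm⟩
  · intro h
    have hz : ∀ j : ℕ, ∃ z : ℤ,
        (l : ℚ) * ∏ t ∈ Finset.range j, (b t : ℚ) / (a t : ℚ) = (z : ℚ) := by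
      intro j
      rcases Nat.eq_zero_or_pos j with hj | hj
      · subst hj; exact ⟨l, by simp⟩
      · exact h j hj
    choose K hKz using hz
    refine ⟨K, ?_, ?_⟩
    · have := hKz 0
      simp at this
      exact_mod_cast this.symm
    · intro t
      have h1 := hKz t
      have h2 := hKz (t + 1)
      rw [Finset.prod_range_succ] at h2
      have h2' : (K t : ℚ) * ((b t : ℚ) / (a t : ℚ)) = K (t + 1) := by
        rw [← h1, mul_assoc]; exact h2
      have : (K t : ℚ) * b t = K (t + 1) * a t := by
        rw [← h2', ← mul_div_assoc, div_mul_cancel₀ _ (hane t)]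
      exact_mod_cast this
  · intro K K' hK0 hrec hK0' hrec'
    funext j
    have := (formula K hK0 hrec j).trans (formula K' hK0' hrec' j).symm
    exact_mod_cast this
end
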